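/- arXiv:math/0404217 — 8 statements merged into one kernel-verified Lean document; each statement's English description precedes it below -/
import Mathlib

section
/- For every n ∈ ℕ, h_n' ≤ h_n'' ≤ 2·h_n'. -/
/-!
Write a non-simple normalized system on `{1, …, m}` as `H = C + 2 • P` with `C` simple and
`P ≠ 0`. We map `H` to a simple normalized system of the same weight from which `decode` recovers
`H`, so there are at most as many non-simple systems of weight `n` as simple ones. The image keeps
`C` and replaces the doubled edges by old edges extended by fresh vertices above `m`:

* if `P` consists of distinct singletons `{v}`, `v ∈ T`, by the one edge `T ∪ (m, m + |T|]`;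
* otherwise every distinct edge `B` of `P`, of multiplicity `k`, by
  `B ∪ (m + 1, m + 1 + (2k - 1)|B|]`, of size `2k|B|`, which records `k`. These may overlap: they
  are told apart by their old parts `B`. One edge `E` with `(2k - 1)|E| ≥ 2` is lifted above all
  the others instead, with one fresh vertex less, which pays for the singleton `{m + 1}` marking
  where the fresh vertices start.

The edge through the largest vertex has even size in the first case and odd size in the second,
which tells `decode` how to find `m`.
-/

/-- The weight of a set system: the sum of edge sizes, counted with multiplicity. -/
def sysWeight (H : Multiset (Finset ℕ)) : ℕ := (H.map Finset.card).sum

/-- A set system is normalized if all its edges are nonempty and its vertex set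
(the union of its edges) equals `{1, …, m}` for some `m`. -/
def IsNormalized (H : Multiset (Finset ℕ)) : Prop :=
  (∀ E ∈ H, E.Nonempty) ∧ ∃ m : ℕ, H.sup = Finset.Icc 1 m

/-- `hpp n` = `hₙ''`, the number of normalized set systems (multisets of edges allowed)
of weight `n`. -/
noncomputable def hpp (n : ℕ) : ℕ :=
  Nat.card {H : Multiset (Finset ℕ) // IsNormalized H ∧ sysWeight H = n}

/-- `hp n` = `hₙ'`, the number of simple (no repeated edges) normalized set systems
of weight `n`. -/
noncomputable def hp (n : ℕ) : ℕ :=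
  Nat.card {H : Multiset (Finset ℕ) // IsNormalized H ∧ sysWeight H = n ∧ H.Nodup}

/-- The `n`-th Bell number: the number of partitions (equivalence relations)
of an `n`-element set. -/
noncomputable def bell (n : ℕ) : ℕ := Nat.card (Setoid (Fin n))

namespace SetSystem

open Finset (Icc Ioc)

section Weight

theorem sysWeight_add (G H : Multiset (Finset ℕ)) :
    sysWeight (G + H) = sysWeight G + sysWeight H := by
  simp [sysWeight]

theorem sysWeight_cons (E : Finset ℕ) (H : Multiset (Finset ℕ)) :
    sysWeight (E ::ₘ H) = E.card + sysWeight H := by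
  simp [sysWeight]

theorem sysWeight_nsmul (k : ℕ) (H : Multiset (Finset ℕ)) :
    sysWeight (k • H) = k * sysWeight H := by
  simp [sysWeight, Multiset.map_nsmul, Multiset.sum_nsmul]

theorem sysWeight_map (U : Finset (Finset ℕ)) (f : Finset ℕ → Finset ℕ) :
    sysWeight (U.val.map f) = ∑ B ∈ U, (f B).card := by
  simp [sysWeight, Multiset.map_map, Finset.sum_map_val]

theorem sysWeight_map_singleton (T : Finset ℕ) : sysWeight (T.val.map singleton) = T.card := by
  simp [sysWeight]

theorem sysWeight_eq_sum_count (P : Multiset (Finset ℕ)) :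
    sysWeight P = ∑ B ∈ P.toFinset, P.count B * B.card := by
  simp [sysWeight, Finset.sum_multiset_map_count]

theorem card_le_sysWeight {H : Multiset (Finset ℕ)} (hne : ∀ E ∈ H, E.Nonempty) :
    Multiset.card H ≤ sysWeight H := by
  simpa [sysWeight] using Multiset.card_nsmul_le_sum (s := H.map Finset.card) (a := 1)
    (by simpa [Nat.one_le_iff_ne_zero, ← Finset.nonempty_iff_ne_empty] using hne)

theorem card_sup_le_sysWeight (H : Multiset (Finset ℕ)) : H.sup.card ≤ sysWeight H := by
  induction H using Multiset.induction with
  | empty => simp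
  | cons E H ih =>
    rw [Multiset.sup_cons, sysWeight_cons]
    exact (Finset.card_union_le _ _).trans (by omega)

theorem finite_setOf_isNormalized (n : ℕ) :
    {H : Multiset (Finset ℕ) | IsNormalized H ∧ sysWeight H = n}.Finite := by
  refine (n • (Icc 1 n).powerset.val).powerset.toFinset.finite_toSet.subset ?_
  rintro H ⟨⟨hne, m, hm⟩, rfl⟩
  simp only [Finset.mem_coe, Multiset.mem_toFinset, Multiset.mem_powerset, Multiset.le_iff_count]
  intro E
  by_cases hE : E ∈ H
  · have hmn : m ≤ sysWeight H := by simpa [hm] using card_sup_le_sysWeight H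
    have hsub : E ⊆ Icc 1 (sysWeight H) :=
      (Multiset.le_sup hE).trans (hm ▸ Finset.Icc_subset_Icc_right hmn)
    rw [Multiset.count_nsmul, Multiset.count_eq_one_of_mem (Finset.nodup _)
      (Finset.mem_powerset.2 hsub), mul_one]
    exact (Multiset.count_le_card _ _).trans (card_le_sysWeight hne)
  · simp [Multiset.count_eq_zero.2 hE]

end Weight

theorem exists_nodup_add_two_nsmul {α : Type*} [DecidableEq α] (H : Multiset α) :
    ∃ C P : Multiset α, C.Nodup ∧ C + 2 • P = H := by
  induction H using Multiset.induction with
  | empty => exact ⟨0, 0, Multiset.nodup_zero, rfl⟩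
  | cons E H ih =>
    obtain ⟨C, P, hC, rfl⟩ := ih
    by_cases hE : E ∈ C
    · refine ⟨C.erase E, E ::ₘ P, hC.erase E, ?_⟩
      conv_rhs => rw [← Multiset.cons_erase hE]
      simp [two_nsmul, Multiset.add_cons, Multiset.cons_add]
    · exact ⟨E ::ₘ C, P, Multiset.nodup_cons.2 ⟨hE, hC⟩, by simp [Multiset.cons_add]⟩

theorem sum_replicate_count {α : Type*} [DecidableEq α] (P : Multiset α) :
    ∑ a ∈ P.toFinset, Multiset.replicate (P.count a) a = P := by
  simpa [Multiset.nsmul_singleton] using Multiset.toFinset_sum_count_nsmul_eq P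

section Vertices

variable {m : ℕ} {C P : Multiset (Finset ℕ)} {S : Finset ℕ}

theorem mem_sup_iff {α : Type*} [DecidableEq α] {G : Multiset (Finset α)} {x : α} :
    x ∈ G.sup ↔ ∃ B ∈ G, x ∈ B := by
  induction G using Multiset.induction with
  | empty => simp
  | cons E G ih => simp [ih]

theorem sup_add_two_nsmul {α : Type*} [SemilatticeSup α] [OrderBot α] (C P : Multiset α) :
    (C + 2 • P).sup = C.sup ⊔ P.sup := by
  simp [two_nsmul, Multiset.sup_add]

theorem subset_Icc_of_mem_left (hcover : C.sup ∪ S = Icc 1 m) {B : Finset ℕ} (hB : B ∈ C) :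
    B ⊆ Icc 1 m :=
  (Multiset.le_sup hB).trans (Finset.union_subset_left hcover.le)

theorem subset_Icc_of_mem_right (hcover : S ∪ P.sup = Icc 1 m) {B : Finset ℕ} (hB : B ∈ P) :
    B ⊆ Icc 1 m :=
  (Multiset.le_sup hB).trans (Finset.union_subset_right hcover.le)

def maxVertex (E : Finset ℕ) : ℕ := E.sup id

theorem maxVertex_le_iff {E : Finset ℕ} {k : ℕ} : maxVertex E ≤ k ↔ ∀ x ∈ E, x ≤ k :=
  Finset.sup_le_iff

theorem le_maxVertex {E : Finset ℕ} {x : ℕ} (hx : x ∈ E) : x ≤ maxVertex E :=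
  Finset.le_sup (f := id) hx

theorem maxVertex_eq {E : Finset ℕ} {v : ℕ} (hv : v ∈ E) (hE : ∀ x ∈ E, x ≤ v) :
    maxVertex E = v :=
  le_antisymm (maxVertex_le_iff.2 hE) (le_maxVertex hv)

theorem maxVertex_singleton (v : ℕ) : maxVertex {v} = v := Finset.sup_singleton

theorem maxVertex_Icc (hm : 1 ≤ m) : maxVertex (Icc 1 m) = m :=
  maxVertex_eq (by simp [hm]) (by simp)

theorem maxVertex_le_of_subset_Icc {E : Finset ℕ} (hE : E ⊆ Icc 1 m) : maxVertex E ≤ m :=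
  maxVertex_le_iff.2 fun _ hx => (Finset.mem_Icc.1 (hE hx)).2

end Vertices

section Decode

variable {m : ℕ} {G : Multiset (Finset ℕ)}

def oldPart (m : ℕ) (E : Finset ℕ) : Finset ℕ := E.filter (· ≤ m)

def lowPart (m : ℕ) (G : Multiset (Finset ℕ)) : Multiset (Finset ℕ) :=
  G.filter (fun B => maxVertex B ≤ m)

theorem lowPart_cons_of_lt {B : Finset ℕ} (G : Multiset (Finset ℕ)) (h : m < maxVertex B) :
    lowPart m (B ::ₘ G) = lowPart m G :=
  Multiset.filter_cons_of_neg _ (Nat.not_le.2 h)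

theorem lowPart_eq_self (h : ∀ B ∈ G, maxVertex B ≤ m) : lowPart m G = G :=
  Multiset.filter_eq_self.2 h

def edgeAt (G : Multiset (Finset ℕ)) (v : ℕ) : Finset ℕ := (G.filter (v ∈ ·)).sup

theorem edgeAt_eq {X : Finset ℕ} {v : ℕ} (hX : X ∈ G) (hv : v ∈ X)
    (huniq : ∀ B ∈ G, v ∈ B → B = X) : edgeAt G v = X :=
  le_antisymm (Multiset.sup_le.2 fun B hB => (huniq B (Multiset.mem_filter.1 hB).1
    (Multiset.mem_filter.1 hB).2).le) (Multiset.le_sup (Multiset.mem_filter.2 ⟨hX, hv⟩))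

def anchor (G : Multiset (Finset ℕ)) : ℕ := maxVertex (G.filter (fun B => B.card = 1)).sup

theorem anchor_eq {v : ℕ} (hv : {v} ∈ G) (hG : ∀ B ∈ G, B.card = 1 → ∀ x ∈ B, x ≤ v) :
    anchor G = v := by
  refine maxVertex_eq (mem_sup_iff.2 ⟨{v}, by simpa using hv, by simp⟩) fun x hx => ?_
  obtain ⟨B, hB, hxB⟩ := mem_sup_iff.1 hx
  rw [Multiset.mem_filter] at hB
  exact hG B hB.1 hB.2 x hxB

/-- Rounding up makes this read `k` off both `|B| = 2k|E|` and `|B| = 2k|E| - 1`, where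
`E = oldPart m B`. -/
def readBlock (m : ℕ) (B : Finset ℕ) : Multiset (Finset ℕ) :=
  Multiset.replicate ((B.card + 1) / (2 * (oldPart m B).card)) (oldPart m B)

def decode (G : Multiset (Finset ℕ)) : Multiset (Finset ℕ) :=
  let M := maxVertex G.sup
  let X := edgeAt G M
  if Even X.card then
    lowPart (M - X.card / 2) G + 2 • (oldPart (M - X.card / 2) X).val.map singleton
  else
    lowPart (anchor G - 1) G +
      2 • (G.filter (fun B => anchor G < maxVertex B)).bind (readBlock (anchor G - 1))

theorem decode_of_even {X : Finset ℕ} {M q : ℕ} (hM : maxVertex G.sup = M)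
    (hX : edgeAt G M = X) (hq : X.card = 2 * q) :
    decode G = lowPart (M - q) G + 2 • (oldPart (M - q) X).val.map singleton := by
  have hhalf : X.card / 2 = q := by omega
  simp only [decode, hM, hX, hq, even_two_mul, if_true]
  rw [← hq, hhalf]

theorem decode_of_odd {X : Finset ℕ} {M : ℕ} (hM : maxVertex G.sup = M) (hX : edgeAt G M = X)
    (hodd : ¬ Even X.card) (ha : anchor G = m + 1) :
    decode G = lowPart m G + 2 • (G.filter (fun B => m + 1 < maxVertex B)).bind (readBlock m) := by
  simp only [decode, hM, hX, hodd, if_false, ha, Nat.add_sub_cancel]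

end Decode

section Extension

variable {m a b : ℕ} {E : Finset ℕ}

theorem oldPart_union_Ioc (hE : E ⊆ Icc 1 m) (ha : m ≤ a) : oldPart m (E ∪ Ioc a b) = E := by
  ext x
  simp only [oldPart, Finset.mem_filter, Finset.mem_union, Finset.mem_Ioc]
  constructor
  · rintro ⟨hx | hx, hxm⟩
    · exact hx
    · omega
  · exact fun hx => ⟨Or.inl hx, (Finset.mem_Icc.1 (hE hx)).2⟩

theorem card_union_Ioc (hE : E ⊆ Icc 1 m) (ha : m ≤ a) :
    (E ∪ Ioc a b).card = E.card + (b - a) := by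
  rw [Finset.card_union_of_disjoint, Nat.card_Ioc]
  exact Finset.disjoint_left.2 fun x hx hx' => by
    have := (Finset.mem_Icc.1 (hE hx)).2; have := (Finset.mem_Ioc.1 hx').1; omega

theorem union_Ioc_subset_Icc (hE : E ⊆ Icc 1 m) (hb : m ≤ b) : E ∪ Ioc a b ⊆ Icc 1 b :=
  Finset.union_subset (hE.trans (Finset.Icc_subset_Icc_right hb)) fun x hx => by
    have := Finset.mem_Ioc.1 hx; exact Finset.mem_Icc.2 ⟨by omega, this.2⟩

theorem maxVertex_union_Ioc (hE : E ⊆ Icc 1 m) (ha : m ≤ a) (hab : a < b) :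
    maxVertex (E ∪ Ioc a b) = b :=
  maxVertex_eq (by simp [hab]) fun _ hx =>
    (Finset.mem_Icc.1 (union_Ioc_subset_Icc hE (by omega) hx)).2

theorem readBlock_union_Ioc (hE : E ⊆ Icc 1 m) (ha : m ≤ a) (hne : E.Nonempty) {k j : ℕ}
    (hcard : (E ∪ Ioc a b).card + 1 = 2 * k * E.card + j) (hj : j < 2 * E.card) :
    readBlock m (E ∪ Ioc a b) = Multiset.replicate k E := by
  rw [readBlock, oldPart_union_Ioc hE ha, hcard, show 2 * k * E.card + j = j + 2 * E.card * k by
    ring, Nat.add_mul_div_left _ _ (by have := hne.card_pos; omega), Nat.div_eq_of_lt hj,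
    zero_add]

end Extension

section Flat

variable {m : ℕ} {C : Multiset (Finset ℕ)} {T : Finset ℕ}

def flatCode (m : ℕ) (C : Multiset (Finset ℕ)) (T : Finset ℕ) : Multiset (Finset ℕ) :=
  (T ∪ Ioc m (m + T.card)) ::ₘ C

theorem sup_flatCode (hcover : C.sup ∪ T = Icc 1 m) :
    (flatCode m C T).sup = Icc 1 (m + T.card) := by
  rw [flatCode, Multiset.sup_cons, Finset.sup_eq_union, Finset.union_comm, ← Finset.union_assoc,
    hcover]
  ext x
  simp only [Finset.mem_union, Finset.mem_Icc, Finset.mem_Ioc]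
  omega

theorem isNormalized_flatCode (hcover : C.sup ∪ T = Icc 1 m) (hCne : ∀ B ∈ C, B.Nonempty)
    (hT : T.Nonempty) : IsNormalized (flatCode m C T) := by
  refine ⟨fun B hB => ?_, _, sup_flatCode hcover⟩
  rcases Multiset.mem_cons.1 hB with rfl | hB
  · exact hT.mono Finset.subset_union_left
  · exact hCne B hB

theorem nodup_flatCode (hcover : C.sup ∪ T = Icc 1 m) (hC : C.Nodup) (hT : T.Nonempty) :
    (flatCode m C T).Nodup := by
  refine Multiset.nodup_cons.2 ⟨fun hmem => ?_, hC⟩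
  have := hT.card_pos
  have := maxVertex_le_of_subset_Icc (subset_Icc_of_mem_left hcover hmem)
  rw [maxVertex_union_Ioc (Finset.union_subset_right hcover.le) le_rfl (by omega)] at this
  omega

theorem sysWeight_flatCode (hcover : C.sup ∪ T = Icc 1 m) :
    sysWeight (flatCode m C T) = sysWeight C + 2 * T.card := by
  rw [flatCode, sysWeight_cons, card_union_Ioc (Finset.union_subset_right hcover.le) le_rfl]
  omega

theorem decode_flatCode (hcover : C.sup ∪ T = Icc 1 m) (hT : T.Nonempty) :
    decode (flatCode m C T) = C + 2 • T.val.map singleton := by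
  have hq := hT.card_pos
  have hTm : T ⊆ Icc 1 m := Finset.union_subset_right hcover.le
  have hCm : ∀ B ∈ C, maxVertex B ≤ m := fun B hB =>
    maxVertex_le_of_subset_Icc (subset_Icc_of_mem_left hcover hB)
  have hXmax : maxVertex (T ∪ Ioc m (m + T.card)) = m + T.card :=
    maxVertex_union_Ioc hTm le_rfl (by omega)
  have hX : edgeAt (flatCode m C T) (m + T.card) = T ∪ Ioc m (m + T.card) :=
    edgeAt_eq (Multiset.mem_cons_self _ _) (by simp [hq]) fun B hB hMB => by
      rcases Multiset.mem_cons.1 hB with rfl | hB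
      · rfl
      · have := (le_maxVertex hMB).trans (hCm B hB); omega
  have hM : maxVertex (flatCode m C T).sup = m + T.card := by
    rw [sup_flatCode hcover, maxVertex_Icc (by omega)]
  have hcard : (T ∪ Ioc m (m + T.card)).card = 2 * T.card := by
    rw [card_union_Ioc hTm le_rfl]; omega
  rw [decode_of_even hM hX hcard, Nat.add_sub_cancel, oldPart_union_Ioc hTm le_rfl, flatCode,
    lowPart_cons_of_lt _ (by omega), lowPart_eq_self hCm]

end Flat

section Blocks

variable {m : ℕ} {C P : Multiset (Finset ℕ)} {E B : Finset ℕ}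

def tailLength (P : Multiset (Finset ℕ)) (B : Finset ℕ) : ℕ := (2 * P.count B - 1) * B.card

def stackTop (m : ℕ) (P : Multiset (Finset ℕ)) (E : Finset ℕ) : ℕ :=
  m + 1 + (P.toFinset.erase E).sup (tailLength P)

def codeTop (m : ℕ) (P : Multiset (Finset ℕ)) (E : Finset ℕ) : ℕ :=
  stackTop m P E + (tailLength P E - 1)

def lowerBlock (m : ℕ) (P : Multiset (Finset ℕ)) (B : Finset ℕ) : Finset ℕ :=
  B ∪ Ioc (m + 1) (m + 1 + tailLength P B)

def lowerBlocks (m : ℕ) (P : Multiset (Finset ℕ)) (E : Finset ℕ) : Multiset (Finset ℕ) :=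
  (P.toFinset.erase E).val.map (lowerBlock m P)

def upperBlock (m : ℕ) (P : Multiset (Finset ℕ)) (E : Finset ℕ) : Finset ℕ :=
  E ∪ Ioc (stackTop m P E) (codeTop m P E)

def blockCode (m : ℕ) (C P : Multiset (Finset ℕ)) (E : Finset ℕ) : Multiset (Finset ℕ) :=
  upperBlock m P E ::ₘ {m + 1} ::ₘ (C + lowerBlocks m P E)

theorem card_add_tailLength (hB : B ∈ P) : B.card + tailLength P B = 2 * P.count B * B.card := by
  obtain ⟨k, hk⟩ := Nat.exists_eq_add_of_lt (Multiset.count_pos.2 hB)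
  rw [tailLength, hk, show 2 * (0 + k + 1) - 1 = 2 * k + 1 by omega]
  ring

theorem one_le_tailLength (hB : B ∈ P) (hne : B.Nonempty) : 1 ≤ tailLength P B := by
  have := card_add_tailLength hB
  have := Multiset.count_pos.2 hB
  have := hne.card_pos
  nlinarith

theorem two_le_tailLength (hE : E ∈ P) (hne : E.Nonempty) (hbig : 2 ≤ P.count E ∨ 2 ≤ E.card) :
    2 ≤ tailLength P E := by
  have := card_add_tailLength hE
  have := Multiset.count_pos.2 hE
  have := hne.card_pos
  rcases hbig with h | h <;> nlinarith

theorem nonempty_of_two_le_tailLength (htail : 2 ≤ tailLength P E) : E.Nonempty := by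
  rw [Finset.nonempty_iff_ne_empty]
  rintro rfl
  simp [tailLength] at htail

theorem lt_stackTop : m < stackTop m P E := Nat.le_add_right _ _

theorem stackTop_le_codeTop : stackTop m P E ≤ codeTop m P E := Nat.le_add_right _ _

theorem le_stackTop (hB : B ∈ P.toFinset.erase E) : m + 1 + tailLength P B ≤ stackTop m P E :=
  Nat.add_le_add_left (Finset.le_sup (f := tailLength P) hB) _

theorem stackTop_lt_codeTop (htail : 2 ≤ tailLength P E) : stackTop m P E < codeTop m P E := by
  rw [codeTop]
  omega

theorem succ_lt_codeTop (htail : 2 ≤ tailLength P E) : m + 1 < codeTop m P E :=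
  Nat.lt_of_le_of_lt lt_stackTop (stackTop_lt_codeTop htail)

theorem mem_of_mem_erase_toFinset (hB : B ∈ P.toFinset.erase E) : B ∈ P :=
  Multiset.mem_toFinset.1 (Finset.mem_of_mem_erase hB)

theorem oldPart_lowerBlock (hcover : C.sup ∪ P.sup = Icc 1 m) (hB : B ∈ P) :
    oldPart m (lowerBlock m P B) = B :=
  oldPart_union_Ioc (subset_Icc_of_mem_right hcover hB) (Nat.le_succ m)

theorem card_lowerBlock (hcover : C.sup ∪ P.sup = Icc 1 m) (hB : B ∈ P) :
    (lowerBlock m P B).card = 2 * P.count B * B.card := by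
  rw [lowerBlock, card_union_Ioc (subset_Icc_of_mem_right hcover hB) (Nat.le_succ m),
    Nat.add_sub_cancel_left, card_add_tailLength hB]

theorem lt_maxVertex_lowerBlock (hcover : C.sup ∪ P.sup = Icc 1 m) (hB : B ∈ P)
    (hne : B.Nonempty) : m + 1 < maxVertex (lowerBlock m P B) := by
  have := one_le_tailLength hB hne
  rw [lowerBlock, maxVertex_union_Ioc (subset_Icc_of_mem_right hcover hB) (Nat.le_succ m)
    (by omega)]
  omega

theorem lowerBlock_subset_Icc (hcover : C.sup ∪ P.sup = Icc 1 m)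
    (hB : B ∈ P.toFinset.erase E) : lowerBlock m P B ⊆ Icc 1 (stackTop m P E) :=
  (union_Ioc_subset_Icc (subset_Icc_of_mem_right hcover (mem_of_mem_erase_toFinset hB))
    (by omega)).trans (Finset.Icc_subset_Icc_right (le_stackTop hB))

theorem readBlock_lowerBlock (hcover : C.sup ∪ P.sup = Icc 1 m) (hB : B ∈ P)
    (hne : B.Nonempty) : readBlock m (lowerBlock m P B) = Multiset.replicate (P.count B) B :=
  readBlock_union_Ioc (subset_Icc_of_mem_right hcover hB) (by omega) hne (j := 1)
    (by rw [← lowerBlock, card_lowerBlock hcover hB]) (by have := hne.card_pos; omega)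

theorem nodup_lowerBlocks (hcover : C.sup ∪ P.sup = Icc 1 m) : (lowerBlocks m P E).Nodup :=
  (Finset.nodup _).map_on fun A hA B hB h => by
    rw [← oldPart_lowerBlock hcover (mem_of_mem_erase_toFinset hA),
      ← oldPart_lowerBlock hcover (mem_of_mem_erase_toFinset hB), h]

theorem sysWeight_lowerBlocks (hcover : C.sup ∪ P.sup = Icc 1 m) :
    sysWeight (lowerBlocks m P E) = 2 * ∑ B ∈ P.toFinset.erase E, P.count B * B.card := by
  rw [lowerBlocks, sysWeight_map, Finset.mul_sum]
  refine Finset.sum_congr rfl fun B hB => ?_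
  rw [card_lowerBlock hcover (mem_of_mem_erase_toFinset hB), mul_assoc]

theorem bind_readBlock_lowerBlocks (hcover : C.sup ∪ P.sup = Icc 1 m)
    (hPne : ∀ B ∈ P, B.Nonempty) :
    (lowerBlocks m P E).bind (readBlock m) =
      ∑ B ∈ P.toFinset.erase E, Multiset.replicate (P.count B) B := by
  rw [lowerBlocks, Multiset.bind_map]
  exact (Multiset.bind_congr fun B hB =>
    have hBP := mem_of_mem_erase_toFinset hB
    readBlock_lowerBlock hcover hBP (hPne B hBP)).trans rfl

theorem upperBlock_subset_Icc (hcover : C.sup ∪ P.sup = Icc 1 m) (hE : E ∈ P) :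
    upperBlock m P E ⊆ Icc 1 (codeTop m P E) :=
  union_Ioc_subset_Icc (subset_Icc_of_mem_right hcover hE)
    (lt_stackTop.le.trans stackTop_le_codeTop)

theorem codeTop_mem_upperBlock (htail : 2 ≤ tailLength P E) : codeTop m P E ∈ upperBlock m P E :=
  Finset.mem_union_right _ (Finset.mem_Ioc.2 ⟨stackTop_lt_codeTop htail, le_rfl⟩)

theorem maxVertex_upperBlock (hcover : C.sup ∪ P.sup = Icc 1 m) (hE : E ∈ P)
    (htail : 2 ≤ tailLength P E) : maxVertex (upperBlock m P E) = codeTop m P E :=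
  maxVertex_eq (codeTop_mem_upperBlock htail) fun _ hx =>
    (Finset.mem_Icc.1 (upperBlock_subset_Icc hcover hE hx)).2

theorem card_upperBlock (hcover : C.sup ∪ P.sup = Icc 1 m) (hE : E ∈ P)
    (htail : 2 ≤ tailLength P E) : (upperBlock m P E).card + 1 = 2 * P.count E * E.card := by
  rw [upperBlock, card_union_Ioc (subset_Icc_of_mem_right hcover hE) lt_stackTop.le, codeTop,
    ← card_add_tailLength hE]
  omega

theorem readBlock_upperBlock (hcover : C.sup ∪ P.sup = Icc 1 m) (hE : E ∈ P)
    (htail : 2 ≤ tailLength P E) :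
    readBlock m (upperBlock m P E) = Multiset.replicate (P.count E) E :=
  have hne := nonempty_of_two_le_tailLength htail
  readBlock_union_Ioc (subset_Icc_of_mem_right hcover hE) lt_stackTop.le hne (j := 0)
    (card_upperBlock hcover hE htail) (by have := hne.card_pos; omega)

theorem subset_Icc_stackTop (hcover : C.sup ∪ P.sup = Icc 1 m)
    (hB : B ∈ {m + 1} ::ₘ (C + lowerBlocks m P E)) : B ⊆ Icc 1 (stackTop m P E) := by
  simp only [lowerBlocks, Multiset.mem_cons, Multiset.mem_add, Multiset.mem_map] at hB
  rcases hB with rfl | hB | ⟨A, hA, rfl⟩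
  · simpa using lt_stackTop
  · exact (subset_Icc_of_mem_left hcover hB).trans (Finset.Icc_subset_Icc_right lt_stackTop.le)
  · exact lowerBlock_subset_Icc hcover hA

end Blocks

section BlockCode

variable {m : ℕ} {C P : Multiset (Finset ℕ)} {E B : Finset ℕ}

theorem mem_blockCode : B ∈ blockCode m C P E ↔ B = upperBlock m P E ∨ B = {m + 1} ∨ B ∈ C ∨
    ∃ A ∈ P.toFinset.erase E, lowerBlock m P A = B := by
  simp only [blockCode, lowerBlocks, Multiset.mem_cons, Multiset.mem_add, Multiset.mem_map,
    Finset.mem_val]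

theorem lt_maxVertex_of_mem_lowerBlocks (hcover : C.sup ∪ P.sup = Icc 1 m)
    (hPne : ∀ B ∈ P, B.Nonempty) (hB : B ∈ lowerBlocks m P E) : m + 1 < maxVertex B := by
  obtain ⟨A, hA, rfl⟩ := Multiset.mem_map.1 hB
  have hAP := mem_of_mem_erase_toFinset hA
  exact lt_maxVertex_lowerBlock hcover hAP (hPne A hAP)

theorem Icc_subset_sup_blockCode (hcover : C.sup ∪ P.sup = Icc 1 m) :
    Icc 1 (codeTop m P E) ⊆ (blockCode m C P E).sup := by
  intro x hx
  rw [Finset.mem_Icc] at hx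
  rw [mem_sup_iff]
  have hlower : ∀ A ∈ P.toFinset.erase E, x ∈ lowerBlock m P A →
      ∃ B ∈ blockCode m C P E, x ∈ B :=
    fun A hA hxA => ⟨_, mem_blockCode.2 (Or.inr (Or.inr (Or.inr ⟨A, hA, rfl⟩))), hxA⟩
  have hupper : x ∈ upperBlock m P E → ∃ B ∈ blockCode m C P E, x ∈ B :=
    fun hxE => ⟨_, mem_blockCode.2 (Or.inl rfl), hxE⟩
  rcases lt_trichotomy x (m + 1) with hxm | rfl | hxm
  · have hxcover : x ∈ C.sup ∪ P.sup := hcover ▸ Finset.mem_Icc.2 ⟨hx.1, by omega⟩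
    rcases Finset.mem_union.1 hxcover with hxC | hxP
    · obtain ⟨B, hB, hxB⟩ := mem_sup_iff.1 hxC
      exact ⟨B, mem_blockCode.2 (Or.inr (Or.inr (Or.inl hB))), hxB⟩
    · obtain ⟨B, hB, hxB⟩ := mem_sup_iff.1 hxP
      by_cases hBE : B = E
      · exact hupper (Finset.mem_union_left _ (hBE ▸ hxB))
      · exact hlower B (Finset.mem_erase.2 ⟨hBE, Multiset.mem_toFinset.2 hB⟩)
          (Finset.mem_union_left _ hxB)
  · exact ⟨{m + 1}, mem_blockCode.2 (Or.inr (Or.inl rfl)), Finset.mem_singleton_self _⟩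
  · by_cases hxc : x ≤ stackTop m P E
    · obtain ⟨A, hA, hxA⟩ := (Finset.le_sup_iff (a := x - (m + 1)) (by simp; omega)).1
        (show x - (m + 1) ≤ (P.toFinset.erase E).sup (tailLength P) by rw [stackTop] at hxc; omega)
      exact hlower A hA (Finset.mem_union_right _ (Finset.mem_Ioc.2 ⟨hxm, by omega⟩))
    · exact hupper (Finset.mem_union_right _ (Finset.mem_Ioc.2 ⟨by omega, hx.2⟩))

theorem sup_blockCode (hcover : C.sup ∪ P.sup = Icc 1 m) (hE : E ∈ P) :
    (blockCode m C P E).sup = Icc 1 (codeTop m P E) := by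
  refine le_antisymm (Multiset.sup_le.2 fun B hB => ?_) (Icc_subset_sup_blockCode hcover)
  rcases Multiset.mem_cons.1 hB with rfl | hB
  · exact upperBlock_subset_Icc hcover hE
  · exact (subset_Icc_stackTop hcover hB).trans (Finset.Icc_subset_Icc_right stackTop_le_codeTop)

theorem isNormalized_blockCode (hcover : C.sup ∪ P.sup = Icc 1 m) (hCne : ∀ B ∈ C, B.Nonempty)
    (hPne : ∀ B ∈ P, B.Nonempty) (hE : E ∈ P) : IsNormalized (blockCode m C P E) := by
  refine ⟨fun B hB => ?_, _, sup_blockCode hcover hE⟩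
  rcases mem_blockCode.1 hB with rfl | rfl | hB | ⟨A, hA, rfl⟩
  · exact (hPne E hE).mono Finset.subset_union_left
  · exact Finset.singleton_nonempty _
  · exact hCne B hB
  · exact (hPne A (mem_of_mem_erase_toFinset hA)).mono Finset.subset_union_left

theorem nodup_blockCode (hcover : C.sup ∪ P.sup = Icc 1 m) (hC : C.Nodup)
    (hPne : ∀ B ∈ P, B.Nonempty) (htail : 2 ≤ tailLength P E) : (blockCode m C P E).Nodup := by
  have hCm : ∀ B ∈ C, maxVertex B ≤ m := fun B hB =>
    maxVertex_le_of_subset_Icc (subset_Icc_of_mem_left hcover hB)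
  have hL := fun B (hB : B ∈ lowerBlocks m P E) => lt_maxVertex_of_mem_lowerBlocks hcover hPne hB
  rw [blockCode, Multiset.nodup_cons, Multiset.nodup_cons, Multiset.nodup_add]
  refine ⟨fun h => ?_, fun h => ?_, hC, nodup_lowerBlocks hcover,
    Multiset.disjoint_left.2 fun hBC hBL => ?_⟩
  · have := (Finset.mem_Icc.1 (subset_Icc_stackTop hcover h (codeTop_mem_upperBlock htail))).2
    have := stackTop_lt_codeTop htail (m := m)
    omega
  · rcases Multiset.mem_add.1 h with h | h
    · have := hCm _ h; rw [maxVertex_singleton] at this; omega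
    · have := hL _ h; rw [maxVertex_singleton] at this; omega
  · have := hCm _ hBC
    have := hL _ hBL
    omega

theorem sysWeight_blockCode (hcover : C.sup ∪ P.sup = Icc 1 m) (hE : E ∈ P)
    (htail : 2 ≤ tailLength P E) :
    sysWeight (blockCode m C P E) = sysWeight C + 2 * sysWeight P := by
  have := card_upperBlock hcover hE htail
  rw [blockCode, sysWeight_cons, sysWeight_cons, sysWeight_add, sysWeight_lowerBlocks hcover,
    sysWeight_eq_sum_count P, ← Finset.add_sum_erase _ _ (Multiset.mem_toFinset.2 hE),
    Finset.card_singleton]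
  linarith

end BlockCode

section DecodeBlockCode

variable {m : ℕ} {C P : Multiset (Finset ℕ)} {E : Finset ℕ}

theorem edgeAt_blockCode (hcover : C.sup ∪ P.sup = Icc 1 m) (htail : 2 ≤ tailLength P E) :
    edgeAt (blockCode m C P E) (codeTop m P E) = upperBlock m P E :=
  edgeAt_eq (Multiset.mem_cons_self _ _) (codeTop_mem_upperBlock htail) fun B hB hMB => by
    rcases Multiset.mem_cons.1 hB with rfl | hB
    · rfl
    · have := (Finset.mem_Icc.1 (subset_Icc_stackTop hcover hB hMB)).2
      have := stackTop_lt_codeTop htail (m := m)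
      omega

theorem anchor_blockCode (hcover : C.sup ∪ P.sup = Icc 1 m) (hE : E ∈ P)
    (htail : 2 ≤ tailLength P E) : anchor (blockCode m C P E) = m + 1 := by
  refine anchor_eq (mem_blockCode.2 (Or.inr (Or.inl rfl))) fun B hB hcard x hx => ?_
  rcases mem_blockCode.1 hB with rfl | rfl | hB | ⟨A, hA, rfl⟩
  · obtain ⟨e, he⟩ := nonempty_of_two_le_tailLength htail
    have := Finset.card_le_one.1 hcard.le e (Finset.mem_union_left _ he) _
      (codeTop_mem_upperBlock htail)
    have := (Finset.mem_Icc.1 (subset_Icc_of_mem_right hcover hE he)).2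
    have := succ_lt_codeTop htail (m := m)
    omega
  · exact (Finset.mem_singleton.1 hx).le
  · have := (Finset.mem_Icc.1 (subset_Icc_of_mem_left hcover hB hx)).2
    omega
  · rw [card_lowerBlock hcover (mem_of_mem_erase_toFinset hA), mul_assoc] at hcard
    omega

theorem lowPart_blockCode (hcover : C.sup ∪ P.sup = Icc 1 m) (hPne : ∀ B ∈ P, B.Nonempty)
    (hE : E ∈ P) (htail : 2 ≤ tailLength P E) : lowPart m (blockCode m C P E) = C := by
  have := succ_lt_codeTop htail (m := m)
  rw [blockCode, lowPart_cons_of_lt _ (by rw [maxVertex_upperBlock hcover hE htail]; omega),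
    lowPart_cons_of_lt _ (by rw [maxVertex_singleton]; omega), lowPart, Multiset.filter_add,
    Multiset.filter_eq_self.2 fun B hB =>
      maxVertex_le_of_subset_Icc (subset_Icc_of_mem_left hcover hB),
    Multiset.filter_eq_nil.2 fun B hB => by
      have := lt_maxVertex_of_mem_lowerBlocks hcover hPne hB; omega, add_zero]

theorem filter_blockCode (hcover : C.sup ∪ P.sup = Icc 1 m) (hPne : ∀ B ∈ P, B.Nonempty)
    (hE : E ∈ P) (htail : 2 ≤ tailLength P E) :
    (blockCode m C P E).filter (fun B => m + 1 < maxVertex B) =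
      upperBlock m P E ::ₘ lowerBlocks m P E := by
  have := succ_lt_codeTop htail (m := m)
  rw [blockCode,
    Multiset.filter_cons_of_pos _ (by rw [maxVertex_upperBlock hcover hE htail]; omega),
    Multiset.filter_cons_of_neg _ (by rw [maxVertex_singleton]; omega), Multiset.filter_add,
    Multiset.filter_eq_nil.2 fun B hB => by
      have := maxVertex_le_of_subset_Icc (subset_Icc_of_mem_left hcover hB); omega,
    Multiset.filter_eq_self.2 fun B hB => lt_maxVertex_of_mem_lowerBlocks hcover hPne hB, zero_add]

theorem decode_blockCode (hcover : C.sup ∪ P.sup = Icc 1 m) (hPne : ∀ B ∈ P, B.Nonempty)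
    (hE : E ∈ P) (htail : 2 ≤ tailLength P E) : decode (blockCode m C P E) = C + 2 • P := by
  have hM : maxVertex (blockCode m C P E).sup = codeTop m P E := by
    rw [sup_blockCode hcover hE, maxVertex_Icc (by have := succ_lt_codeTop htail (m := m); omega)]
  have hodd : ¬ Even (upperBlock m P E).card := by
    rintro ⟨r, hr⟩
    have := card_upperBlock hcover hE htail
    rw [mul_assoc] at this
    omega
  rw [decode_of_odd hM (edgeAt_blockCode hcover htail) hodd (anchor_blockCode hcover hE htail),
    lowPart_blockCode hcover hPne hE htail, filter_blockCode hcover hPne hE htail,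
    Multiset.cons_bind, readBlock_upperBlock hcover hE htail,
    bind_readBlock_lowerBlocks hcover hPne,
    Finset.add_sum_erase _ (fun B => Multiset.replicate (P.count B) B) (Multiset.mem_toFinset.2 hE),
    sum_replicate_count]

end DecodeBlockCode

theorem exists_map_singleton {P : Multiset (Finset ℕ)} (hP : P.Nodup)
    (h : ∀ B ∈ P, B.card = 1) : ∃ T : Finset ℕ, T.val.map singleton = P := by
  have hsingle : ∀ B ∈ P, {maxVertex B} = B := fun B hB => by
    obtain ⟨a, rfl⟩ := Finset.card_eq_one.1 (h B hB)
    rw [maxVertex_singleton]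
  refine ⟨⟨P.map maxVertex, hP.map_on fun A hA B hB hAB => ?_⟩, ?_⟩
  · rw [← hsingle A hA, ← hsingle B hB, hAB]
  · rw [Multiset.map_map]
    exact (Multiset.map_congr rfl hsingle).trans P.map_id

theorem exists_two_le_tailLength {P : Multiset (Finset ℕ)} (hPne : ∀ B ∈ P, B.Nonempty)
    (hP : ¬ (P.Nodup ∧ ∀ B ∈ P, B.card = 1)) : ∃ E ∈ P, 2 ≤ tailLength P E := by
  by_cases hPd : P.Nodup
  · obtain ⟨E, hE, hE1⟩ := not_forall₂.1 fun h => hP ⟨hPd, h⟩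
    exact ⟨E, hE, two_le_tailLength hE (hPne E hE) (Or.inr (by
      have := (hPne E hE).card_pos; omega))⟩
  · obtain ⟨E, hE⟩ : ∃ E, 1 < P.count E := by
      simpa [Multiset.nodup_iff_count_le_one] using hPd
    have hEP := Multiset.count_pos.1 (by omega : 0 < P.count E)
    exact ⟨E, hEP, two_le_tailLength hEP (hPne E hEP) (Or.inl hE)⟩

theorem exists_simple_decode_eq {H : Multiset (Finset ℕ)} (hH : IsNormalized H)
    (hnd : ¬ H.Nodup) :
    ∃ G, IsNormalized G ∧ G.Nodup ∧ sysWeight G = sysWeight H ∧ decode G = H := by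
  obtain ⟨C, P, hC, rfl⟩ := exists_nodup_add_two_nsmul H
  obtain ⟨hne, m, hcover⟩ := hH
  rw [sup_add_two_nsmul, Finset.sup_eq_union] at hcover
  have hCne : ∀ B ∈ C, B.Nonempty := fun B hB => hne B (Multiset.mem_add.2 (Or.inl hB))
  have hPne : ∀ B ∈ P, B.Nonempty := fun B hB =>
    hne B (Multiset.mem_add.2 (Or.inr (Multiset.mem_nsmul.2 ⟨two_ne_zero, hB⟩)))
  rw [sysWeight_add, sysWeight_nsmul]
  by_cases hflat : P.Nodup ∧ ∀ B ∈ P, B.card = 1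
  · obtain ⟨T, rfl⟩ := exists_map_singleton hflat.1 hflat.2
    have hT : T.Nonempty := by
      rw [Finset.nonempty_iff_ne_empty]
      rintro rfl
      simp [hC] at hnd
    rw [← Finset.sup_def, Finset.sup_singleton_eq_self] at hcover
    refine ⟨flatCode m C T, isNormalized_flatCode hcover hCne hT, nodup_flatCode hcover hC hT,
      ?_, decode_flatCode hcover hT⟩
    rw [sysWeight_flatCode hcover, sysWeight_map_singleton]
  · obtain ⟨E, hE, htail⟩ := exists_two_le_tailLength hPne hflat
    exact ⟨blockCode m C P E, isNormalized_blockCode hcover hCne hPne hE,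
      nodup_blockCode hcover hC hPne htail, sysWeight_blockCode hcover hE htail,
      decode_blockCode hcover hPne hE htail⟩

end SetSystem

theorem hp_le_hpp_le_two_hp_general (n : ℕ) :
    hp n ≤ hpp n ∧ hpp n ≤ 2 * hp n := by
  set S := {H : Multiset (Finset ℕ) | IsNormalized H ∧ sysWeight H = n}
  have hS : S.Finite := SetSystem.finite_setOf_isNormalized n
  have hall : hpp n = S.ncard := Nat.card_coe_set_eq S
  have hsimple : hp n = (S ∩ {H | H.Nodup}).ncard :=
    (Nat.card_coe_set_eq _).trans (by congr 1; ext H; simp [S, and_assoc]; rfl)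
  have hdecode : S \ {H | H.Nodup} ⊆ SetSystem.decode '' (S ∩ {H | H.Nodup}) := by
    rintro H ⟨⟨hH, rfl⟩, hnd⟩
    obtain ⟨G, hG, hGnd, hw, rfl⟩ := SetSystem.exists_simple_decode_eq hH hnd
    exact ⟨G, ⟨⟨hG, hw⟩, hGnd⟩, rfl⟩
  have hnonsimple : (S \ {H | H.Nodup}).ncard ≤ (S ∩ {H | H.Nodup}).ncard :=
    (Set.ncard_le_ncard hdecode ((hS.inter_of_left _).image _)).trans
      (Set.ncard_image_le (hS.inter_of_left _))
  have hsplit := Set.ncard_inter_add_ncard_sdiff_eq_ncard S {H | H.Nodup} hS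
  omega

/-- For every `n ∈ ℕ = {1,2,…}`, `hₙ' ≤ hₙ'' ≤ 2·hₙ'`. -/
theorem hp_le_hpp_le_two_hp (n : ℕ) (hn : 1 ≤ n) :
    hp n ≤ hpp n ∧ hpp n ≤ 2 * hp n :=
  hp_le_hpp_le_two_hp_general n
end

section
/- For every k, n ∈ ℕ, h_{k,n}' ≤ h_{k,n}'' ≤ 2·h_{k,n}'. -/
/-- The degree of a vertex `v` in a set system `H`: the number of edges
(with multiplicity) containing `v`. -/
def sysDeg (H : Multiset (Finset ℕ)) (v : ℕ) : ℕ := (H.filter (fun E => v ∈ E)).card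

/-- `hkpp k n` = `h''_{k,n}`, the number of normalized set systems of weight `n`
in which every vertex has degree at most `k`. -/
noncomputable def hkpp (k n : ℕ) : ℕ :=
  Nat.card {H : Multiset (Finset ℕ) //
    IsNormalized H ∧ sysWeight H = n ∧ ∀ v, sysDeg H v ≤ k}

/-- `hkp k n` = `h'_{k,n}`, the number of simple normalized set systems of weight `n`
in which every vertex has degree at most `k`. -/
noncomputable def hkp (k n : ℕ) : ℕ :=
  Nat.card {H : Multiset (Finset ℕ) //
    IsNormalized H ∧ sysWeight H = n ∧ (∀ v, sysDeg H v ≤ k) ∧ H.Nodup}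

/-!
The non-simple systems inject into the simple ones. Let `H` be non-simple on `{1, …, m}`, and
write `c E` for the multiplicity of an edge `E`.

If some edge `A` has `c A ≥ 2` and `c A * |A| ≥ 4`, keep every distinct edge `E` once and enlarge
it by `(c E - 1) * |E|` fresh vertices, taken in consecutive blocks after `m + 1`; the block of `A`
comes last and is one vertex shorter, and the unit of weight saved pays for the marker edge
`{m + 1}`. Otherwise every repeated edge is a singleton `{v}` with `c {v} ∈ {2, 3}`; with `V` the
set of these `v` and `r = |V|`, two copies of each `{v}` are traded for the edge `V ∪ {m + 1}` and
the singletons `{m + 2}, …, {m + r}`.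

Either way the weight is kept, no old vertex gains degree, fresh vertices have degree one, and no
edge is repeated. The edge through the largest vertex has at least three elements in the first
case (this is what `c A * |A| ≥ 4` buys) and at most two in the second; then `m + 1` is the
largest vertex whose singleton is an edge, respectively is not, and knowing `m` one reads `H`
back.
-/

open Finset

section Basic

variable {H : Multiset (Finset ℕ)}

@[simp] lemma sysWeight_add (G H : Multiset (Finset ℕ)) :
    sysWeight (G + H) = sysWeight G + sysWeight H := by
  simp [sysWeight]

@[simp] lemma sysWeight_cons (E : Finset ℕ) (H : Multiset (Finset ℕ)) :
    sysWeight (E ::ₘ H) = #E + sysWeight H := by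
  simp [sysWeight]

@[simp] lemma sysWeight_nsmul (k : ℕ) (H : Multiset (Finset ℕ)) :
    sysWeight (k • H) = k * sysWeight H := by
  simp [sysWeight, Multiset.map_nsmul, Multiset.sum_nsmul]

lemma sysWeight_coe (l : List (Finset ℕ)) :
    sysWeight (l : Multiset (Finset ℕ)) = (l.map card).sum := by
  simp [sysWeight]

lemma sysWeight_eq_sum_count (H : Multiset (Finset ℕ)) :
    sysWeight H = ∑ E ∈ H.toFinset, H.count E * #E := by
  simp [sysWeight, Finset.sum_multiset_map_count]

@[simp] lemma sysDeg_add (G H : Multiset (Finset ℕ)) (v : ℕ) :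
    sysDeg (G + H) v = sysDeg G v + sysDeg H v := by
  simp [sysDeg, Multiset.filter_add]

@[simp] lemma sysDeg_cons (E : Finset ℕ) (H : Multiset (Finset ℕ)) (v : ℕ) :
    sysDeg (E ::ₘ H) v = (if v ∈ E then 1 else 0) + sysDeg H v := by
  by_cases hv : v ∈ E <;> simp [sysDeg, hv, add_comm]

@[simp] lemma sysDeg_nsmul (k : ℕ) (H : Multiset (Finset ℕ)) (v : ℕ) :
    sysDeg (k • H) v = k * sysDeg H v := by
  simp [sysDeg, Multiset.filter_nsmul]

lemma sysDeg_coe (l : List (Finset ℕ)) (v : ℕ) :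
    sysDeg (l : Multiset (Finset ℕ)) v = l.countP (fun X => v ∈ X) := by
  simp [sysDeg, List.countP_eq_length_filter]

lemma sysDeg_eq_zero {v : ℕ} (h : ∀ E ∈ H, v ∉ E) : sysDeg H v = 0 :=
  Multiset.card_eq_zero.2 (Multiset.filter_eq_nil.2 h)

lemma card_filter_toFinset_le_sysDeg (H : Multiset (Finset ℕ)) (v : ℕ) :
    #(H.toFinset.filter (v ∈ ·)) ≤ sysDeg H v := by
  rw [← Multiset.toFinset_filter]
  exact Multiset.toFinset_card_le _

lemma card_le_sysWeight (hne : ∀ E ∈ H, E.Nonempty) : Multiset.card H ≤ sysWeight H := by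
  simpa [sysWeight] using Multiset.card_nsmul_le_sum (s := H.map Finset.card) (a := 1)
    (by simpa [Nat.one_le_iff_ne_zero, Finset.nonempty_iff_ne_empty] using hne)

lemma card_sup_le_sysWeight (H : Multiset (Finset ℕ)) : #H.sup ≤ sysWeight H := by
  induction H using Multiset.induction with
  | empty => simp
  | cons E H ih => simpa using (card_union_le E H.sup).trans (by omega)

def numVertices (H : Multiset (Finset ℕ)) : ℕ := #H.sup

lemma numVertices_eq_of_sup_eq {M : ℕ} (h : H.sup = Icc 1 M) : numVertices H = M := by
  simp [numVertices, h]

lemma IsNormalized.sup_eq (h : IsNormalized H) : H.sup = Icc 1 (numVertices H) := by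
  obtain ⟨-, m, hm⟩ := h
  rw [numVertices_eq_of_sup_eq hm, hm]

lemma IsNormalized.subset_Icc (h : IsNormalized H) {E : Finset ℕ} (hE : E ∈ H) :
    E ⊆ Icc 1 (numVertices H) :=
  h.sup_eq ▸ Multiset.le_sup hE

lemma IsNormalized.subset_Iic (h : IsNormalized H) {E : Finset ℕ} (hE : E ∈ H) :
    E ⊆ Iic (numVertices H) :=
  (h.subset_Icc hE).trans Icc_subset_Iic_self

lemma exists_two_le_sysDeg_of_not_nodup (hH : IsNormalized H) (hns : ¬H.Nodup) :
    ∃ v, 2 ≤ sysDeg H v := by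
  obtain ⟨E, hE⟩ := not_forall.1 (mt Multiset.nodup_iff_count_le_one.2 hns)
  obtain ⟨v, hv⟩ := hH.1 E (Multiset.count_pos.1 (by omega))
  refine ⟨v, (not_le.1 hE).trans_le ?_⟩
  calc H.count E = (H.filter (v ∈ ·)).count E :=
        (Multiset.count_filter_of_pos (s := H) (p := (v ∈ ·)) hv).symm
    _ ≤ sysDeg H v := Multiset.count_le_card _ _

end Basic

lemma finite_setOf_isNormalized (n : ℕ) :
    {H : Multiset (Finset ℕ) | IsNormalized H ∧ sysWeight H = n}.Finite := by
  refine (Set.finite_Iic (n • (Icc 1 n).powerset.val)).subset ?_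
  rintro H ⟨hH, rfl⟩
  refine Multiset.le_iff_count.2 fun E => ?_
  by_cases hE : E ∈ H
  · have hsub : E ⊆ Icc 1 (sysWeight H) :=
      (hH.subset_Icc hE).trans (Icc_subset_Icc_right (card_sup_le_sysWeight H))
    rw [Multiset.count_nsmul,
      Multiset.count_eq_one_of_mem (powerset _).nodup (by simpa using hsub)]
    simpa using (Multiset.count_le_card E H).trans (card_le_sysWeight hH.1)
  · simp [Multiset.count_eq_zero_of_notMem hE]

lemma ncard_le_two_mul_ncard_of_injOn {α : Type*} {S : Set α} {p : α → Prop} (hS : S.Finite)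
    (f : α → α) (hf : ∀ x ∈ S, ¬p x → f x ∈ S ∧ p (f x)) (hinj : Set.InjOn f {x ∈ S | ¬p x}) :
    S.ncard ≤ 2 * {x ∈ S | p x}.ncard := by
  have hS' : S = {x ∈ S | p x} ∪ {x ∈ S | ¬p x} := by
    ext x
    simp only [Set.mem_union, Set.mem_sep_iff]
    tauto
  calc S.ncard ≤ {x ∈ S | p x}.ncard + {x ∈ S | ¬p x}.ncard :=
        (congrArg Set.ncard hS').trans_le (Set.ncard_union_le _ _)
    _ ≤ {x ∈ S | p x}.ncard + {x ∈ S | p x}.ncard := Nat.add_le_add_left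
        (Set.ncard_le_ncard_of_injOn f (fun x hx => hf x hx.1 hx.2) hinj (hS.sep p)) _
    _ = 2 * {x ∈ S | p x}.ncard := (two_mul _).symm

def stack (σ : Finset ℕ → ℕ) : List (Finset ℕ) → ℕ → List (Finset ℕ)
  | [], _ => []
  | E :: L, c => (E ∪ Ioc c (c + σ E)) :: stack σ L (c + σ E)

section Stack

lemma union_Ioc_inter_Iic {E : Finset ℕ} {m a : ℕ} (hE : E ⊆ Iic m) (hma : m ≤ a) (b : ℕ) :
    (E ∪ Ioc a b) ∩ Iic m = E := by
  rw [union_inter_distrib_right, inter_eq_left.2 hE, union_eq_left]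
  intro x hx
  simp only [mem_inter, mem_Ioc, mem_Iic] at hx
  omega

lemma card_union_Ioc {E : Finset ℕ} {m a : ℕ} (hE : E ⊆ Iic m) (hma : m ≤ a) (k : ℕ) :
    #(E ∪ Ioc a (a + k)) = #E + k := by
  rw [card_union_of_disjoint, Nat.card_Ioc, Nat.add_sub_cancel_left]
  exact disjoint_left.2 fun x hx hx' => by
    have := mem_Iic.1 (hE hx)
    simp only [mem_Ioc] at hx'
    omega

variable {σ : Finset ℕ → ℕ} {m c : ℕ} {L : List (Finset ℕ)}

lemma stack_append (L' : List (Finset ℕ)) :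
    stack σ (L ++ L') c = stack σ L c ++ stack σ L' (c + (L.map σ).sum) := by
  induction L generalizing c with
  | nil => simp [stack]
  | cons E L ih => simp [stack, ih, add_assoc]

lemma map_stack {α : Type*} (f g : Finset ℕ → α)
    (h : ∀ E ∈ L, ∀ a, c ≤ a → a + σ E ≤ c + (L.map σ).sum → f (E ∪ Ioc a (a + σ E)) = g E) :
    (stack σ L c).map f = L.map g := by
  induction L generalizing c with
  | nil => rfl
  | cons E L ih =>
    simp only [stack, List.map_cons, List.sum_cons] at h ⊢
    refine congrArg₂ _ (h E (by simp) c le_rfl (by omega)) (ih fun F hF a ha ha' => ?_)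
    exact h F (by simp [hF]) a (by omega) (by omega)

variable (hL : ∀ E ∈ L, E ⊆ Iic m) (hmc : m ≤ c)
include hL hmc

lemma map_inter_stack : (stack σ L c).map (· ∩ Iic m) = L := by
  simpa using map_stack (L := L) (· ∩ Iic m) id fun E hE a ha _ =>
    union_Ioc_inter_Iic (hL E hE) (hmc.trans ha) _

lemma inter_Iic_mem_of_mem_stack {X : Finset ℕ} (hX : X ∈ stack σ L c) : X ∩ Iic m ∈ L :=
  map_inter_stack (σ := σ) hL hmc ▸ List.mem_map_of_mem hX

lemma nodup_stack (hnd : L.Nodup) : (stack σ L c).Nodup :=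
  List.Nodup.of_map _ ((map_inter_stack hL hmc).symm ▸ hnd)

lemma sum_card_stack : ((stack σ L c).map card).sum = (L.map fun E => #E + σ E).sum :=
  congrArg List.sum <| map_stack card _ fun E hE _ ha _ => card_union_Ioc (hL E hE) (hmc.trans ha) _

lemma subset_of_mem_stack {X : Finset ℕ} (hX : X ∈ stack σ L c) :
    X ⊆ Iic m ∪ Ioc c (c + (L.map σ).sum) := by
  induction L generalizing c with
  | nil => simp [stack] at hX
  | cons E L ih =>
    simp only [stack, List.mem_cons, List.map_cons, List.sum_cons] at hX ⊢
    rcases hX with rfl | hX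
    · exact union_subset_union (hL E (by simp)) (Ioc_subset_Ioc_right (by omega))
    · refine (ih (fun F hF => hL F (by simp [hF])) (by omega) hX).trans ?_
      exact union_subset_union_right (Ioc_subset_Ioc (by omega) (by omega))

lemma sup_stack : (stack σ L c : Multiset (Finset ℕ)).sup =
    (L : Multiset (Finset ℕ)).sup ∪ Ioc c (c + (L.map σ).sum) := by
  induction L generalizing c with
  | nil => simp [stack]
  | cons E L ih =>
    rw [stack, ← Multiset.cons_coe, ← Multiset.cons_coe, Multiset.sup_cons, Multiset.sup_cons,
      ih (fun F hF => hL F (by simp [hF])) (by omega)]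
    simp only [List.map_cons, List.sum_cons, sup_eq_union]
    rw [union_union_union_comm, Ioc_union_Ioc_eq_Ioc (by omega) (by omega), add_assoc]

lemma countP_mem_stack_of_le {v : ℕ} (hv : v ≤ m) :
    (stack σ L c).countP (fun X => v ∈ X) = L.countP (fun E => v ∈ E) := by
  conv_rhs => rw [← map_inter_stack (σ := σ) hL hmc, List.countP_map]
  congr 1
  ext X
  simp [hv]

lemma countP_mem_stack_le_one {v : ℕ} (hv : c < v) :
    (stack σ L c).countP (fun X => v ∈ X) ≤ 1 := by
  induction L generalizing c with
  | nil => simp [stack]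
  | cons E L ih =>
    have hL' : ∀ F ∈ L, F ⊆ Iic m := fun F hF => hL F (by simp [hF])
    rw [stack, List.countP_cons]
    by_cases hvE : v ≤ c + σ E
    · rw [List.countP_eq_zero.2]
      · split_ifs <;> simp
      · intro X hX hvX
        have := subset_of_mem_stack hL' (by omega) hX (by simpa using hvX)
        simp only [mem_union, mem_Iic, mem_Ioc] at this
        omega
    · have hvX : v ∉ E ∪ Ioc c (c + σ E) := fun h => by
        have := union_subset_union (hL E (by simp)) (subset_refl (Ioc c (c + σ E))) h
        simp only [mem_union, mem_Iic, mem_Ioc] at this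
        omega
      simpa [hvX] using ih hL' (by omega) (by omega)

end Stack

section LargeRepeat

def IsLargeRepeat (H : Multiset (Finset ℕ)) (A : Finset ℕ) : Prop :=
  2 ≤ H.count A ∧ 4 ≤ H.count A * #A

def freshCount (H : Multiset (Finset ℕ)) (A E : Finset ℕ) : ℕ :=
  H.count E * #E - #E - if E = A then 1 else 0

noncomputable def edgeList (H : Multiset (Finset ℕ)) (A : Finset ℕ) : List (Finset ℕ) :=
  (H.toFinset.erase A).toList ++ [A]

noncomputable def encodeLarge (H : Multiset (Finset ℕ)) (A : Finset ℕ) :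
    Multiset (Finset ℕ) :=
  {numVertices H + 1} ::ₘ ↑(stack (freshCount H A) (edgeList H A) (numVertices H + 1))

/-- The edge through the largest vertex `M` is the one whose block lacks a vertex. -/
def decodeEdge (M m : ℕ) (X : Finset ℕ) : Multiset (Finset ℕ) :=
  Multiset.replicate ((#X + if M ∈ X then 1 else 0) / #(X ∩ Iic m)) (X ∩ Iic m)

def decodeLarge (G : Multiset (Finset ℕ)) (m : ℕ) : Multiset (Finset ℕ) :=
  (G.filter fun X => (X ∩ Iic m).Nonempty).bind (decodeEdge (numVertices G) m)

variable {H : Multiset (Finset ℕ)} {A : Finset ℕ}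

lemma IsLargeRepeat.mem (hA : IsLargeRepeat H A) : A ∈ H :=
  Multiset.count_pos.1 (by have := hA.1; omega)

lemma IsLargeRepeat.one_le_freshCount (hA : IsLargeRepeat H A) : 1 ≤ freshCount H A A := by
  have : 2 * #A ≤ H.count A * #A := Nat.mul_le_mul_right _ hA.1
  have := hA.2
  simp only [freshCount, if_true]
  omega

lemma IsLargeRepeat.card_add_freshCount (hA : IsLargeRepeat H A) {E : Finset ℕ} (hE : E ∈ H) :
    #E + freshCount H A E + (if E = A then 1 else 0) = H.count E * #E := by
  have : #E ≤ H.count E * #E := Nat.le_mul_of_pos_left _ (Multiset.count_pos.2 hE)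
  have := hA.one_le_freshCount
  unfold freshCount at *
  split_ifs with h
  · subst h
    simp only [if_true] at this
    omega
  · omega

lemma coe_edgeList (hA : A ∈ H) : (edgeList H A : Multiset (Finset ℕ)) = H.toFinset.val := by
  rw [edgeList, ← Multiset.coe_add, Finset.coe_toList, add_comm, Multiset.coe_singleton,
    Multiset.singleton_add, ← insert_val_of_notMem (notMem_erase A _),
    insert_erase (Multiset.mem_toFinset.2 hA)]

lemma nodup_edgeList (H : Multiset (Finset ℕ)) (A : Finset ℕ) : (edgeList H A).Nodup := by
  simpa [edgeList, List.nodup_append] using ⟨nodup_toList _, fun _ h _ => h⟩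

lemma mem_edgeList (hA : A ∈ H) {E : Finset ℕ} : E ∈ edgeList H A ↔ E ∈ H := by
  rw [← Multiset.mem_coe, coe_edgeList hA, Finset.mem_val, Multiset.mem_toFinset]

lemma sum_map_edgeList {β : Type*} [AddCommMonoid β] (hA : A ∈ H) (f : Finset ℕ → β) :
    ((edgeList H A).map f).sum = ∑ E ∈ H.toFinset, f E := by
  rw [← Multiset.sum_coe, ← Multiset.map_coe, coe_edgeList hA]
  rfl

lemma countP_edgeList (hA : A ∈ H) (v : ℕ) :
    (edgeList H A).countP (fun E => v ∈ E) = #(H.toFinset.filter (v ∈ ·)) := by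
  rw [← Multiset.coe_countP (fun E => v ∈ E), coe_edgeList hA, Multiset.countP_eq_card_filter]
  rfl

lemma stack_edgeList (σ : Finset ℕ → ℕ) (c : ℕ) :
    stack σ (edgeList H A) c = stack σ (H.toFinset.erase A).toList c ++
      [A ∪ Ioc (c + ((H.toFinset.erase A).toList.map σ).sum)
        (c + ((H.toFinset.erase A).toList.map σ).sum + σ A)] := by
  simp [edgeList, stack_append, stack]

variable (hH : IsNormalized H)
include hH

lemma subset_Iic_of_mem_edgeList (hA : A ∈ H) :
    ∀ E ∈ edgeList H A, E ⊆ Iic (numVertices H) :=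
  fun _ hE => hH.subset_Iic ((mem_edgeList hA).1 hE)

lemma sup_encodeLarge (hA : A ∈ H) : (encodeLarge H A).sup =
    Icc 1 (numVertices H + 1 + ((edgeList H A).map (freshCount H A)).sum) := by
  rw [encodeLarge, Multiset.sup_cons, sup_stack (subset_Iic_of_mem_edgeList hH hA) le_self_add,
    coe_edgeList hA, Multiset.toFinset_val, Multiset.sup_dedup, hH.sup_eq]
  ext x
  simp only [sup_eq_union, mem_union, mem_singleton, mem_Icc, mem_Ioc]
  omega

lemma numVertices_encodeLarge (hA : A ∈ H) : numVertices (encodeLarge H A) =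
    numVertices H + 1 + ((H.toFinset.erase A).toList.map (freshCount H A)).sum +
      freshCount H A A := by
  rw [numVertices_eq_of_sup_eq (sup_encodeLarge hH hA)]
  simp [edgeList, add_assoc]

lemma isNormalized_encodeLarge (hA : A ∈ H) : IsNormalized (encodeLarge H A) := by
  refine ⟨fun X hX => ?_, _, sup_encodeLarge hH hA⟩
  rcases Multiset.mem_cons.1 hX with rfl | hX
  · exact singleton_nonempty _
  · have hE := inter_Iic_mem_of_mem_stack (subset_Iic_of_mem_edgeList hH hA) le_self_add hX
    exact (hH.1 _ ((mem_edgeList hA).1 hE)).mono inter_subset_left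

lemma sysWeight_encodeLarge (hA : IsLargeRepeat H A) :
    sysWeight (encodeLarge H A) = sysWeight H := by
  have hsum := Finset.sum_congr rfl fun E hE =>
    hA.card_add_freshCount (Multiset.mem_toFinset.1 hE)
  rw [sum_add_distrib, sum_ite_eq' _ _ (fun _ => 1), if_pos (Multiset.mem_toFinset.2 hA.mem),
    ← sysWeight_eq_sum_count] at hsum
  rw [encodeLarge, sysWeight_cons, sysWeight_coe,
    sum_card_stack (subset_Iic_of_mem_edgeList hH hA.mem) le_self_add,
    sum_map_edgeList hA.mem (fun E => #E + freshCount H A E), ← hsum, card_singleton, add_comm]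

lemma sysDeg_encodeLarge_le (hA : A ∈ H) (v : ℕ) :
    sysDeg (encodeLarge H A) v ≤ max 1 (sysDeg H v) := by
  have hL := subset_Iic_of_mem_edgeList hH hA
  rw [encodeLarge, sysDeg_cons, sysDeg_coe]
  rcases lt_trichotomy v (numVertices H + 1) with hv | rfl | hv
  · rw [if_neg (by simpa using hv.ne), countP_mem_stack_of_le hL le_self_add (by omega),
      countP_edgeList hA, zero_add]
    exact (card_filter_toFinset_le_sysDeg H v).trans (le_max_right _ _)
  · rw [if_pos (mem_singleton_self _), List.countP_eq_zero.2]
    · exact le_max_left _ _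
    · intro X hX hvX
      have := subset_of_mem_stack hL le_self_add hX (by simpa using hvX)
      simp only [mem_union, mem_Iic, mem_Ioc] at this
      omega
  · rw [if_neg (by simpa using hv.ne'), zero_add]
    exact (countP_mem_stack_le_one hL le_self_add hv).trans (le_max_left _ _)

lemma nodup_encodeLarge (hA : A ∈ H) : (encodeLarge H A).Nodup := by
  have hL := subset_Iic_of_mem_edgeList hH hA
  refine Multiset.nodup_cons.2 ⟨fun hX => ?_, nodup_stack hL le_self_add (nodup_edgeList H A)⟩
  have := subset_of_mem_stack hL le_self_add hX (mem_singleton_self _)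
  simp only [mem_union, mem_Iic, mem_Ioc] at this
  omega

lemma isGreatest_encodeLarge (hA : A ∈ H) :
    IsGreatest {t | {t} ∈ encodeLarge H A} (numVertices H + 1) := by
  refine ⟨show _ ∈ encodeLarge H A from Multiset.mem_cons_self _ _, fun u hu => ?_⟩
  rw [Set.mem_ofPred_eq] at hu
  rcases Multiset.mem_cons.1 hu with h | hu
  · exact (singleton_inj.1 h).le
  · have hE := inter_Iic_mem_of_mem_stack (subset_Iic_of_mem_edgeList hH hA) le_self_add hu
    obtain ⟨x, hx⟩ := hH.1 _ ((mem_edgeList hA).1 hE)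
    simp only [mem_inter, mem_singleton, mem_Iic] at hx
    omega

lemma three_le_card_of_mem_encodeLarge (hA : IsLargeRepeat H A) {X : Finset ℕ}
    (hX : X ∈ encodeLarge H A) (hM : numVertices (encodeLarge H A) ∈ X) : 3 ≤ #X := by
  have hfresh := hA.one_le_freshCount
  have hlast := hA.card_add_freshCount hA.mem
  rw [if_pos rfl] at hlast
  rw [numVertices_encodeLarge hH hA.mem] at hM
  rcases Multiset.mem_cons.1 hX with rfl | hX
  · simp only [mem_singleton] at hM
    omega
  rw [Multiset.mem_coe, stack_edgeList, List.mem_append, List.mem_singleton] at hX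
  rcases hX with hX | rfl
  · have hL : ∀ E ∈ (H.toFinset.erase A).toList, E ⊆ Iic (numVertices H) :=
      fun E hE => hH.subset_Iic (Multiset.mem_toFinset.1 (mem_of_mem_erase (mem_toList.1 hE)))
    have := subset_of_mem_stack hL le_self_add hX hM
    simp only [mem_union, mem_Iic, mem_Ioc] at this
    omega
  · rw [card_union_Ioc (hH.subset_Iic hA.mem) (by omega)]
    have := hA.2
    omega

lemma decodeEdge_union_Ioc {E : Finset ℕ} (hE : E ∈ H) {M a k : ℕ} (ha : numVertices H ≤ a)
    (hk : #E + k + (if M ∈ E ∪ Ioc a (a + k) then 1 else 0) = H.count E * #E) :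
    decodeEdge M (numVertices H) (E ∪ Ioc a (a + k)) = Multiset.replicate (H.count E) E := by
  rw [decodeEdge, union_Ioc_inter_Iic (hH.subset_Iic hE) ha,
    card_union_Ioc (hH.subset_Iic hE) ha, hk, Nat.mul_div_cancel _ (card_pos.2 (hH.1 E hE))]

lemma map_decodeEdge_stack (hA : IsLargeRepeat H A) :
    (stack (freshCount H A) (edgeList H A) (numVertices H + 1)).map
      (decodeEdge (numVertices (encodeLarge H A)) (numVertices H)) =
      (edgeList H A).map fun E => Multiset.replicate (H.count E) E := by
  have hM := numVertices_encodeLarge hH hA.mem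
  have hfresh := hA.one_le_freshCount
  rw [stack_edgeList, List.map_append, edgeList, List.map_append, List.map_singleton,
    List.map_singleton, decodeEdge_union_Ioc hH hA.mem (by omega)]
  · refine congrArg (· ++ _) (map_stack _ _ fun E hE a ha ha' => ?_)
    obtain ⟨hEA, hE⟩ : E ≠ A ∧ E ∈ H := by simpa using hE
    refine decodeEdge_union_Ioc hH hE (by omega) ?_
    rw [if_neg, ← hA.card_add_freshCount hE, if_neg hEA]
    simp only [mem_union, mem_Ioc, hM, not_or]
    exact ⟨fun h => by have := mem_Iic.1 (hH.subset_Iic hE h); omega, by omega⟩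
  · rw [if_pos (by simp only [mem_union, mem_Ioc, hM]; omega)]
    simpa using hA.card_add_freshCount hA.mem

lemma decodeLarge_encodeLarge (hA : IsLargeRepeat H A) :
    decodeLarge (encodeLarge H A) (numVertices H) = H := by
  have hL := subset_Iic_of_mem_edgeList hH hA.mem
  have hfilter : (encodeLarge H A).filter (fun X => (X ∩ Iic (numVertices H)).Nonempty) =
      stack (freshCount H A) (edgeList H A) (numVertices H + 1) := by
    rw [encodeLarge, Multiset.filter_cons_of_neg _ (by simp), Multiset.filter_eq_self]
    exact fun X hX => hH.1 _ ((mem_edgeList hA.mem).1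
      (inter_Iic_mem_of_mem_stack hL le_self_add hX))
  rw [decodeLarge, hfilter]
  calc _ = ((edgeList H A).map fun E => Multiset.replicate (H.count E) E).sum := by
        rw [← map_decodeEdge_stack hH hA]
        rfl
    _ = ∑ E ∈ H.toFinset, H.count E • {E} := by
        simp only [sum_map_edgeList hA.mem, Multiset.nsmul_singleton]
    _ = H := Multiset.toFinset_sum_count_nsmul_eq H

end LargeRepeat

section Singletons

def singletons (W : Finset ℕ) : Multiset (Finset ℕ) := W.val.map singleton

variable {W : Finset ℕ}

lemma mem_singletons {X : Finset ℕ} : X ∈ singletons W ↔ ∃ v ∈ W, {v} = X :=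
  Multiset.mem_map

lemma nodup_singletons (W : Finset ℕ) : (singletons W).Nodup :=
  W.nodup.map singleton_injective

lemma count_singletons (v : ℕ) : (singletons W).count {v} = if v ∈ W then 1 else 0 := by
  rw [singletons, Multiset.count_map_eq_count' _ _ singleton_injective,
    Multiset.count_eq_of_nodup W.nodup]
  rfl

lemma sup_singletons (W : Finset ℕ) : (singletons W).sup = W :=
  sup_singleton_eq_self W

@[simp] lemma sysWeight_singletons (W : Finset ℕ) : sysWeight (singletons W) = #W := by
  simp [sysWeight, singletons, Multiset.map_map]

@[simp] lemma sysDeg_singletons (W : Finset ℕ) (v : ℕ) :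
    sysDeg (singletons W) v = if v ∈ W then 1 else 0 := by
  simp [sysDeg, singletons, Multiset.filter_map, ← Multiset.count_eq_card_filter_eq,
    Multiset.count_eq_of_nodup W.nodup]

end Singletons

section SmallRepeats

def doubledVertices (H : Multiset (Finset ℕ)) : Finset ℕ :=
  H.sup.filter fun v => 2 ≤ H.count {v}

def encodeSmall (H : Multiset (Finset ℕ)) : Multiset (Finset ℕ) :=
  H - 2 • singletons (doubledVertices H) +
    (insert (numVertices H + 1) (doubledVertices H) ::ₘ
      singletons (Ioc (numVertices H + 1) (numVertices H + #(doubledVertices H))))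

def decodeSmall (G : Multiset (Finset ℕ)) (m : ℕ) : Multiset (Finset ℕ) :=
  G.filter (· ⊆ Iic m) + 2 • (G.filter (m + 1 ∈ ·)).bind fun X => singletons (X ∩ Iic m)

variable {H : Multiset (Finset ℕ)}

lemma two_nsmul_singletons_le (H : Multiset (Finset ℕ)) :
    2 • singletons (doubledVertices H) ≤ H := by
  refine Multiset.le_iff_count.2 fun E => ?_
  rw [Multiset.count_nsmul]
  by_cases hE : ∃ v ∈ doubledVertices H, {v} = E
  · obtain ⟨v, hv, rfl⟩ := hE
    rw [count_singletons, if_pos hv]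
    simpa using (mem_filter.1 hv).2
  · simp [Multiset.count_eq_zero.2 (mt mem_singletons.1 hE)]

lemma sup_sub_two_nsmul_singletons_union (H : Multiset (Finset ℕ)) :
    (H - 2 • singletons (doubledVertices H)).sup ∪ doubledVertices H = H.sup := by
  conv_rhs => rw [← Multiset.sub_add_cancel (two_nsmul_singletons_le H)]
  rw [Multiset.sup_add, two_nsmul, Multiset.sup_add, sup_singletons, sup_idem]
  rfl

variable (hH : IsNormalized H)
include hH

lemma doubledVertices_subset_Iic : doubledVertices H ⊆ Iic (numVertices H) :=
  (filter_subset _ _).trans (hH.sup_eq ▸ Icc_subset_Iic_self)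

lemma add_one_notMem_doubledVertices : numVertices H + 1 ∉ doubledVertices H := fun h => by
  simpa using doubledVertices_subset_Iic hH h

lemma exists_eq_singleton_of_two_le_count (hsmall : ∀ A, ¬IsLargeRepeat H A) {E : Finset ℕ}
    (h : 2 ≤ H.count E) : ∃ v ∈ doubledVertices H, E = {v} ∧ H.count E ≤ 3 := by
  have hE : E ∈ H := Multiset.count_pos.1 (by omega)
  have hlt : H.count E * #E < 4 := not_le.1 fun h4 => hsmall E ⟨h, h4⟩
  have hcard : #E = 1 := by
    have := card_pos.2 (hH.1 E hE)
    have : 2 * #E ≤ H.count E * #E := Nat.mul_le_mul_right _ h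
    omega
  obtain ⟨v, rfl⟩ := card_eq_one.1 hcard
  refine ⟨v, mem_filter.2 ⟨Multiset.le_sup hE (mem_singleton_self v), h⟩, rfl, ?_⟩
  simp only [card_singleton, mul_one] at hlt
  omega

lemma nodup_sub_two_nsmul_singletons (hsmall : ∀ A, ¬IsLargeRepeat H A) :
    (H - 2 • singletons (doubledVertices H)).Nodup := by
  refine Multiset.nodup_iff_count_le_one.2 fun E => ?_
  rw [Multiset.count_sub, Multiset.count_nsmul]
  by_cases h : 2 ≤ H.count E
  · obtain ⟨v, hv, rfl, h3⟩ := exists_eq_singleton_of_two_le_count hH hsmall h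
    rw [count_singletons, if_pos hv]
    omega
  · omega

lemma doubledVertices_nonempty (hsmall : ∀ A, ¬IsLargeRepeat H A) (hns : ¬H.Nodup) :
    (doubledVertices H).Nonempty := by
  obtain ⟨E, hE⟩ := not_forall.1 (mt Multiset.nodup_iff_count_le_one.2 hns)
  obtain ⟨v, hv, -⟩ := exists_eq_singleton_of_two_le_count hH hsmall (not_le.1 hE)
  exact ⟨v, hv⟩

lemma subset_Iic_of_mem_sub {E : Finset ℕ} (hE : E ∈ H - 2 • singletons (doubledVertices H)) :
    E ⊆ Iic (numVertices H) :=
  hH.subset_Iic (Multiset.mem_of_le (Multiset.sub_le_self _ _) hE)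

lemma sysDeg_encodeSmall_le (v : ℕ) : sysDeg (encodeSmall H) v ≤ max 1 (sysDeg H v) := by
  have hdeg : sysDeg H v = sysDeg (H - 2 • singletons (doubledVertices H)) v +
      2 * if v ∈ doubledVertices H then 1 else 0 := by
    conv_lhs => rw [← Multiset.sub_add_cancel (two_nsmul_singletons_le H)]
    simp
  rw [encodeSmall, sysDeg_add, sysDeg_cons, sysDeg_singletons, hdeg]
  simp only [mem_insert, mem_Ioc]
  by_cases hv : v ≤ numVertices H
  · simp only [show v ≠ numVertices H + 1 by omega, false_or,
      show ¬numVertices H + 1 < v by omega, false_and, if_false, add_zero]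
    split_ifs <;> omega
  · have hV : v ∉ doubledVertices H := fun h => by
      simpa using (mem_Iic.1 (doubledVertices_subset_Iic hH h)).trans_lt (not_le.1 hv)
    rw [sysDeg_eq_zero fun E hE hvE => hv (mem_Iic.1 (subset_Iic_of_mem_sub hH hE hvE))]
    simp only [hV, or_false, if_false]
    split_ifs <;> omega

lemma nodup_encodeSmall (hsmall : ∀ A, ¬IsLargeRepeat H A) : (encodeSmall H).Nodup := by
  refine Multiset.nodup_add.2 ⟨nodup_sub_two_nsmul_singletons hH hsmall,
    Multiset.nodup_cons.2 ⟨fun h => ?_, nodup_singletons _⟩, Multiset.disjoint_left.2 ?_⟩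
  · obtain ⟨u, hu, hX⟩ := mem_singletons.1 h
    have := hX ▸ mem_singleton_self u
    simp only [mem_insert, mem_Ioc] at this hu
    rcases this with h | h
    · omega
    · simpa using (mem_Iic.1 (doubledVertices_subset_Iic hH h)).trans_lt (by omega : _ < u)
  · intro X hK hX
    rcases Multiset.mem_cons.1 hX with rfl | hX
    · simpa using subset_Iic_of_mem_sub hH hK (mem_insert_self _ _)
    · obtain ⟨u, hu, rfl⟩ := mem_singletons.1 hX
      have := mem_Iic.1 (subset_Iic_of_mem_sub hH hK (mem_singleton_self u))
      simp only [mem_Ioc] at hu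
      omega

lemma decodeSmall_encodeSmall : decodeSmall (encodeSmall H) (numVertices H) = H := by
  have hV := doubledVertices_subset_Iic hH
  have hold : (encodeSmall H).filter (· ⊆ Iic (numVertices H)) =
      H - 2 • singletons (doubledVertices H) := by
    rw [encodeSmall, Multiset.filter_add,
      Multiset.filter_eq_self.2 fun E hE => subset_Iic_of_mem_sub hH hE,
      Multiset.filter_eq_nil.2, add_zero]
    intro X hX hXm
    rcases Multiset.mem_cons.1 hX with rfl | hX
    · simpa using hXm (mem_insert_self _ _)
    · obtain ⟨u, hu, rfl⟩ := mem_singletons.1 hX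
      have := hXm (mem_singleton_self u)
      simp only [mem_Ioc, mem_Iic] at this hu
      omega
  have hmarker : (encodeSmall H).filter (numVertices H + 1 ∈ ·) =
      {insert (numVertices H + 1) (doubledVertices H)} := by
    rw [encodeSmall, Multiset.filter_add,
      Multiset.filter_cons_of_pos (p := (numVertices H + 1 ∈ ·)) _ (mem_insert_self _ _),
      Multiset.filter_eq_nil.2, Multiset.filter_eq_nil.2, zero_add, Multiset.cons_zero]
    · intro X hX hmX
      obtain ⟨u, hu, rfl⟩ := mem_singletons.1 hX
      simp only [mem_Ioc, mem_singleton] at hu hmX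
      omega
    · intro X hX hmX
      simpa using subset_Iic_of_mem_sub hH hX hmX
  rw [decodeSmall, hold, hmarker, Multiset.singleton_bind, insert_inter_of_notMem (by simp),
    inter_eq_left.2 hV, Multiset.sub_add_cancel (two_nsmul_singletons_le H)]

variable (hV : (doubledVertices H).Nonempty)
include hV

lemma sup_encodeSmall :
    (encodeSmall H).sup = Icc 1 (numVertices H + #(doubledVertices H)) := by
  have hsup := sup_sub_two_nsmul_singletons_union H
  rw [hH.sup_eq] at hsup
  have := card_pos.2 hV
  rw [encodeSmall, Multiset.sup_add, Multiset.sup_cons, sup_singletons]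
  ext x
  have hx := congrArg (x ∈ ·) hsup
  simp only [eq_iff_iff, mem_union, mem_Icc] at hx
  simp only [sup_eq_union, mem_union, mem_insert, mem_Ioc, mem_Icc]
  grind

lemma isNormalized_encodeSmall : IsNormalized (encodeSmall H) := by
  refine ⟨fun X hX => ?_, _, sup_encodeSmall hH hV⟩
  rcases Multiset.mem_add.1 hX with hX | hX
  · exact hH.1 X (Multiset.mem_of_le (Multiset.sub_le_self _ _) hX)
  rcases Multiset.mem_cons.1 hX with rfl | hX
  · exact insert_nonempty _ _
  · obtain ⟨v, -, rfl⟩ := mem_singletons.1 hX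
    exact singleton_nonempty v

lemma sysWeight_encodeSmall : sysWeight (encodeSmall H) = sysWeight H := by
  have := card_pos.2 hV
  conv_rhs => rw [← Multiset.sub_add_cancel (two_nsmul_singletons_le H)]
  rw [encodeSmall, sysWeight_add, sysWeight_add, sysWeight_cons, sysWeight_singletons,
    sysWeight_nsmul, sysWeight_singletons,
    card_insert_of_notMem (add_one_notMem_doubledVertices hH), Nat.card_Ioc]
  omega

lemma numVertices_encodeSmall :
    numVertices (encodeSmall H) = numVertices H + #(doubledVertices H) :=
  numVertices_eq_of_sup_eq (sup_encodeSmall hH hV)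

lemma isGreatest_encodeSmall : IsGreatest {t | t ≤ numVertices (encodeSmall H) ∧
    {t} ∉ encodeSmall H} (numVertices H + 1) := by
  have hr := card_pos.2 hV
  rw [numVertices_encodeSmall hH hV]
  refine ⟨⟨by omega, fun h => ?_⟩, fun t ⟨htM, ht⟩ => not_lt.1 fun hlt => ht ?_⟩
  · rcases Multiset.mem_add.1 h with h | h
    · simpa using subset_Iic_of_mem_sub hH h (mem_singleton_self _)
    rcases Multiset.mem_cons.1 h with h | h
    · have := congrArg card h
      rw [card_singleton, card_insert_of_notMem (add_one_notMem_doubledVertices hH)] at this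
      omega
    · obtain ⟨u, hu, hu'⟩ := mem_singletons.1 h
      simp only [singleton_inj, mem_Ioc] at hu hu'
      omega
  · exact Multiset.mem_add.2 (Or.inr (Multiset.mem_cons_of_mem
      (mem_singletons.2 ⟨t, mem_Ioc.2 ⟨hlt, htM⟩, rfl⟩)))

lemma exists_card_le_two_encodeSmall :
    ∃ X ∈ encodeSmall H, numVertices (encodeSmall H) ∈ X ∧ #X ≤ 2 := by
  have hr := card_pos.2 hV
  rw [numVertices_encodeSmall hH hV]
  by_cases h1 : #(doubledVertices H) = 1
  · refine ⟨_, Multiset.mem_add.2 (Or.inr (Multiset.mem_cons_self _ _)), by simp [h1], ?_⟩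
    rw [card_insert_of_notMem (add_one_notMem_doubledVertices hH), h1]
  · refine ⟨_, Multiset.mem_add.2 (Or.inr (Multiset.mem_cons_of_mem
      (mem_singletons.2 ⟨_, mem_Ioc.2 ⟨?_, le_rfl⟩, rfl⟩))), mem_singleton_self _, by simp⟩
    omega

end SmallRepeats

section Encoding

open Classical in
noncomputable def encode (H : Multiset (Finset ℕ)) : Multiset (Finset ℕ) :=
  if h : ∃ A, IsLargeRepeat H A then encodeLarge H h.choose else encodeSmall H

open Classical in
noncomputable def decode (G : Multiset (Finset ℕ)) : Multiset (Finset ℕ) :=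
  if ∃ X ∈ G, numVertices G ∈ X ∧ #X ≤ 2 then
    decodeSmall G (sSup {t | t ≤ numVertices G ∧ {t} ∉ G} - 1)
  else decodeLarge G (sSup {t | {t} ∈ G} - 1)

variable {H : Multiset (Finset ℕ)} (hH : IsNormalized H)
include hH

lemma nodup_encode : (encode H).Nodup := by
  unfold encode
  split_ifs with h
  · exact nodup_encodeLarge hH h.choose_spec.mem
  · exact nodup_encodeSmall hH (not_exists.1 h)

lemma sysDeg_encode_le (v : ℕ) : sysDeg (encode H) v ≤ max 1 (sysDeg H v) := by
  unfold encode
  split_ifs with h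
  · exact sysDeg_encodeLarge_le hH h.choose_spec.mem v
  · exact sysDeg_encodeSmall_le hH v

variable (hns : ¬H.Nodup)
include hns

lemma isNormalized_encode : IsNormalized (encode H) := by
  unfold encode
  split_ifs with h
  · exact isNormalized_encodeLarge hH h.choose_spec.mem
  · exact isNormalized_encodeSmall hH (doubledVertices_nonempty hH (not_exists.1 h) hns)

lemma sysWeight_encode : sysWeight (encode H) = sysWeight H := by
  unfold encode
  split_ifs with h
  · exact sysWeight_encodeLarge hH h.choose_spec
  · exact sysWeight_encodeSmall hH (doubledVertices_nonempty hH (not_exists.1 h) hns)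

lemma decode_encode : decode (encode H) = H := by
  unfold encode
  split_ifs with h
  · have hA := h.choose_spec
    rw [decode, if_neg fun ⟨X, hX, hM, h2⟩ => by
        have := three_le_card_of_mem_encodeLarge hH hA hX hM
        omega,
      (isGreatest_encodeLarge hH hA.mem).csSup_eq, Nat.add_sub_cancel,
      decodeLarge_encodeLarge hH hA]
  · have hV := doubledVertices_nonempty hH (not_exists.1 h) hns
    rw [decode, if_pos (exists_card_le_two_encodeSmall hH hV),
      (isGreatest_encodeSmall hH hV).csSup_eq, Nat.add_sub_cancel, decodeSmall_encodeSmall hH]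

end Encoding

theorem hkp_le_hkpp_le_two_hkp_general (k n : ℕ) :
    hkp k n ≤ hkpp k n ∧ hkpp k n ≤ 2 * hkp k n := by
  let S := {H : Multiset (Finset ℕ) | IsNormalized H ∧ sysWeight H = n ∧ ∀ v, sysDeg H v ≤ k}
  have hkpp_eq : hkpp k n = S.ncard := rfl
  have hkp_eq : hkp k n = {H ∈ S | H.Nodup}.ncard := by
    have : {H ∈ S | H.Nodup} =
        {H | IsNormalized H ∧ sysWeight H = n ∧ (∀ v, sysDeg H v ≤ k) ∧ H.Nodup} := by
      ext H
      simp only [S, Set.mem_ofPred_eq, and_assoc]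
    rw [this]
    rfl
  have hS : S.Finite := (finite_setOf_isNormalized n).subset fun H hH => ⟨hH.1, hH.2.1⟩
  rw [hkpp_eq, hkp_eq]
  refine ⟨Set.ncard_le_ncard (Set.sep_subset _ _) hS, ?_⟩
  refine ncard_le_two_mul_ncard_of_injOn hS encode (fun H ⟨hH, hw, hk⟩ hns => ?_) ?_
  · obtain ⟨u, hu⟩ := exists_two_le_sysDeg_of_not_nodup hH hns
    refine ⟨⟨isNormalized_encode hH hns, (sysWeight_encode hH hns).trans hw, fun v => ?_⟩,
      nodup_encode hH⟩
    exact (sysDeg_encode_le hH v).trans (max_le ((hk u).trans' (by omega)) (hk v))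
  · intro H₁ h₁ H₂ h₂ h
    rw [← decode_encode h₁.1.1 h₁.2, h, decode_encode h₂.1.1 h₂.2]

/-- For every `k, n ∈ ℕ = {1,2,…}`, `h'_{k,n} ≤ h''_{k,n} ≤ 2·h'_{k,n}`. -/
theorem hkp_le_hkpp_le_two_hkp (k n : ℕ) (hk : 1 ≤ k) (hn : 1 ≤ n) :
    hkp k n ≤ hkpp k n ∧ hkpp k n ≤ 2 * hkp k n :=
  hkp_le_hkpp_le_two_hkp_general k n
end

section
/- Let m, n ∈ ℕ. If m > n, then there is exactly one m-sparse partition of {1,…,n} (the partition into singletons). If m ≤ n, then the number b_{n,m} of m-sparse partitions of {1,…,n} equals the Bell number b_{n−m+1}. -/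
/-- `bsparse n m` = the number of `m`-sparse partitions of `{1,…,n}`: partitions
(equivalence relations on an `n`-set) in which any two distinct elements `x < y`
of the same block satisfy `y - x ≥ m`. -/
noncomputable def bsparse (n m : ℕ) : ℕ :=
  Nat.card {P : Setoid (Fin n) // ∀ x y : Fin n, P x y → x < y → m ≤ (y : ℕ) - (x : ℕ)}

namespace SparseAux

variable {n : ℕ}

/-- strong induction for Fin -/
lemma finStrongInd {C : Fin n → Prop} (h : ∀ y : Fin n, (∀ x, x < y → C x) → C y) :
    ∀ y, C y := by
  have : ∀ v (hv : v < n), C ⟨v, hv⟩ := by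
    intro v
    induction v using Nat.strong_induction_on with
    | _ v ih =>
      intro hv
      exact h ⟨v, hv⟩ (fun x hx => by
        have := ih x.val hx x.isLt
        simpa using this)
  intro y; have := this y.val y.isLt; simpa using this

def Valid (m : ℕ) (f : Fin n → Option (Fin n)) : Prop :=
  (∀ y x, f y = some x → x < y ∧ m ≤ (y : ℕ) - (x : ℕ)) ∧
  (∀ y₁ y₂ x, f y₁ = some x → f y₂ = some x → y₁ = y₂)

def root (f : Fin n → Option (Fin n)) (hf : ∀ y x, f y = some x → x < y) (y : Fin n) :
    Fin n :=
  match h : f y with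
  | none => y
  | some x => root f hf x
  termination_by y.val
  decreasing_by exact hf y x h

variable {f : Fin n → Option (Fin n)} {hf : ∀ y x, f y = some x → x < y}

lemma root_none {y : Fin n} (h : f y = none) : root f hf y = y := by
  rw [root]; split <;> simp_all

lemma root_some {y x : Fin n} (h : f y = some x) : root f hf y = root f hf x := by
  rw [root]; split <;> simp_all

lemma root_le : ∀ y : Fin n, root f hf y ≤ y := by
  apply finStrongInd
  intro y ih
  cases h : f y with
  | none => rw [root_none (hf := hf) h]
  | some x =>
    rw [root_some (hf := hf) h]
    exact le_of_lt (lt_of_le_of_lt (ih x (hf y x h)) (hf y x h))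

/-- the step relation: descending one arc -/
def Step (f : Fin n → Option (Fin n)) (a b : Fin n) : Prop := f a = some b

lemma R_root : ∀ y : Fin n, Relation.ReflTransGen (Step f) y (root f hf y) := by
  apply finStrongInd
  intro y ih
  cases h : f y with
  | none => rw [root_none (hf := hf) h]
  | some x =>
    rw [root_some (hf := hf) h]
    exact Relation.ReflTransGen.head h (ih x (hf y x h))

lemma R_le (hf : ∀ y x, f y = some x → x < y) {a b : Fin n}
    (h : Relation.ReflTransGen (Step f) a b) : b ≤ a := by
  induction h with
  | refl => exact le_refl _
  | tail hR hs ih => exact le_trans (le_of_lt (hf _ _ hs)) ih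

lemma root_eq_of_R {a b : Fin n} (h : Relation.ReflTransGen (Step f) a b) :
    root f hf a = root f hf b := by
  induction h with
  | refl => rfl
  | tail hR hs ih => rw [ih, root_some (hf := hf) hs]

lemma f_root_none : ∀ y : Fin n, f (root f hf y) = none := by
  apply finStrongInd
  intro y ih
  cases h : f y with
  | none => rw [root_none (hf := hf) h]; exact h
  | some x => rw [root_some (hf := hf) h]; exact ih x (hf y x h)

/-- key structural lemma: if roots agree and `a ≤ b`, then `b` descends to `a`. -/
lemma compLe {m : ℕ} {f : Fin n → Option (Fin n)} (hv : Valid m f) :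
    ∀ b a : Fin n,
      root f (fun y x h => (hv.1 y x h).1) a = root f (fun y x h => (hv.1 y x h).1) b →
      a ≤ b → Relation.ReflTransGen (Step f) b a := by
  have hf : ∀ y x, f y = some x → x < y := fun y x h => (hv.1 y x h).1
  apply finStrongInd
  intro b ih a hroot hab
  rcases eq_or_lt_of_le hab with rfl | hlt
  · exact Relation.ReflTransGen.refl
  · cases h : f b with
    | none =>
      exfalso
      have h1 : root f hf b = b := root_none (hf := hf) h
      have h2 : root f hf a ≤ a := root_le a
      rw [hroot, h1] at h2
      exact absurd (lt_of_le_of_lt h2 hlt) (lt_irrefl b)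
    | some x =>
      have hxb : x < b := hf b x h
      have hrx : root f hf x = root f hf b := (root_some (hf := hf) h).symm
      rcases le_or_gt a x with hax | hxa
      · exact Relation.ReflTransGen.head h (ih x hxb a (by rw [hroot, ← hrx]) hax)
      · exfalso
        have hRax : Relation.ReflTransGen (Step f) a x :=
          ih a hlt x (by rw [hrx, ← hroot]) (le_of_lt hxa)
        rcases Relation.ReflTransGen.cases_tail hRax with heq | ⟨u, hRau, hu⟩
        · exact (ne_of_lt hxa) heq
        · exact absurd hlt (not_lt_of_ge (hv.2 u b x hu h ▸ R_le hf hRau))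




def Sparse (m : ℕ) (P : Setoid (Fin n)) : Prop :=
  ∀ x y : Fin n, P x y → x < y → m ≤ (y : ℕ) - (x : ℕ)

open Classical in
noncomputable def arcs (P : Setoid (Fin n)) (y : Fin n) : Option (Fin n) :=
  if h : ∃ x, x < y ∧ P x y ∧ ∀ z, z < y → P z y → z ≤ x then some h.choose else none

lemma arcs_spec {P : Setoid (Fin n)} {y x : Fin n} (h : arcs P y = some x) :
    x < y ∧ P x y ∧ ∀ z, z < y → P z y → z ≤ x := by
  unfold arcs at h
  split at h
  · rename_i hex
    cases h
    exact hex.choose_spec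
  · cases h

lemma exists_max {P : Setoid (Fin n)} {y : Fin n} (h : ∃ x, x < y ∧ P x y) :
    ∃ x, x < y ∧ P x y ∧ ∀ z, z < y → P z y → z ≤ x := by
  classical
  obtain ⟨x₀, hx₀⟩ := h
  set s := Finset.univ.filter (fun x => x < y ∧ P x y) with hs
  have hne : s.Nonempty := ⟨x₀, by simp [hs, hx₀.1, hx₀.2]⟩
  have hmem := Finset.max'_mem s hne
  have hmem' : s.max' hne < y ∧ P (s.max' hne) y := by
    have := Finset.mem_filter.1 hmem
    exact this.2
  refine ⟨s.max' hne, hmem'.1, hmem'.2, fun z hz hPz => ?_⟩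
  exact Finset.le_max' s z (by simp [hs, hz, hPz])

lemma arcs_none_iff {P : Setoid (Fin n)} {y : Fin n} :
    arcs P y = none ↔ ¬ ∃ x, x < y ∧ P x y := by
  unfold arcs
  split
  · rename_i hex
    simp only [reduceCtorEq, false_iff, not_not]
    exact ⟨hex.choose, hex.choose_spec.1, hex.choose_spec.2.1⟩
  · rename_i hex
    simp only [true_iff]
    intro h
    exact hex (exists_max h)

lemma arcs_eq_some {P : Setoid (Fin n)} {y x : Fin n} (h1 : x < y) (h2 : P x y)
    (h3 : ∀ z, z < y → P z y → z ≤ x) : arcs P y = some x := by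
  unfold arcs
  split
  · rename_i hex
    have hs := hex.choose_spec
    have : hex.choose = x :=
      le_antisymm (h3 _ hs.1 hs.2.1) (hs.2.2 x h1 h2)
    rw [this]
  · rename_i hex
    exact absurd ⟨x, h1, h2, h3⟩ hex


-- validity of arcs
lemma arcs_valid {m : ℕ} {P : Setoid (Fin n)} (hP : Sparse m P) : Valid m (arcs P) := by
  constructor
  · intro y x h
    obtain ⟨h1, h2, _⟩ := arcs_spec h
    exact ⟨h1, hP x y h2 h1⟩
  · intro y₁ y₂ x h₁ h₂
    obtain ⟨ha1, ha2, ha3⟩ := arcs_spec h₁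
    obtain ⟨hb1, hb2, hb3⟩ := arcs_spec h₂
    by_contra hne
    rcases lt_or_gt_of_ne hne with hlt | hlt
    · have : P y₁ y₂ := P.trans (P.symm ha2) hb2
      exact absurd ha1 (not_lt_of_ge (hb3 y₁ hlt this))
    · have : P y₂ y₁ := P.trans (P.symm hb2) ha2
      exact absurd hb1 (not_lt_of_ge (ha3 y₂ hlt this))

def rootSetoid (f : Fin n → Option (Fin n)) (hf : ∀ y x, f y = some x → x < y) :
    Setoid (Fin n) :=
  ⟨fun a b => root f hf a = root f hf b, ⟨fun _ => rfl, Eq.symm, Eq.trans⟩⟩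

lemma rootSetoid_rel {f : Fin n → Option (Fin n)} {hf : ∀ y x, f y = some x → x < y}
    {a b : Fin n} : rootSetoid f hf a b ↔ root f hf a = root f hf b := Iff.rfl

lemma gap_R {m : ℕ} {f : Fin n → Option (Fin n)} (hv : Valid m f) {a b : Fin n}
    (h : Relation.ReflTransGen (Step f) b a) (hab : a < b) : m ≤ (b : ℕ) - (a : ℕ) := by
  rcases Relation.ReflTransGen.cases_head h with heq | ⟨c, hs, hR⟩
  · exact absurd heq.symm (ne_of_lt hab)
  · have h1 := hv.1 b c hs
    have h2 : a ≤ c := R_le (fun y x h => (hv.1 y x h).1) hR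
    have h3 : (a : ℕ) ≤ c := h2
    have h4 : (c : ℕ) < b := h1.1
    omega

lemma rootSetoid_sparse {m : ℕ} {f : Fin n → Option (Fin n)} (hv : Valid m f) :
    Sparse m (rootSetoid f (fun y x h => (hv.1 y x h).1)) := by
  intro x y hxy hlt
  exact gap_R hv (compLe hv y x hxy (le_of_lt hlt)) hlt

-- Round trip 1: starting from a setoid
lemma rel_root_arcs {P : Setoid (Fin n)} {m : ℕ} (hP : Sparse m P) :
    ∀ y, P y (root (arcs P) (fun y x h => ((arcs_valid hP).1 y x h).1) y) := by
  set hf : ∀ y x, arcs P y = some x → x < y := fun y x h => ((arcs_valid hP).1 y x h).1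
  apply finStrongInd
  intro y ih
  cases h : arcs P y with
  | none => rw [root_none (hf := hf) h]
  | some x =>
    rw [root_some (hf := hf) h]
    obtain ⟨h1, h2, _⟩ := arcs_spec h
    exact P.trans (P.symm h2) (ih x h1)

lemma root_arcs_eq_of_rel {P : Setoid (Fin n)} {m : ℕ} (hP : Sparse m P) :
    ∀ b a : Fin n, a ≤ b → P a b →
      root (arcs P) (fun y x h => ((arcs_valid hP).1 y x h).1) a =
      root (arcs P) (fun y x h => ((arcs_valid hP).1 y x h).1) b := by
  set hf : ∀ y x, arcs P y = some x → x < y := fun y x h => ((arcs_valid hP).1 y x h).1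
  apply finStrongInd
  intro b ih a hab hPab
  rcases eq_or_lt_of_le hab with rfl | hlt
  · rfl
  · cases h : arcs P b with
    | none =>
      exact absurd ⟨a, hlt, hPab⟩ (arcs_none_iff.1 h)
    | some x =>
      obtain ⟨h1, h2, h3⟩ := arcs_spec h
      have hax : a ≤ x := h3 a hlt hPab
      have hPax : P a x := P.trans hPab (P.symm h2)
      rw [root_some (hf := hf) h]
      exact ih x h1 a hax hPax

lemma roundtrip1 {P : Setoid (Fin n)} {m : ℕ} (hP : Sparse m P) :
    rootSetoid (arcs P) (fun y x h => ((arcs_valid hP).1 y x h).1) = P := by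
  set hf : ∀ y x, arcs P y = some x → x < y := fun y x h => ((arcs_valid hP).1 y x h).1
  apply Setoid.ext
  intro a b
  rw [rootSetoid_rel]
  constructor
  · intro h
    exact P.trans (rel_root_arcs hP a) (h ▸ P.symm (rel_root_arcs hP b))
  · intro h
    rcases le_total a b with hab | hab
    · exact root_arcs_eq_of_rel hP b a hab h
    · exact (root_arcs_eq_of_rel hP a b hab (P.symm h)).symm

-- Round trip 2: starting from a valid f
lemma roundtrip2 {m : ℕ} {f : Fin n → Option (Fin n)} (hv : Valid m f) :
    arcs (rootSetoid f (fun y x h => (hv.1 y x h).1)) = f := by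
  set hf : ∀ y x, f y = some x → x < y := fun y x h => (hv.1 y x h).1 with hfdef
  funext y
  cases h : f y with
  | none =>
    rw [arcs_none_iff]
    rintro ⟨x, hxy, hrel⟩
    have hR : Relation.ReflTransGen (Step f) y x :=
      compLe hv y x (rootSetoid_rel.1 hrel) (le_of_lt hxy)
    rcases Relation.ReflTransGen.cases_head hR with heq | ⟨c, hs, _⟩
    · exact (ne_of_lt hxy) heq.symm
    · have hs' : f y = some c := hs
      rw [h] at hs'; cases hs'
  | some x =>
    apply arcs_eq_some (hf y x h)
    · exact rootSetoid_rel.2 (root_some (hf := hf) h).symm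
    · intro z hz hrel
      have hR : Relation.ReflTransGen (Step f) y z :=
        compLe hv y z (rootSetoid_rel.1 hrel) (le_of_lt hz)
      rcases Relation.ReflTransGen.cases_head hR with heq | ⟨c, hs, hR'⟩
      · exact absurd heq.symm (ne_of_lt hz)
      · have : c = x := by
          have hs' : f y = some c := hs
          rw [h] at hs'
          exact (Option.some.inj hs').symm
        subst this
        exact R_le hf hR'

noncomputable def equivE1 (m : ℕ) :
    {P : Setoid (Fin n) // Sparse m P} ≃ {f : Fin n → Option (Fin n) // Valid m f} where
  toFun := fun ⟨P, hP⟩ => ⟨arcs P, arcs_valid hP⟩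
  invFun := fun ⟨f, hv⟩ => ⟨rootSetoid f (fun y x h => (hv.1 y x h).1), rootSetoid_sparse hv⟩
  left_inv := fun ⟨P, hP⟩ => Subtype.ext (roundtrip1 hP)
  right_inv := fun ⟨f, hv⟩ => Subtype.ext (roundtrip2 hv)


-- small values are unmatched
lemma f_none_of_small {m : ℕ} {f : Fin n → Option (Fin n)} (hv : Valid m f) {y : Fin n}
    (hy : (y : ℕ) < m) : f y = none := by
  cases h : f y with
  | none => rfl
  | some x =>
    obtain ⟨h1, h2⟩ := hv.1 y x h
    exact absurd h2 (by omega)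

section Shift

variable {m : ℕ} (hm : 1 ≤ m) (hmn : m ≤ n)

def fwd (f : Fin n → Option (Fin n)) (y' : Fin (n - m + 1)) : Option (Fin (n - m + 1)) :=
  (f ⟨y'.val + (m - 1), by have := y'.isLt; omega⟩).bind
    (fun x => if hx : x.val < n - m + 1 then some ⟨x.val, hx⟩ else none)

def bwd (g : Fin (n - m + 1) → Option (Fin (n - m + 1))) (y : Fin n) : Option (Fin n) :=
  (g ⟨y.val - (m - 1), by have := y.isLt; omega⟩).map (Fin.castLE (by omega))

lemma fwd_valid {f : Fin n → Option (Fin n)} (hv : Valid m f) : Valid 1 (fwd hm hmn f) := by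
  constructor
  · rintro y' x' h
    unfold fwd at h
    cases hys : f ⟨y'.val + (m - 1), by have := y'.isLt; omega⟩ with
    | none => rw [hys] at h; cases h
    | some x =>
      rw [hys] at h
      obtain ⟨h1, h2⟩ := hv.1 _ x hys
      have h2' : m ≤ (y'.val + (m - 1)) - (x : ℕ) := h2
      have h1' : (x : ℕ) < y'.val + (m - 1) := h1
      have hxval : (x : ℕ) + m ≤ y'.val + (m - 1) := by omega
      simp only [Option.bind_some] at h
      rw [dif_pos (by omega)] at h
      cases h
      constructor
      · show (x : ℕ) < y'.val
        omega
      · show 1 ≤ (y' : ℕ) - (x : ℕ)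
        omega
  · rintro y₁ y₂ x' h₁ h₂
    unfold fwd at h₁ h₂
    cases hy₁ : f ⟨y₁.val + (m - 1), by have := y₁.isLt; omega⟩ with
    | none => rw [hy₁] at h₁; cases h₁
    | some x₁ =>
      cases hy₂ : f ⟨y₂.val + (m - 1), by have := y₂.isLt; omega⟩ with
      | none => rw [hy₂] at h₂; cases h₂
      | some x₂ =>
        rw [hy₁] at h₁; rw [hy₂] at h₂
        simp only [Option.bind_some] at h₁ h₂
        have hx₁ : (x₁ : ℕ) = x' := by
          by_cases hc : x₁.val < n - m + 1
          · rw [dif_pos hc] at h₁; cases h₁; rfl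
          · rw [dif_neg hc] at h₁; cases h₁
        have hx₂ : (x₂ : ℕ) = x' := by
          by_cases hc : x₂.val < n - m + 1
          · rw [dif_pos hc] at h₂; cases h₂; rfl
          · rw [dif_neg hc] at h₂; cases h₂
        have : x₁ = x₂ := Fin.ext (by rw [hx₁, hx₂])
        subst this
        have := hv.2 _ _ x₁ hy₁ hy₂
        have hval : y₁.val + (m - 1) = y₂.val + (m - 1) := congrArg Fin.val this
        exact Fin.ext (by omega)

lemma bwd_valid {g : Fin (n - m + 1) → Option (Fin (n - m + 1))} (hg : Valid 1 g) :
    Valid m (bwd hm hmn g) := by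
  constructor
  · rintro y x h
    unfold bwd at h
    cases hys : g ⟨y.val - (m - 1), by have := y.isLt; omega⟩ with
    | none => rw [hys] at h; cases h
    | some x'' =>
      rw [hys] at h
      simp only [Option.map_some] at h
      obtain ⟨h1, h2⟩ := hg.1 _ x'' hys
      have h1' : (x'' : ℕ) < y.val - (m - 1) := h1
      have h2' : 1 ≤ (y.val - (m - 1)) - (x'' : ℕ) := h2
      cases h
      constructor
      · show (x'' : ℕ) < (y : ℕ)
        omega
      · show m ≤ (y : ℕ) - (x'' : ℕ)
        omega
  · rintro y₁ y₂ x h₁ h₂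
    unfold bwd at h₁ h₂
    cases hy₁ : g ⟨y₁.val - (m - 1), by have := y₁.isLt; omega⟩ with
    | none => rw [hy₁] at h₁; cases h₁
    | some x₁ =>
      cases hy₂ : g ⟨y₂.val - (m - 1), by have := y₂.isLt; omega⟩ with
      | none => rw [hy₂] at h₂; cases h₂
      | some x₂ =>
        rw [hy₁] at h₁; rw [hy₂] at h₂
        simp only [Option.map_some] at h₁ h₂
        have hx : x₁ = x₂ := by
          have e1 := congrArg Fin.val (Option.some.inj h₁)
          have e2 := congrArg Fin.val (Option.some.inj h₂)
          exact Fin.ext (by simp only [Fin.coe_castLE] at e1 e2; omega)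
        subst hx
        have := hg.2 _ _ x₁ hy₁ hy₂
        have hval : y₁.val - (m - 1) = y₂.val - (m - 1) := congrArg Fin.val this
        have hb₁ : (x₁ : ℕ) < y₁.val - (m - 1) := (hg.1 _ x₁ hy₁).1
        have hb₂ : (x₁ : ℕ) < y₂.val - (m - 1) := (hg.1 _ x₁ hy₂).1
        exact Fin.ext (by omega)

lemma bwd_fwd {f : Fin n → Option (Fin n)} (hv : Valid m f) : bwd hm hmn (fwd hm hmn f) = f := by
  funext y
  unfold bwd fwd
  by_cases hy : m ≤ (y : ℕ)
  · have harg : (⟨(y.val - (m - 1)) + (m - 1), by have := y.isLt; omega⟩ : Fin n) = y :=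
      Fin.ext (by show (y.val - (m - 1)) + (m - 1) = y.val; omega)
    rw [harg]
    cases h : f y with
    | none => simp
    | some x =>
      obtain ⟨h1, h2⟩ := hv.1 y x h
      have h1' : (x : ℕ) < (y : ℕ) := h1
      simp only [Option.bind_some]
      rw [dif_pos (by omega)]
      simp only [Option.map_some]
      congr 1
  · have h0 : f y = none := f_none_of_small hv (by omega)
    have harg : f ⟨(y.val - (m - 1)) + (m - 1), by have := y.isLt; omega⟩ = none :=
      f_none_of_small hv (by show (y.val - (m - 1)) + (m - 1) < m; omega)
    rw [harg, h0]
    simp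

lemma fwd_bwd {g : Fin (n - m + 1) → Option (Fin (n - m + 1))} (hg : Valid 1 g) :
    fwd hm hmn (bwd hm hmn g) = g := by
  funext y'
  unfold fwd bwd
  have harg : (⟨(y'.val + (m - 1)) - (m - 1), by have := (y'.isLt); omega⟩ : Fin (n - m + 1)) = y' :=
    Fin.ext (by show (y'.val + (m - 1)) - (m - 1) = y'.val; omega)
  rw [harg]
  cases h : g y' with
  | none => simp
  | some x'' =>
    simp only [Option.map_some, Option.bind_some]
    rw [dif_pos (by simpa [Fin.coe_castLE] using x''.isLt)]
    congr 1

noncomputable def equivE2 :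
    {f : Fin n → Option (Fin n) // Valid m f} ≃
    {g : Fin (n - m + 1) → Option (Fin (n - m + 1)) // Valid 1 g} where
  toFun := fun ⟨f, hv⟩ => ⟨fwd hm hmn f, fwd_valid hm hmn hv⟩
  invFun := fun ⟨g, hg⟩ => ⟨bwd hm hmn g, bwd_valid hm hmn hg⟩
  left_inv := fun ⟨f, hv⟩ => Subtype.ext (bwd_fwd hm hmn hv)
  right_inv := fun ⟨g, hg⟩ => Subtype.ext (fwd_bwd hm hmn hg)

end Shift

end SparseAux

/-- Let `m, n ∈ ℕ = {1,2,…}`. If `m > n` there is exactly one `m`-sparse partition of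
`{1,…,n}`; if `m ≤ n`, the number of `m`-sparse partitions of `{1,…,n}` equals the
Bell number `b_{n-m+1}`. -/
theorem count_sparse_partitions (m n : ℕ) (hm : 1 ≤ m) (hn : 1 ≤ n) :
    (m > n → bsparse n m = 1) ∧ (m ≤ n → bsparse n m = bell (n - m + 1)) := by
  constructor
  · intro hgt
    unfold bsparse
    haveI : Nonempty
        {P : Setoid (Fin n) // ∀ x y : Fin n, P x y → x < y → m ≤ (y : ℕ) - (x : ℕ)} :=
      ⟨⟨⟨Eq, ⟨fun _ => rfl, Eq.symm, Eq.trans⟩⟩, fun x y hxy hlt => by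
        have hxy' : x = y := hxy
        exact absurd (hxy' ▸ hlt) (lt_irrefl _)⟩⟩
    haveI : Subsingleton
        {P : Setoid (Fin n) // ∀ x y : Fin n, P x y → x < y → m ≤ (y : ℕ) - (x : ℕ)} := by
      constructor
      rintro ⟨P, hP⟩ ⟨Q, hQ⟩
      have key : ∀ (R : Setoid (Fin n)),
          (∀ x y : Fin n, R x y → x < y → m ≤ (y : ℕ) - (x : ℕ)) →
          ∀ a b : Fin n, R a b ↔ a = b := by
        intro R hR a b
        constructor
        · intro h
          rcases lt_trichotomy a b with hlt | heq | hlt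
          · have h1 := hR a b h hlt
            have h2 := Fin.lt_def.mp hlt
            have h3 := b.isLt
            exact absurd h1 (by omega)
          · exact heq
          · have h1 := hR b a (R.symm h) hlt
            have h2 := Fin.lt_def.mp hlt
            have h3 := a.isLt
            exact absurd h1 (by omega)
        · rintro rfl; exact R.refl a
      exact Subtype.ext (Setoid.ext fun a b => (key P hP a b).trans (key Q hQ a b).symm)
    exact Nat.card_unique
  · intro hle
    have e : {P : Setoid (Fin n) // ∀ x y : Fin n, P x y → x < y → m ≤ (y : ℕ) - (x : ℕ)} ≃
        Setoid (Fin (n - m + 1)) :=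
      ((SparseAux.equivE1 m).trans
        ((SparseAux.equivE2 hm hle).trans (SparseAux.equivE1 1).symm)).trans
        (Equiv.subtypeUnivEquiv (fun P x y _ hlt => by
          have := Fin.lt_def.mp hlt; omega))
    unfold bsparse bell
    exact Nat.card_congr e
end

section
/- For every m ≥ 2 and n ≥ 2, the number of m-sparse partitions of {1,…,n} equals the number of (m−1)-sparse partitions of {1,…,n−1}. -/
/-!
A partition of a finite linear order is recorded by its arcs: each element is joined to the next
larger element of its block, if any. The arcs form a partial injection `r` with `r x y → x < y`,
every such relation arises from exactly one partition (its equivalence closure), and the partition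
is `m`-sparse iff every arc has length at least `m`. Replacing each arc `(x, y)` by `(x, y - 1)`
then matches arc diagrams on `{1,…,n}` with arcs of length `≥ m` and arc diagrams on
`{1,…,n-1}` with arcs of length `≥ m - 1`; since `m - 1 ≥ 1`, the shortened arcs still go upwards.
-/

open Relation

variable {α : Type*}

theorem Relation.ReflTransGen.total_of_left_unique {r : α → α → Prop} {a b c : α}
    (U : Relator.LeftUnique r) (ac : ReflTransGen r a c) (bc : ReflTransGen r b c) :
    ReflTransGen r a b ∨ ReflTransGen r b a :=
  ((reflTransGen_swap.2 ac).total_of_right_unique U.flip (reflTransGen_swap.2 bc)).symm.imp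
    reflTransGen_swap.1 reflTransGen_swap.1

theorem Relator.BiUnique.eqvGen_iff {r : α → α → Prop} (hr : Relator.BiUnique r) {x y : α} :
    EqvGen r x y ↔ ReflTransGen r x y ∨ ReflTransGen r y x := by
  have hequiv : Equivalence fun x y => ReflTransGen r x y ∨ ReflTransGen r y x := by
    refine ⟨fun _ => .inl .refl, Or.symm, ?_⟩
    rintro x y z (hxy | hyx) (hyz | hzy)
    · exact .inl (hxy.trans hyz)
    · exact hxy.total_of_left_unique hr.1 hzy
    · exact hyx.total_of_right_unique hr.2 hyz
    · exact .inr (hzy.trans hyx)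
  refine ⟨fun h => hequiv.eqvGen_iff.1 (EqvGen.mono (fun _ _ h => .inl (.single h)) _ _ h), ?_⟩
  rintro (h | h)
  · exact EqvGen.reflTransGen_le_eqvGen r _ _ h
  · exact .symm _ _ (EqvGen.reflTransGen_le_eqvGen r _ _ h)

theorem Relator.BiUnique.map {β γ δ : Type*} {r : α → β → Prop} {f : α → γ} {g : β → δ}
    (hr : Relator.BiUnique r) (hf : f.Injective) (hg : g.Injective) :
    Relator.BiUnique (Relation.Map r f g) := by
  constructor
  · rintro _ _ _ ⟨a, b, hab, rfl, rfl⟩ ⟨a', b', hab', rfl, hb⟩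
    rw [hr.1 hab (hg hb ▸ hab')]
  · rintro _ _ _ ⟨a, b, hab, rfl, rfl⟩ ⟨a', b', hab', ha, rfl⟩
    rw [hr.2 hab (hf ha ▸ hab')]

structure IsArcDiagram [LT α] (r : α → α → Prop) : Prop where
  lt : ∀ ⦃x y⦄, r x y → x < y
  biUnique : Relator.BiUnique r

section LinearOrder

variable [LinearOrder α] {r : α → α → Prop}

namespace IsArcDiagram

theorem le_of_reflTransGen (hr : IsArcDiagram r) {x y : α} (h : ReflTransGen r x y) : x ≤ y := by
  induction h with
  | refl => exact le_rfl
  | tail _ hyz ih => exact ih.trans (hr.lt hyz).le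

theorem eqvGen_iff_of_le (hr : IsArcDiagram r) {x y : α} (hxy : x ≤ y) :
    EqvGen r x y ↔ ReflTransGen r x y := by
  refine hr.biUnique.eqvGen_iff.trans ⟨?_, .inl⟩
  rintro (h | h)
  · exact h
  · obtain rfl := le_antisymm hxy (hr.le_of_reflTransGen h)
    exact h

end IsArcDiagram

namespace Setoid

def nextInBlock (P : Setoid α) (x y : α) : Prop :=
  IsLeast {z | P x z ∧ x < z} y

theorem isArcDiagram_nextInBlock (P : Setoid α) : IsArcDiagram P.nextInBlock where
  lt _ _ h := h.1.2
  biUnique := by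
    refine ⟨fun a b c ha hb => ?_, fun a b c hb hc => hb.unique hc⟩
    by_contra hne
    wlog hab : a < b generalizing a b
    · exact this b a hb ha (Ne.symm hne) ((Ne.lt_or_gt hne).resolve_left hab)
    exact lt_irrefl b (hb.1.2.trans_le (ha.2 ⟨P.trans ha.1.1 (P.symm hb.1.1), hab⟩))

theorem reflTransGen_nextInBlock [Finite α] (P : Setoid α) {x y : α} (h : P x y) (hxy : x ≤ y) :
    ReflTransGen P.nextInBlock x y := by
  induction x using WellFoundedGT.induction with
  | _ x ih =>
  rcases hxy.eq_or_lt with rfl | hxy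
  · exact .refl
  have hS : {z | P x z ∧ x < z}.Nonempty := ⟨y, h, hxy⟩
  have hc : P.nextInBlock x (wellFounded_lt.min _ hS) :=
    ⟨wellFounded_lt.min_mem _ hS, fun _ hz => wellFounded_lt.min_le hz⟩
  exact .head hc (ih _ hc.1.2 (P.trans (P.symm hc.1.1) h) (hc.2 ⟨h, hxy⟩))

theorem eqvGen_nextInBlock [Finite α] (P : Setoid α) : EqvGen.setoid P.nextInBlock = P := by
  refine le_antisymm (Setoid.eqvGen_le fun _ _ h => h.1.1) fun x y h => ?_
  rcases le_total x y with hxy | hyx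
  · exact EqvGen.reflTransGen_le_eqvGen _ _ _ (P.reflTransGen_nextInBlock h hxy)
  · exact .symm _ _
      (EqvGen.reflTransGen_le_eqvGen _ _ _ (P.reflTransGen_nextInBlock (P.symm h) hyx))

theorem nextInBlock_eqvGen {r : α → α → Prop} (hr : IsArcDiagram r) :
    (EqvGen.setoid r).nextInBlock = r := by
  ext x y
  constructor
  · rintro ⟨⟨hxy, hlt⟩, hmin⟩
    rcases ((hr.eqvGen_iff_of_le hlt.le).1 hxy).cases_head with rfl | ⟨c, hxc, hcy⟩
    · exact absurd hlt (lt_irrefl x)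
    · obtain rfl : c = y :=
        le_antisymm (hr.le_of_reflTransGen hcy) (hmin ⟨EqvGen.rel _ _ hxc, hr.lt hxc⟩)
      exact hxc
  · refine fun hxy => ⟨⟨EqvGen.rel _ _ hxy, hr.lt hxy⟩, fun z ⟨hxz, hlt⟩ => ?_⟩
    rcases ((hr.eqvGen_iff_of_le hlt.le).1 hxz).cases_head with rfl | ⟨c, hxc, hcz⟩
    · exact absurd hlt (lt_irrefl x)
    · exact hr.biUnique.2 hxy hxc ▸ hr.le_of_reflTransGen hcz

noncomputable def equivArcDiagram [Finite α] : Setoid α ≃ {r : α → α → Prop // IsArcDiagram r} where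
  toFun P := ⟨P.nextInBlock, P.isArcDiagram_nextInBlock⟩
  invFun r := EqvGen.setoid r
  left_inv := eqvGen_nextInBlock
  right_inv r := Subtype.ext (nextInBlock_eqvGen r.2)

end Setoid

end LinearOrder

section Fin

variable {n k m : ℕ}

def Setoid.IsSparse (m : ℕ) (P : Setoid (Fin n)) : Prop :=
  ∀ x y : Fin n, P x y → x < y → m ≤ (y : ℕ) - (x : ℕ)

def HasLongArcs (m : ℕ) (r : Fin n → Fin n → Prop) : Prop :=
  ∀ ⦃x y⦄, r x y → (x : ℕ) + m ≤ y

theorem IsArcDiagram.isSparse_eqvGen_iff {r : Fin n → Fin n → Prop} (hr : IsArcDiagram r) :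
    (EqvGen.setoid r).IsSparse m ↔ HasLongArcs m r := by
  constructor
  · intro h x y hxy
    have := h x y (EqvGen.rel _ _ hxy) (hr.lt hxy)
    have : x < y := hr.lt hxy
    omega
  · intro h x y hxy hlt
    rcases ((hr.eqvGen_iff_of_le hlt.le).1 hxy).cases_head with rfl | ⟨c, hxc, hcy⟩
    · exact absurd hlt (lt_irrefl x)
    · have := h hxc
      have : c ≤ y := hr.le_of_reflTransGen hcy
      omega

noncomputable def sparseEquivLongArcs :
    {P : Setoid (Fin n) // P.IsSparse m} ≃
      {r : {r : Fin n → Fin n → Prop // IsArcDiagram r} // HasLongArcs m r.1} :=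
  (Setoid.equivArcDiagram.symm.subtypeEquiv fun r => r.2.isSparse_eqvGen_iff.symm).symm

theorem IsArcDiagram.of_hasLongArcs {r : Fin n → Fin n → Prop} (hr : Relator.BiUnique r)
    (hlong : HasLongArcs m r) (hm : 1 ≤ m) : IsArcDiagram r where
  lt x y h := by have := hlong h; exact Fin.lt_def.2 (by omega)
  biUnique := hr

def shortenArcs (r : Fin (k + 1) → Fin (k + 1) → Prop) (x y : Fin k) : Prop :=
  r x.castSucc y.succ

def lengthenArcs (r : Fin k → Fin k → Prop) : Fin (k + 1) → Fin (k + 1) → Prop :=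
  Relation.Map r Fin.castSucc Fin.succ

theorem HasLongArcs.shortenArcs {r : Fin (k + 1) → Fin (k + 1) → Prop}
    (h : HasLongArcs (m + 1) r) : HasLongArcs m (shortenArcs r) := by
  intro x y hxy
  have := h hxy
  simp only [Fin.val_castSucc, Fin.val_succ] at this
  omega

theorem HasLongArcs.lengthenArcs {r : Fin k → Fin k → Prop}
    (h : HasLongArcs m r) : HasLongArcs (m + 1) (lengthenArcs r) := by
  rintro _ _ ⟨x, y, hxy, rfl, rfl⟩
  have := h hxy
  simp only [Fin.val_castSucc, Fin.val_succ]
  omega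

theorem Relator.BiUnique.shortenArcs {r : Fin (k + 1) → Fin (k + 1) → Prop}
    (hr : Relator.BiUnique r) : Relator.BiUnique (shortenArcs r) :=
  ⟨fun _ _ _ ha hb => Fin.castSucc_injective _ (hr.1 ha hb),
    fun _ _ _ ha hb => Fin.succ_injective _ (hr.2 ha hb)⟩

theorem shortenArcs_lengthenArcs (r : Fin k → Fin k → Prop) :
    shortenArcs (lengthenArcs r) = r := by
  ext x y
  exact Relation.map_apply_apply (Fin.castSucc_injective _) (Fin.succ_injective _) r x y

theorem lengthenArcs_shortenArcs {r : Fin (k + 1) → Fin (k + 1) → Prop} (hr : IsArcDiagram r) :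
    lengthenArcs (shortenArcs r) = r := by
  ext x y
  refine ⟨fun ⟨a, b, hab, hx, hy⟩ => hx ▸ hy ▸ hab, fun hxy => ?_⟩
  obtain ⟨a, rfl⟩ := Fin.exists_castSucc_eq.2 (Fin.ne_last_of_lt (hr.lt hxy))
  obtain ⟨b, rfl⟩ := Fin.exists_succ_eq.2 (Fin.ne_zero_of_lt (hr.lt hxy))
  exact ⟨a, b, hxy, rfl, rfl⟩

noncomputable def shortenArcsEquiv (hm : 1 ≤ m) :
    {r : {r : Fin (k + 1) → Fin (k + 1) → Prop // IsArcDiagram r} // HasLongArcs (m + 1) r.1} ≃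
      {r : {r : Fin k → Fin k → Prop // IsArcDiagram r} // HasLongArcs m r.1} where
  toFun r := ⟨⟨shortenArcs r.1.1,
    .of_hasLongArcs r.1.2.biUnique.shortenArcs r.2.shortenArcs hm⟩, r.2.shortenArcs⟩
  invFun r := ⟨⟨lengthenArcs r.1.1,
    .of_hasLongArcs (r.1.2.biUnique.map (Fin.castSucc_injective _) (Fin.succ_injective _))
      r.2.lengthenArcs (by omega)⟩, r.2.lengthenArcs⟩
  left_inv r := by ext1; ext1; exact lengthenArcs_shortenArcs r.1.2
  right_inv r := by ext1; ext1; exact shortenArcs_lengthenArcs r.1.1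

end Fin

theorem sparse_partitions_step_general (m n : ℕ) (hm : 2 ≤ m) :
    bsparse n m = bsparse (n - 1) (m - 1) := by
  obtain ⟨μ, rfl⟩ : ∃ μ, m = μ + 1 := ⟨m - 1, by omega⟩
  rcases n with _ | k
  · -- `0 - 1 = 0`, and sparseness is vacuous on `Fin 0`
    exact Nat.card_congr
      (Equiv.subtypeEquivRight fun _ => ⟨fun _ x => x.elim0, fun _ x => x.elim0⟩)
  · exact Nat.card_congr
      (sparseEquivLongArcs.trans ((shortenArcsEquiv (by omega)).trans sparseEquivLongArcs.symm))

/-- For every `m ≥ 2` and `n ≥ 2`, the number of `m`-sparse partitions of `{1,…,n}`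
equals the number of `(m-1)`-sparse partitions of `{1,…,n-1}`. -/
theorem sparse_partitions_step (m n : ℕ) (hm : 2 ≤ m) (hn : 2 ≤ n) :
    bsparse n m = bsparse (n - 1) (m - 1) :=
  sparse_partitions_step_general m n hm
end

section
/- For every fixed m ∈ ℕ, as n → ∞ one has b_{n−m}/b_n ∼ (log n / n)^m, i.e., the ratio b_{n−m}·n^m / (b_n·(log n)^m) tends to 1. -/
open Filter

/-!
Dobinski's formula `e · b_n = ∑ₖ kⁿ / k!` gives two things. By Cauchy–Schwarz, `(b_n)` is
log-convex. Comparing with the term `k ≈ n / log n` from below, and bounding each term by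
`n! e^{uk} / uⁿ` at the saddle point `eᵘ = n / log n` from above, it also gives
`log b_n = n log n - n log log n - n + o(n)`.

By log-convexity the increments `d_n = log b_{n+1} - log b_n` are monotone, so `d_n` lies between
the average increments over the windows of length `≈ δn` just before and just after `n`. The
estimate for `log b_n` evaluates these averages as `log n - log log n + O(δ)`, whence
`d_n = log n - log log n + o(1)`, and
`b_{n-m} / b_n = exp (-(d_{n-m} + ⋯ + d_{n-1})) ∼ (log n / n)^m`.
-/

open Finset Real Topology Asymptotics
open scoped Nat

instance Setoid.instFinite {α : Type*} [Finite α] : Finite (Setoid α) :=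
  Finite.of_injective (fun s : Setoid α => s.r) fun _ _ h => Setoid.ext fun a b => by
    simp only at h; rw [h]

noncomputable instance Setoid.instFintype {α : Type*} [Finite α] : Fintype (Setoid α) :=
  Fintype.ofFinite _

def Setoid.kerEqEquivEmbedding {α β : Type*} (s : Setoid α) :
    {f : α → β // Setoid.ker f = s} ≃ (Quotient s ↪ β) where
  toFun f := ⟨Quotient.lift f.1 fun a b hab => by rw [← f.2] at hab; exact hab,
    Quotient.ind₂ fun a b hab => Quotient.sound (by rw [← f.2]; exact hab)⟩
  invFun g := ⟨fun a => g ⟦a⟧, by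
    ext a b
    exact g.injective.eq_iff.trans Quotient.eq⟩
  left_inv _ := rfl
  right_inv g := by ext a; induction a using Quotient.ind; rfl

theorem Setoid.card_fun_eq_sum_descFactorial (α β : Type*) [Fintype α] [Fintype β] :
    Fintype.card β ^ Fintype.card α =
      ∑ s : Setoid α, (Fintype.card β).descFactorial (Nat.card (Quotient s)) := by
  classical
  rw [← Fintype.card_fun, ← Fintype.card_congr (Equiv.sigmaFiberEquiv Setoid.ker),
    Fintype.card_sigma]
  refine sum_congr rfl fun s _ => ?_
  rw [Fintype.card_congr (Setoid.kerEqEquivEmbedding s), Fintype.card_embedding_eq,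
    Nat.card_eq_fintype_card]

theorem bell_pos (n : ℕ) : 0 < bell n := Nat.card_pos

theorem Real.hasSum_pow_div_factorial (x : ℝ) : HasSum (fun k : ℕ => x ^ k / k !) (exp x) := by
  rw [exp_eq_exp_ℝ]
  exact NormedSpace.expSeries_div_hasSum_exp x

theorem hasSum_descFactorial_div_factorial (j : ℕ) :
    HasSum (fun k : ℕ => (k.descFactorial j : ℝ) / k !) (exp 1) := by
  rw [← hasSum_nat_add_iff' j]
  have hstart : ∑ k ∈ range j, (k.descFactorial j : ℝ) / k ! = 0 :=
    sum_eq_zero fun k hk => by simp [Nat.descFactorial_eq_zero_iff_lt.2 (mem_range.1 hk)]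
  have hshift (i : ℕ) : ((i + j).descFactorial j : ℝ) / (i + j)! = 1 ^ i / i ! := by
    rw [one_pow, div_eq_div_iff (by positivity) (by positivity), one_mul, mul_comm]
    exact_mod_cast (by simpa using Nat.factorial_mul_descFactorial (Nat.le_add_left j i))
  simpa [hstart, hshift] using Real.hasSum_pow_div_factorial 1

/-- Dobinski's formula. -/
theorem hasSum_pow_div_factorial_bell (n : ℕ) :
    HasSum (fun k : ℕ => (k : ℝ) ^ n / k !) (exp 1 * bell n) := by
  have hcount (k : ℕ) : (k : ℝ) ^ n / k ! =
      ∑ s : Setoid (Fin n), (k.descFactorial (Nat.card (Quotient s)) : ℝ) / k ! := by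
    rw [← sum_div]
    congr 1
    exact_mod_cast by simpa using Setoid.card_fun_eq_sum_descFactorial (Fin n) (Fin k)
  simp_rw [hcount]
  convert hasSum_sum fun s _ => hasSum_descFactorial_div_factorial (Nat.card (Quotient s))
  rw [sum_const, card_univ, nsmul_eq_mul, mul_comm, bell, Nat.card_eq_fintype_card]

theorem HasSum.sq_le_mul {ι : Type*} {r f g : ι → ℝ} {a b c : ℝ}
    (hr : HasSum r c) (hf : HasSum f a) (hg : HasSum g b) (hf0 : ∀ i, 0 ≤ f i)
    (hg0 : ∀ i, 0 ≤ g i) (hrfg : ∀ i, r i ^ 2 ≤ f i * g i) : c ^ 2 ≤ a * b :=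
  le_of_tendsto_of_tendsto' (hr.pow 2) (Tendsto.mul hf hg) fun s =>
    sum_sq_le_sum_mul_sum_of_sq_le_mul s (fun i _ => hf0 i) (fun i _ => hg0 i) fun i _ => hrfg i

theorem mul_sub_le_add_sub_of_monotone {f : ℕ → ℝ} (hf : Monotone fun n => f (n + 1) - f n)
    (n h : ℕ) : h * (f (n + 1) - f n) ≤ f (n + h) - f n := by
  induction h with
  | zero => simp
  | succ h ih =>
    have := hf (Nat.le_add_right n h)
    simp only [← add_assoc, Nat.cast_succ] at this ⊢
    linarith

theorem add_sub_le_mul_sub_of_monotone {f : ℕ → ℝ} (hf : Monotone fun n => f (n + 1) - f n)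
    (n h : ℕ) : f (n + h) - f n ≤ h * (f (n + h + 1) - f (n + h)) := by
  induction h with
  | zero => simp
  | succ h ih =>
    have := hf (Nat.le_succ (n + h))
    simp only [← add_assoc, Nat.cast_succ] at this ⊢
    nlinarith [(Nat.cast_nonneg h : (0 : ℝ) ≤ h)]

theorem bell_sq_le_mul (n : ℕ) : (bell (n + 1) : ℝ) ^ 2 ≤ bell n * bell (n + 2) := by
  have h := (hasSum_pow_div_factorial_bell (n + 1)).sq_le_mul (hasSum_pow_div_factorial_bell n)
    (hasSum_pow_div_factorial_bell (n + 2)) (fun _ => by positivity) (fun _ => by positivity)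
    fun k => le_of_eq (by field_simp; ring)
  rw [mul_pow, mul_mul_mul_comm, ← sq] at h
  exact le_of_mul_le_mul_left h (by positivity)

theorem monotone_log_bell_succ_sub : Monotone fun n => log (bell (n + 1)) - log (bell n) := by
  refine monotone_nat_of_le_succ fun n => ?_
  have hb (k : ℕ) : (0 : ℝ) < bell k := Nat.cast_pos.2 (bell_pos k)
  have := log_le_log (pow_pos (hb _) 2) (bell_sq_le_mul n)
  rw [log_pow, log_mul (hb n).ne' (hb (n + 2)).ne', Nat.cast_ofNat] at this
  linarith

noncomputable def bellSlope (x : ℝ) : ℝ := log x - log (log x)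

noncomputable def logBellApprox (x : ℝ) : ℝ := x * (bellSlope x - 1)

theorem exp_bellSlope {x : ℝ} (hx : 1 < x) : exp (bellSlope x) = x / log x := by
  rw [bellSlope, exp_sub, exp_log (by linarith), exp_log (log_pos hx)]

section
variable {x y : ℝ}

theorem one_le_log_of_exp_one_le (hx : exp 1 ≤ x) : 1 ≤ log x := by
  rwa [le_log_iff_exp_le (by linarith [exp_pos 1])]

theorem log_add_sub_log_le (hx : 0 < x) (hy : 0 ≤ y) : log (x + y) - log x ≤ y / x := by
  rw [← log_div (by positivity) hx.ne']
  linarith [log_le_sub_one_of_pos (show 0 < (x + y) / x by positivity),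
    show (x + y) / x - 1 = y / x by field_simp; ring]

theorem div_add_le_log_add_sub_log (hx : 0 < x) (hy : 0 ≤ y) :
    y / (x + y) ≤ log (x + y) - log x := by
  rw [← log_div (by positivity) hx.ne']
  linarith [one_sub_inv_le_log_of_pos (show 0 < (x + y) / x by positivity),
    show 1 - ((x + y) / x)⁻¹ = y / (x + y) by field_simp; ring]

theorem log_log_add_sub_le (hx : exp 1 ≤ x) (hy : 0 ≤ y) :
    log (log (x + y)) - log (log x) ≤ (log (x + y) - log x) / log x := by
  have hL := one_le_log_of_exp_one_le hx
  have hLy : log x ≤ log (x + y) := log_le_log (by linarith [exp_pos 1]) (by linarith)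
  rw [← log_div (by linarith) (by linarith), sub_div, div_self (by linarith)]
  exact log_le_sub_one_of_pos (by apply div_pos <;> linarith)

theorem bellSlope_add_sub_le (hx : exp 1 ≤ x) (hy : 0 ≤ y) :
    bellSlope (x + y) - bellSlope x ≤ y / x := by
  have hL := one_le_log_of_exp_one_le hx
  have hLy : log x ≤ log (x + y) := log_le_log (by linarith [exp_pos 1]) (by linarith)
  have := log_le_log (by linarith) hLy
  have := log_add_sub_log_le (show 0 < x by linarith [exp_pos 1]) hy
  unfold bellSlope
  linarith

theorem le_bellSlope_add_sub (hx : exp 1 ≤ x) (hy : 0 ≤ y) :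
    (1 - (log x)⁻¹) * (log (x + y) - log x) ≤ bellSlope (x + y) - bellSlope x := by
  have := log_log_add_sub_le hx hy
  unfold bellSlope
  rw [sub_mul, one_mul, inv_mul_eq_div]
  linarith

theorem bellSlope_le_add (hx : exp 1 ≤ x) (hy : 0 ≤ y) : bellSlope x ≤ bellSlope (x + y) := by
  have hL := one_le_log_of_exp_one_le hx
  have hLy : log x ≤ log (x + y) := log_le_log (by linarith [exp_pos 1]) (by linarith)
  have h1 : 0 ≤ 1 - (log x)⁻¹ := sub_nonneg.2 (inv_le_one_of_one_le₀ hL)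
  linarith [le_bellSlope_add_sub hx hy, mul_nonneg h1 (sub_nonneg.2 hLy)]

theorem logBellApprox_add_sub_le (hx : exp 1 ≤ x) (hy : 0 ≤ y) :
    logBellApprox (x + y) - logBellApprox x ≤ y * bellSlope (x + y) := by
  have hx0 : 0 < x := by linarith [exp_pos 1]
  have h := mul_le_mul_of_nonneg_left (bellSlope_add_sub_le hx hy) hx0.le
  rw [mul_div_cancel₀ _ hx0.ne'] at h
  unfold logBellApprox
  linarith

theorem le_logBellApprox_add_sub (hx : exp 1 ≤ x) (hy : 0 ≤ y) :
    y * (bellSlope x - (log x)⁻¹) ≤ logBellApprox (x + y) - logBellApprox x := by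
  have hx0 : 0 < x := by linarith [exp_pos 1]
  have hL := one_le_log_of_exp_one_le hx
  have h1 : 0 ≤ 1 - (log x)⁻¹ := sub_nonneg.2 (inv_le_one_of_one_le₀ hL)
  have h2 : y ≤ (x + y) * (log (x + y) - log x) := by
    have := div_add_le_log_add_sub_log hx0 hy
    rwa [div_le_iff₀' (by linarith)] at this
  have h3 := mul_le_mul_of_nonneg_left (le_bellSlope_add_sub hx hy) (by linarith : 0 ≤ x + y)
  have h4 := mul_le_mul_of_nonneg_left h2 h1
  unfold logBellApprox
  nlinarith
end

theorem log_factorial_le (n : ℕ) (hn : n ≠ 0) :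
    log n ! ≤ n * log n - n + log (2 * n) / 2 + 1 := by
  obtain ⟨k, rfl⟩ := Nat.exists_eq_succ_of_ne_zero hn
  have hseq : Stirling.stirlingSeq (k + 1) ≤ exp 1 := by
    calc Stirling.stirlingSeq (k + 1) ≤ Stirling.stirlingSeq 1 :=
          Stirling.stirlingSeq'_antitone (Nat.zero_le k)
      _ ≤ exp 1 := by
          rw [Stirling.stirlingSeq_one]
          exact div_le_self (exp_pos 1).le (by simp)
  have hlog := log_le_log (Stirling.stirlingSeq'_pos k) hseq
  rw [Stirling.log_stirlingSeq_formula, log_exp, log_div (by positivity) (exp_pos 1).ne',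
    log_exp] at hlog
  linarith

theorem exp_one_mul_bell_le (n : ℕ) {u : ℝ} (hu : 0 < u) :
    exp 1 * bell n ≤ n ! / u ^ n * exp (exp u) := by
  refine hasSum_le (fun k => ?_) (hasSum_pow_div_factorial_bell n)
    ((Real.hasSum_pow_div_factorial (exp u)).mul_left (n ! / u ^ n))
  have h := Real.pow_div_factorial_le_exp (u * k) (by positivity) n
  rw [div_le_iff₀ (by positivity), mul_pow] at h
  rw [← exp_nat_mul, mul_comm (k : ℝ), ← mul_div_assoc,
    div_le_div_iff_of_pos_right (by positivity), div_mul_eq_mul_div, le_div_iff₀ (by positivity)]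
  linarith

theorem logBellApprox_sub_le_log_bell (n : ℕ) (hn : exp 1 ≤ n) :
    logBellApprox n - log n - 1 ≤ log (bell n) := by
  have hL := one_le_log_of_exp_one_le hn
  have hn0 : (0 : ℝ) < n := by linarith [exp_pos 1]
  set k := ⌈n / log n⌉₊
  have hk : n / log n ≤ k := Nat.le_ceil _
  have hk_le : (k : ℝ) ≤ n / log n + 1 := (Nat.ceil_lt_add_one (by positivity)).le
  have hkn : (k : ℝ) ≤ n := by exact_mod_cast Nat.ceil_le.2 (div_le_self hn0.le hL)
  have hk1 : (1 : ℝ) ≤ k := by exact_mod_cast Nat.one_le_ceil_iff.2 (by positivity)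
  have hterm : (k : ℝ) ^ n / k ^ k ≤ exp 1 * bell n :=
    (div_le_div_of_nonneg_left (by positivity) (by positivity)
      (by exact_mod_cast Nat.factorial_le_pow k)).trans
      (le_hasSum (hasSum_pow_div_factorial_bell n) k fun _ _ => by positivity)
  have hlog : n * log k - k * log k ≤ 1 + log (bell n) := by
    have := log_le_log (by positivity) hterm
    rwa [log_div (by positivity) (by positivity), log_pow, log_pow,
      log_mul (exp_pos 1).ne' (Nat.cast_pos.2 (bell_pos n)).ne', log_exp] at this
  have h1 : n * bellSlope n ≤ n * log k := by
    refine mul_le_mul_of_nonneg_left ?_ hn0.le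
    rw [bellSlope, ← log_div hn0.ne' (by linarith)]
    exact log_le_log (by positivity) hk
  have h2 : k * log k ≤ n + log n := by
    calc k * log k ≤ (n / log n + 1) * log n :=
          mul_le_mul hk_le (log_le_log (by linarith) hkn) (log_nonneg hk1) (by positivity)
      _ = n + log n := by field_simp
  unfold logBellApprox
  linarith

theorem log_bell_sub_logBellApprox_le (n : ℕ) (hn : exp 1 ≤ n) :
    log (bell n) - logBellApprox n ≤
      log (2 * n) / 2 + n / log n - n * log (bellSlope n / log n) := by
  have hL := one_le_log_of_exp_one_le hn
  have hn0 : (0 : ℝ) < n := by linarith [exp_pos 1]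
  have hb : (0 : ℝ) < bell n := Nat.cast_pos.2 (bell_pos n)
  have hu : 0 < bellSlope n := by
    rw [bellSlope]
    linarith [log_le_sub_one_of_pos (show 0 < log n by linarith)]
  have hbound := exp_one_mul_bell_le n hu
  rw [exp_bellSlope (by linarith [add_one_le_exp 1])] at hbound
  have hlog := log_le_log (by positivity) hbound
  rw [log_mul (exp_pos 1).ne' hb.ne', log_exp, log_mul (by positivity) (exp_pos _).ne', log_exp,
    log_div (by positivity) (by positivity), log_pow] at hlog
  have hfact := log_factorial_le n (by exact_mod_cast hn0.ne')
  rw [log_div hu.ne' (by linarith)]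
  unfold logBellApprox bellSlope at *
  linarith

theorem eventually_exp_one_le_natCast : ∀ᶠ n : ℕ in atTop, exp 1 ≤ n :=
  tendsto_natCast_atTop_atTop.eventually_ge_atTop _

theorem tendsto_log_natCast_div_natCast :
    Tendsto (fun n : ℕ => log n / n) atTop (𝓝 0) :=
  isLittleO_log_id_atTop.tendsto_div_nhds_zero.comp tendsto_natCast_atTop_atTop

theorem tendsto_log_natCast_atTop : Tendsto (fun n : ℕ => log n) atTop atTop :=
  tendsto_log_atTop.comp tendsto_natCast_atTop_atTop

theorem tendsto_bellSlope_div_log : Tendsto (fun n : ℕ => bellSlope n / log n) atTop (𝓝 1) := by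
  have h :=
    (isLittleO_log_id_atTop.tendsto_div_nhds_zero.comp tendsto_log_natCast_atTop).const_sub 1
  rw [sub_zero] at h
  refine h.congr' ?_
  filter_upwards [eventually_exp_one_le_natCast] with n hn
  have := one_le_log_of_exp_one_le hn
  simp only [Function.comp_apply, id, bellSlope]
  field_simp

theorem isLittleO_log_bell_sub_logBellApprox :
    (fun n : ℕ => log (bell n) - logBellApprox n) =o[atTop] (fun n : ℕ => (n : ℝ)) := by
  rw [isLittleO_iff_tendsto' (eventually_exp_one_le_natCast.mono fun n hn h0 => by
    linarith [exp_pos 1, show (n : ℝ) = 0 from h0])]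
  have hlower : Tendsto (fun n : ℕ => -(log n / n + (n : ℝ)⁻¹)) atTop (𝓝 0) := by
    simpa using (tendsto_log_natCast_div_natCast.add tendsto_inv_atTop_nhds_zero_nat).neg
  have hupper : Tendsto
      (fun n : ℕ => log (2 * n) / (2 * n) + (log n)⁻¹ - log (bellSlope n / log n)) atTop (𝓝 0) := by
    have h2n := isLittleO_log_id_atTop.tendsto_div_nhds_zero.comp
      (tendsto_natCast_atTop_atTop.const_mul_atTop two_pos)
    have hlog := ((continuousAt_log one_ne_zero).tendsto.comp tendsto_bellSlope_div_log)
    simpa using (h2n.add tendsto_log_natCast_atTop.inv_tendsto_atTop).sub hlog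
  refine tendsto_of_tendsto_of_tendsto_of_le_of_le' hlower hupper ?_ ?_ <;>
    filter_upwards [eventually_exp_one_le_natCast] with n hn <;>
    have hn0 : (0 : ℝ) < n := by linarith [exp_pos 1]
  · rw [le_div_iff₀ hn0]
    have := logBellApprox_sub_le_log_bell n hn
    have : log n / n * n = log n := div_mul_cancel₀ _ hn0.ne'
    have : (n : ℝ)⁻¹ * n = 1 := inv_mul_cancel₀ hn0.ne'
    linarith
  · rw [div_le_iff₀ hn0]
    have := log_bell_sub_logBellApprox_le n hn
    have : log (2 * n) / (2 * n) * n = log (2 * n) / 2 := by field_simp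
    have : (log n)⁻¹ * n = n / log n := by ring
    linarith

theorem log_bell_succ_sub_le (n h : ℕ) (hn : exp 1 ≤ n) (hh : 0 < h) :
    log (bell (n + 1)) - log (bell n) ≤ bellSlope n + h / n +
      (|log (bell (n + h)) - logBellApprox (n + h)| + |log (bell n) - logBellApprox n|) / h := by
  have hh' : (0 : ℝ) < h := by exact_mod_cast hh
  have hwindow := mul_sub_le_add_sub_of_monotone (f := fun n => log (bell n))
    monotone_log_bell_succ_sub n h
  have hF := logBellApprox_add_sub_le hn hh'.le
  have hT := mul_le_mul_of_nonneg_left (bellSlope_add_sub_le hn hh'.le) hh'.le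
  have := le_abs_self (log (bell (n + h)) - logBellApprox (n + h))
  have := neg_abs_le (log (bell n) - logBellApprox n)
  rw [← sub_le_iff_le_add', le_div_iff₀ hh']
  nlinarith

theorem le_log_bell_succ_sub (z h : ℕ) (hz : exp 1 ≤ z) (hh : 0 < h) :
    bellSlope (z + h) - h / z - (log z)⁻¹ -
        (|log (bell (z + h)) - logBellApprox (z + h)| + |log (bell z) - logBellApprox z|) / h ≤
      log (bell (z + h + 1)) - log (bell (z + h)) := by
  have hh' : (0 : ℝ) < h := by exact_mod_cast hh
  have hwindow := add_sub_le_mul_sub_of_monotone (f := fun n => log (bell n))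
    monotone_log_bell_succ_sub z h
  have hF := le_logBellApprox_add_sub hz hh'.le
  have hT := mul_le_mul_of_nonneg_left (bellSlope_add_sub_le hz hh'.le) hh'.le
  have := neg_abs_le (log (bell (z + h)) - logBellApprox (z + h))
  have := le_abs_self (log (bell z) - logBellApprox z)
  rw [sub_le_comm, le_div_iff₀ hh']
  nlinarith

theorem eventually_exists_nat_window {δ : ℝ} (hδ : 0 < δ) :
    ∀ᶠ n : ℕ in atTop, ∃ h : ℕ, 0 < h ∧ δ * n ≤ h ∧ (h : ℝ) ≤ 2 * δ * n := by
  filter_upwards [tendsto_natCast_atTop_atTop.eventually_ge_atTop δ⁻¹] with n hn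
  have hδn : 1 ≤ δ * n := by rwa [inv_le_iff_one_le_mul₀' hδ] at hn
  refine ⟨⌈δ * n⌉₊, Nat.one_le_ceil_iff.2 (by linarith), Nat.le_ceil _, ?_⟩
  linarith [Nat.ceil_lt_add_one (show 0 ≤ δ * n by linarith)]

theorem eventually_abs_log_bell_sub_logBellApprox_le {c : ℝ} (hc : 0 < c) :
    ∀ᶠ n : ℕ in atTop, |log (bell n) - logBellApprox n| ≤ c * n := by
  simpa using isLittleO_log_bell_sub_logBellApprox.bound hc

theorem eventually_log_bell_succ_sub_lt {ε : ℝ} (hε : 0 < ε) :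
    ∀ᶠ n : ℕ in atTop, log (bell (n + 1)) - log (bell n) < bellSlope n + ε := by
  set δ := min (ε / 8) 1
  have hδ : 0 < δ := lt_min (by linarith) one_pos
  have hδε : δ ≤ ε / 8 := min_le_left _ _
  have hδ1 : δ ≤ 1 := min_le_right _ _
  obtain ⟨N, hN⟩ :=
    eventually_atTop.1 (eventually_abs_log_bell_sub_logBellApprox_le (pow_pos hδ 2))
  filter_upwards [eventually_ge_atTop N, eventually_exp_one_le_natCast,
    eventually_exists_nat_window hδ] with n hnN hn ⟨h, hh0, hhl, hhu⟩
  have hn0 : (0 : ℝ) < n := by linarith [exp_pos 1]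
  have hh0' : (0 : ℝ) < h := by exact_mod_cast hh0
  have hEn := hN n hnN
  have hEnh := hN (n + h) (by omega)
  push_cast at hEnh
  have hstep : (h : ℝ) / n ≤ 2 * δ := by rw [div_le_iff₀ hn0]; linarith
  have herr : (|log (bell (n + h)) - logBellApprox (n + h)| + |log (bell n) - logBellApprox n|) / h
      ≤ 3 * δ := by
    rw [div_le_iff₀ hh0']
    nlinarith [mul_le_mul_of_nonneg_left hhl hδ.le, mul_le_mul_of_nonneg_right hδ1 hδ.le]
  linarith [log_bell_succ_sub_le n h hn hh0]

theorem eventually_sub_lt_log_bell_succ_sub {ε : ℝ} (hε : 0 < ε) :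
    ∀ᶠ n : ℕ in atTop, bellSlope n - ε < log (bell (n + 1)) - log (bell n) := by
  set δ := min (ε / 8) (1 / 4)
  have hδ : 0 < δ := lt_min (by linarith) (by norm_num)
  have hδε : δ ≤ ε / 8 := min_le_left _ _
  have hδ4 : δ ≤ 1 / 4 := min_le_right _ _
  obtain ⟨N, hN⟩ := eventually_atTop.1
    ((eventually_abs_log_bell_sub_logBellApprox_le (pow_pos hδ 2)).and
      (eventually_exp_one_le_natCast.and (tendsto_log_natCast_atTop.eventually_ge_atTop δ⁻¹)))
  filter_upwards [eventually_ge_atTop (2 * N), eventually_exists_nat_window hδ] with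
    n hnN ⟨h, hh0, hhl, hhu⟩
  have hh0' : (0 : ℝ) < h := by exact_mod_cast hh0
  have hhn : 2 * h ≤ n := by
    have : (2 * h : ℝ) ≤ n := by nlinarith
    exact_mod_cast this
  obtain ⟨z, rfl⟩ : ∃ z, n = z + h := ⟨n - h, by omega⟩
  obtain ⟨hEz, hz, hlogz⟩ := hN z (by omega)
  have hEn := (hN (z + h) (by omega)).1
  push_cast at hEn hhl hhu ⊢
  have hz0 : (0 : ℝ) < z := by linarith [exp_pos 1]
  have hstep : (h : ℝ) / z ≤ 4 * δ := by rw [div_le_iff₀ hz0]; nlinarith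
  have hlog : (log z)⁻¹ ≤ δ := inv_le_of_inv_le₀ hδ hlogz
  have herr : (|log (bell (z + h)) - logBellApprox (z + h)| + |log (bell z) - logBellApprox z|) / h
      ≤ 2 * δ := by
    rw [div_le_iff₀ hh0']
    nlinarith
  linarith [le_log_bell_succ_sub z h hz hh0]

theorem tendsto_log_bell_succ_sub_sub_bellSlope :
    Tendsto (fun n : ℕ => log (bell (n + 1)) - log (bell n) - bellSlope n) atTop (𝓝 0) :=
  tendsto_order.2 ⟨fun a ha => (eventually_sub_lt_log_bell_succ_sub (neg_pos.2 ha)).mono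
      fun n hn => by linarith,
    fun a ha => (eventually_log_bell_succ_sub_lt ha).mono fun n hn => by linarith⟩

theorem tendsto_bellSlope_add_sub (m : ℕ) :
    Tendsto (fun n : ℕ => bellSlope (n + m) - bellSlope n) atTop (𝓝 0) := by
  refine tendsto_of_tendsto_of_tendsto_of_le_of_le' tendsto_const_nhds
    (tendsto_const_div_atTop_nhds_zero_nat (m : ℝ)) ?_ ?_ <;>
    filter_upwards [eventually_exp_one_le_natCast] with n hn
  · exact sub_nonneg.2 (bellSlope_le_add hn m.cast_nonneg)
  · exact bellSlope_add_sub_le hn m.cast_nonneg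

theorem tendsto_mul_bellSlope_sub_log_bell (m : ℕ) :
    Tendsto (fun n : ℕ => m * bellSlope (n + m) - (log (bell (n + m)) - log (bell n)))
      atTop (𝓝 0) := by
  have hd := tendsto_log_bell_succ_sub_sub_bellSlope
  have hlower := ((hd.comp (tendsto_add_atTop_nat m)).neg.const_mul (m : ℝ))
  have hupper := ((tendsto_bellSlope_add_sub m).sub hd).const_mul (m : ℝ)
  simp only [neg_zero, mul_zero, sub_zero] at hlower hupper
  refine tendsto_of_tendsto_of_tendsto_of_le_of_le hlower hupper (fun n => ?_) fun n => ?_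
  · have := add_sub_le_mul_sub_of_monotone (f := fun n => log (bell n))
      monotone_log_bell_succ_sub n m
    simp only [Function.comp_apply, Nat.cast_add]
    linarith
  · have := mul_sub_le_add_sub_of_monotone (f := fun n => log (bell n))
      monotone_log_bell_succ_sub n m
    linarith

theorem bell_ratio_asymptotics_general (m : ℕ) :
    Tendsto (fun n : ℕ =>
        ((bell (n - m) : ℝ) * (n : ℝ) ^ m) / ((bell n : ℝ) * Real.log n ^ m))
      atTop (nhds 1) := by
  rw [← tendsto_add_atTop_iff_nat m]
  have h := (continuous_exp.tendsto 0).comp (tendsto_mul_bellSlope_sub_log_bell m)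
  rw [exp_zero] at h
  refine h.congr' ?_
  filter_upwards [eventually_exp_one_le_natCast] with n hn
  have hx : (1 : ℝ) < n + m := by linarith [add_one_le_exp 1, (m.cast_nonneg : (0 : ℝ) ≤ m)]
  have hb (k : ℕ) : (0 : ℝ) < bell k := Nat.cast_pos.2 (bell_pos k)
  rw [Function.comp_apply, exp_sub, exp_sub, exp_log (hb _), exp_log (hb _), exp_nat_mul,
    exp_bellSlope hx, Nat.add_sub_cancel, div_pow]
  push_cast
  field_simp

/-- For every fixed `m ∈ ℕ = {1,2,…}`, as `n → ∞` one has
`b_{n-m}/bₙ ∼ (log n / n)^m`, i.e. `b_{n-m}·n^m / (bₙ·(log n)^m) → 1`. -/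
theorem bell_ratio_asymptotics (m : ℕ) (hm : 1 ≤ m) :
    Tendsto (fun n : ℕ =>
        ((bell (n - m) : ℝ) * (n : ℝ) ^ m) / ((bell n : ℝ) * Real.log n ^ m))
      atTop (nhds 1) :=
  bell_ratio_asymptotics_general m
end

section
/- Fix k ∈ ℕ and let i_{n,k} = Σ ∏_{j=1}^{m} 1/(a_j!), where the sum ranges over all compositions (a_1,…,a_m) of n with 1 ≤ a_j ≤ k for every j. Then i_{n,k} equals the coefficient of x^n in the power series 1/(1 − Σ_{i=1}^{k} x^i/i!), and there is a constant c_k > 0 such that i_{n,k} ∼ c_k · (1/α_k)^n as n → ∞, where α_k is the unique root of Σ_{i=1}^{k} x^i/i! − 1 in (0,1]. -/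
open Filter PowerSeries

/-- `ink n k` = `i_{n,k}`: the sum, over all compositions `(a₁,…,a_m)` of `n`
with `1 ≤ aⱼ ≤ k` for every `j`, of `∏ⱼ 1/(aⱼ!)`. -/
noncomputable def ink (n k : ℕ) : ℝ :=
  ∑' l : {l : List ℕ // l.sum = n ∧ ∀ a ∈ l, 1 ≤ a ∧ a ≤ k},
    (l.1.map (fun a => (1 : ℝ) / a.factorial)).prod

/-!
Removing the first part of a composition shows that `i_n = i_{n,k}` satisfies the renewal
recurrence `i_n = ∑_{j=1}^{min(k,n)} i_{n-j}/j!` with `i_0 = 1`; so do the coefficients of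
`(1 - S)⁻¹`, because `(1 - S)⁻¹ = 1 + S (1 - S)⁻¹`. Multiplying by `αⁿ` gives a recurrence
`u_n = ∑ p_j u_{n-j}` whose weights `p_j = α^j/j!` sum to `1`. The maximum of `u` over a window
of `k` consecutive indices is then antitone and the minimum monotone, and because `p_1 > 0` the
maximum two windows later is at most `(1 - p_1^k) max + p_1^k min`; hence both limits agree.
The window minimum is handled as `-windowMax k (-u)`, the recurrence being linear.
-/

open Finset Topology Nat

def IsRenewalSeq {R : Type*} [Semiring R] (k : ℕ) (p u : ℕ → R) : Prop :=
  ∀ n, 0 < n → u n = ∑ i ∈ Icc 1 (min k n), p i * u (n - i)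

noncomputable def windowMax (k : ℕ) [NeZero k] (u : ℕ → ℝ) (n : ℕ) : ℝ :=
  (Ico n (n + k)).sup' (nonempty_Ico.2 (Nat.lt_add_of_pos_right (NeZero.pos k))) u

namespace IsRenewalSeq

section Semiring

variable {R : Type*} [Semiring R] {k : ℕ} {p u v : ℕ → R}

theorem unique (hu : IsRenewalSeq k p u) (hv : IsRenewalSeq k p v) (h0 : u 0 = v 0) :
    u = v := by
  funext n
  induction n using Nat.strong_induction_on with
  | _ n ih =>
    rcases Nat.eq_zero_or_pos n with rfl | hn
    · exact h0
    rw [hu n hn, hv n hn]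
    refine sum_congr rfl fun i hi => ?_
    rw [ih (n - i) (by simp only [mem_Icc, le_min_iff] at hi; omega)]

theorem eq_sum (hu : IsRenewalSeq k p u) {n : ℕ} (hk : 0 < k) (hn : k ≤ n) :
    u n = ∑ i ∈ Icc 1 k, p i * u (n - i) := by
  rw [hu n (by omega), min_eq_left hn]

end Semiring

theorem mul_pow {R : Type*} [CommSemiring R] {k : ℕ} {p u : ℕ → R} (hu : IsRenewalSeq k p u)
    (a : R) : IsRenewalSeq k (fun i => p i * a ^ i) (fun n => u n * a ^ n) := by
  intro n hn
  beta_reduce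
  rw [hu n hn, sum_mul]
  refine sum_congr rfl fun i hi => ?_
  simp only [mem_Icc, le_min_iff] at hi
  rw [← Nat.add_sub_of_le hi.2.2, pow_add, Nat.add_sub_cancel_left]
  ring

theorem neg {R : Type*} [Ring R] {k : ℕ} {p u : ℕ → R} (hu : IsRenewalSeq k p u) :
    IsRenewalSeq k p (-u) := by
  intro n hn
  simp [hu n hn]

variable {k : ℕ} [NeZero k] {p u : ℕ → ℝ}

theorem pos (hu : IsRenewalSeq k p u) (hp : ∀ i ∈ Icc 1 k, 0 ≤ p i) (hp1 : 0 < p 1)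
    (hu0 : 0 < u 0) (n : ℕ) : 0 < u n := by
  induction n using Nat.strong_induction_on with
  | _ n ih =>
    rcases Nat.eq_zero_or_pos n with rfl | hn
    · exact hu0
    have hk := NeZero.pos k
    rw [hu n hn, ← add_sum_erase _ _ (left_mem_Icc.2 (by omega) : 1 ∈ Icc 1 (min k n))]
    refine add_pos_of_pos_of_nonneg (mul_pos hp1 (ih _ (by omega))) (sum_nonneg fun i hi => ?_)
    simp only [mem_erase, mem_Icc, le_min_iff] at hi
    exact mul_nonneg (hp i (mem_Icc.2 ⟨hi.2.1, hi.2.2.1⟩)) (ih _ (by omega)).le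

variable (hp : ∀ i ∈ Icc 1 k, 0 ≤ p i) (hps : ∑ i ∈ Icc 1 k, p i = 1)
include hp hps

theorem le_mul_add_mul (hu : IsRenewalSeq k p u) {N : ℕ} {B : ℝ} (hN : k ≤ N)
    (hB : ∀ i ∈ Icc 1 k, u (N - i) ≤ B) : u N ≤ p 1 * u (N - 1) + (1 - p 1) * B := by
  have h1 : 1 ∈ Icc 1 k := left_mem_Icc.2 NeZero.one_le
  have hrest : ∑ i ∈ (Icc 1 k).erase 1, p i = 1 - p 1 := by
    rw [← hps, ← add_sum_erase _ _ h1, add_sub_cancel_left]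
  rw [hu.eq_sum (NeZero.pos k) hN, ← add_sum_erase _ _ h1]
  gcongr
  calc ∑ i ∈ (Icc 1 k).erase 1, p i * u (N - i)
      ≤ ∑ i ∈ (Icc 1 k).erase 1, p i * B :=
        sum_le_sum fun i hi =>
          mul_le_mul_of_nonneg_left (hB i (mem_of_mem_erase hi)) (hp i (mem_of_mem_erase hi))
    _ = (1 - p 1) * B := by rw [← sum_mul, hrest]

theorem le_of_forall_le (hu : IsRenewalSeq k p u) {N : ℕ} {B : ℝ} (hN : k ≤ N)
    (hB : ∀ i ∈ Icc 1 k, u (N - i) ≤ B) : u N ≤ B := by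
  have h1 : 1 ∈ Icc 1 k := left_mem_Icc.2 NeZero.one_le
  have := hu.le_mul_add_mul hp hps hN hB
  nlinarith [mul_le_mul_of_nonneg_left (hB 1 h1) (hp 1 h1)]

theorem antitone_windowMax (hu : IsRenewalSeq k p u) : Antitone (windowMax k u) := by
  refine antitone_nat_of_succ_le fun n => sup'_le _ _ fun j hj => ?_
  rw [mem_Ico] at hj
  rcases lt_or_eq_of_le (Nat.le_of_lt_succ (by omega : j < n + k + 1)) with hj' | rfl
  · exact le_sup' u (mem_Ico.2 ⟨by omega, hj'⟩)
  · refine hu.le_of_forall_le hp hps (by omega) fun i hi => le_sup' u ?_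
    simp only [mem_Icc] at hi
    simp only [mem_Ico]
    omega

theorem le_windowMax_of_le (hu : IsRenewalSeq k p u) {n j : ℕ} (hnj : n ≤ j) :
    u j ≤ windowMax k u n :=
  (le_sup' u (mem_Ico.2 ⟨le_rfl, Nat.lt_add_of_pos_right (NeZero.pos k)⟩)).trans
    (hu.antitone_windowMax hp hps hnj)

theorem le_sub_pow_mul (hu : IsRenewalSeq k p u) {n j : ℕ} (hj : n + k ≤ j) (t : ℕ) :
    u (j + t) ≤ windowMax k u n - p 1 ^ t * (windowMax k u n - u j) := by
  induction t with
  | zero => simp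
  | succ t ih =>
    have h1 : 1 ∈ Icc 1 k := left_mem_Icc.2 NeZero.one_le
    have step := hu.le_mul_add_mul hp hps (N := j + (t + 1)) (B := windowMax k u n) (by omega)
      fun i hi => hu.le_windowMax_of_le hp hps (by simp only [mem_Icc] at hi; omega)
    rw [show j + (t + 1) - 1 = j + t by omega] at step
    rw [pow_succ]
    nlinarith [mul_le_mul_of_nonneg_left ih (hp 1 h1)]

theorem windowMax_add_two_mul_le (hu : IsRenewalSeq k p u) (n : ℕ) :
    windowMax k u (n + 2 * k) ≤
      (1 - p 1 ^ k) * windowMax k u n - p 1 ^ k * windowMax k (-u) (n + k) := by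
  have h1 : 1 ∈ Icc 1 k := left_mem_Icc.2 NeZero.one_le
  have hp1 : p 1 ≤ 1 := hps ▸ single_le_sum hp h1
  obtain ⟨j, hj, hjmin⟩ := exists_mem_eq_sup'
    (nonempty_Ico.2 (Nat.lt_add_of_pos_right (NeZero.pos k))) (-u) (s := Ico (n + k) (n + k + k))
  replace hjmin : windowMax k (-u) (n + k) = -u j := hjmin
  rw [mem_Ico] at hj
  have hujM : u j ≤ windowMax k u n := hu.le_windowMax_of_le hp hps (by omega)
  calc windowMax k u (n + 2 * k) ≤ windowMax k u (j + 1) := hu.antitone_windowMax hp hps (by omega)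
    _ ≤ windowMax k u n - p 1 ^ k * (windowMax k u n - u j) := by
      refine sup'_le _ _ fun x hx => ?_
      rw [mem_Ico] at hx
      have hx' := hu.le_sub_pow_mul hp hps (n := n) (j := j) (by omega) (x - j)
      rw [Nat.add_sub_cancel' (by omega)] at hx'
      have hpow : p 1 ^ k ≤ p 1 ^ (x - j) := pow_le_pow_of_le_one (hp 1 h1) hp1 (by omega)
      nlinarith [mul_le_mul_of_nonneg_right hpow (sub_nonneg.2 hujM)]
    _ = (1 - p 1 ^ k) * windowMax k u n - p 1 ^ k * windowMax k (-u) (n + k) := by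
      rw [hjmin]
      ring

theorem tendsto_iInf_windowMax (hu : IsRenewalSeq k p u) (hp1 : 0 < p 1) :
    Tendsto u atTop (𝓝 (⨅ n, windowMax k u n)) := by
  set M := windowMax k u
  set M' := windowMax k (-u)
  have hupper (n : ℕ) : u n ≤ M n := hu.le_windowMax_of_le hp hps le_rfl
  have hlower (n : ℕ) : -u n ≤ M' n := hu.neg.le_windowMax_of_le hp hps le_rfl
  have hupper0 (n : ℕ) : u n ≤ M 0 := hu.le_windowMax_of_le hp hps (Nat.zero_le n)
  have hlower0 (n : ℕ) : -u n ≤ M' 0 := hu.neg.le_windowMax_of_le hp hps (Nat.zero_le n)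
  have hMt : Tendsto M atTop (𝓝 (⨅ n, M n)) :=
    tendsto_atTop_ciInf (hu.antitone_windowMax hp hps)
      ⟨-M' 0, by
        rintro _ ⟨n, rfl⟩
        linarith [hupper n, hlower0 n]⟩
  have hM't : Tendsto M' atTop (𝓝 (⨅ n, M' n)) :=
    tendsto_atTop_ciInf (hu.neg.antitone_windowMax hp hps)
      ⟨-M 0, by
        rintro _ ⟨n, rfl⟩
        linarith [hlower n, hupper0 n]⟩
  set L := ⨅ n, M n
  set L' := ⨅ n, M' n
  have hsum_nonneg : 0 ≤ L + L' := by
    have := le_of_tendsto_of_tendsto' hM't.neg hMt fun n => by linarith [hupper n, hlower n]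
    linarith
  have hsum_nonpos : L + L' ≤ 0 := by
    have hq : 0 < p 1 ^ k := pow_pos hp1 k
    have := le_of_tendsto_of_tendsto' (hMt.comp (tendsto_add_atTop_nat (2 * k)))
      (((hMt.const_mul (1 - p 1 ^ k)).sub
        ((hM't.comp (tendsto_add_atTop_nat k)).const_mul (p 1 ^ k))))
      (hu.windowMax_add_two_mul_le hp hps)
    nlinarith
  have hlim : Tendsto (fun n => -M' n) atTop (𝓝 L) := by
    rw [show L = -L' by linarith]
    exact hM't.neg
  exact tendsto_of_tendsto_of_tendsto_of_le_of_le hlim hMt (fun n => by linarith [hlower n]) hupper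

theorem exists_pos_tendsto (hu : IsRenewalSeq k p u) (hp1 : 0 < p 1) (hu0 : 0 < u 0) :
    ∃ c, 0 < c ∧ Tendsto u atTop (𝓝 c) := by
  have hlim := hu.tendsto_iInf_windowMax hp hps hp1
  refine ⟨_, ?_, hlim⟩
  have hneg : windowMax k (-u) 0 < 0 :=
    (sup'_lt_iff _).2 fun j _ => neg_neg_of_pos (hu.pos hp hp1 hu0 j)
  refine (neg_pos.2 hneg).trans_le (ge_of_tendsto' hlim fun n => ?_)
  have : -u n ≤ windowMax k (-u) 0 := hu.neg.le_windowMax_of_le hp hps (Nat.zero_le n)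
  linarith

end IsRenewalSeq

theorem IsRenewalSeq.eq_coeff_inv_one_sub {K : Type*} [Field K] {k : ℕ} {p u : ℕ → K}
    (hu : IsRenewalSeq k p u) (hu0 : u 0 = 1) (n : ℕ) :
    u n = coeff n (1 - ∑ i ∈ Icc 1 k, C (p i) * X ^ i)⁻¹ := by
  set f := ∑ i ∈ Icc 1 k, C (p i) * X ^ i
  have hf : constantCoeff f = 0 :=
    (map_sum _ _ _).trans <| sum_eq_zero fun i hi => by
      simp [zero_pow (by simp only [mem_Icc] at hi; omega : i ≠ 0)]
  have hg : (1 - f)⁻¹ = 1 + f * (1 - f)⁻¹ := by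
    linear_combination PowerSeries.mul_inv_cancel (1 - f) (by simp [hf])
  have hcoeff : IsRenewalSeq k p fun n => coeff n (1 - f)⁻¹ := by
    intro n hn
    calc coeff n (1 - f)⁻¹ = coeff n (f * (1 - f)⁻¹) := by
          conv_lhs => rw [hg]
          simp [coeff_one, hn.ne']
      _ = ∑ i ∈ Icc 1 k, if i ≤ n then p i * coeff (n - i) (1 - f)⁻¹ else 0 := by
          simp [f, sum_mul, mul_assoc, coeff_C_mul, coeff_X_pow_mul']
      _ = ∑ i ∈ Icc 1 (min k n), p i * coeff (n - i) (1 - f)⁻¹ := by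
          rw [← sum_filter]
          congr 1
          ext i
          simp only [mem_filter, mem_Icc, le_min_iff]
          omega
  exact congrFun (hu.unique hcoeff (by simp [hu0, hf])) n

abbrev BoundedComposition (k n : ℕ) : Type :=
  {l : List ℕ // l.sum = n ∧ ∀ a ∈ l, 1 ≤ a ∧ a ≤ k}

instance (k n : ℕ) : Finite (BoundedComposition k n) :=
  Finite.of_injective (fun l => (⟨l.1, fun hi => (l.2.2 _ hi).1, l.2.1⟩ : Composition n))
    fun _ _ h => Subtype.ext (congrArg Composition.blocks h)

def BoundedComposition.consEquiv (k n : ℕ) :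
    BoundedComposition k (n + 1) ≃ Σ i : Icc 1 (min k (n + 1)), BoundedComposition k (n + 1 - i) where
  toFun
    | ⟨[], h⟩ => absurd h.1 (by simp)
    | ⟨a :: t, h⟩ =>
      have ha := h.2 a List.mem_cons_self
      have hsum : a + t.sum = n + 1 := by simpa using h.1
      ⟨⟨a, by simp only [mem_Icc, le_min_iff]; omega⟩,
        ⟨t, show t.sum = n + 1 - a by omega, fun b hb => h.2 b (List.mem_cons_of_mem a hb)⟩⟩
  invFun
    | ⟨⟨i, hi⟩, ⟨t, ht⟩⟩ =>
      have hi' := mem_Icc.1 hi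
      have ht1 : t.sum = n + 1 - i := ht.1
      ⟨i :: t, by simp only [List.sum_cons, ht1, le_min_iff] at hi' ⊢; omega,
        fun b hb => (List.mem_cons.1 hb).elim (fun h => h ▸ ⟨hi'.1, (le_min_iff.1 hi'.2).1⟩)
          (ht.2 b)⟩
  left_inv
    | ⟨[], h⟩ => absurd h.1 (by simp)
    | ⟨_ :: _, _⟩ => rfl
  right_inv _ := rfl

theorem ink_zero (k : ℕ) : ink 0 k = 1 := by
  rw [ink, tsum_eq_single (⟨[], by simp⟩ : BoundedComposition k 0)]
  · simp
  · rintro ⟨_ | ⟨a, t⟩, hsum, hparts⟩ hne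
    · exact absurd rfl hne
    · have := (hparts a List.mem_cons_self).1
      rw [List.sum_cons] at hsum
      omega

theorem isRenewalSeq_ink (k : ℕ) : IsRenewalSeq k (fun i => 1 / (i ! : ℝ)) (ink · k) := by
  intro n hn
  obtain ⟨n, rfl⟩ := Nat.exists_eq_add_one_of_ne_zero hn.ne'
  beta_reduce
  rw [ink, ← (BoundedComposition.consEquiv k n).symm.tsum_eq,
    Summable.of_finite.tsum_sigma, ← Finset.tsum_subtype]
  congr 1
  funext i
  rw [ink, ← tsum_mul_left]
  rfl

theorem ink_coeff_and_asymptotics_general (k : ℕ)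
    (α : ℝ) (hα : α ∈ Set.Ioc (0 : ℝ) 1)
    (hroot : ∑ i ∈ Finset.Icc 1 k, α ^ i / (Nat.factorial i : ℝ) - 1 = 0) :
    (∀ n : ℕ, ink n k =
      PowerSeries.coeff (R := ℝ) n
        (1 - ∑ i ∈ Finset.Icc 1 k,
          PowerSeries.C (R := ℝ) ((1 : ℝ) / (Nat.factorial i : ℝ)) * (PowerSeries.X : PowerSeries ℝ) ^ i)⁻¹) ∧
    ∃ c : ℝ, 0 < c ∧
      Tendsto (fun n : ℕ => ink n k / (1 / α) ^ n) atTop (nhds c) := by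
  have : NeZero k := ⟨by rintro rfl; simp at hroot⟩
  have hu := isRenewalSeq_ink k
  refine ⟨hu.eq_coeff_inv_one_sub (ink_zero k), ?_⟩
  have hsum : ∑ i ∈ Icc 1 k, 1 / (i ! : ℝ) * α ^ i = 1 := by
    rw [← sub_eq_zero, ← hroot]
    exact congrArg (· - 1) (sum_congr rfl fun i _ => by ring)
  obtain ⟨c, hc, hlim⟩ := (hu.mul_pow α).exists_pos_tendsto
    (fun i _ => by have := hα.1.le; positivity) hsum (by simpa using hα.1) (by simp [ink_zero])
  exact ⟨c, hc, hlim.congr fun n => by rw [one_div, inv_pow, div_inv_eq_mul]⟩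

/-- Fix `k ∈ ℕ = {1,2,…}` and let `i_{n,k} = ∑ ∏ⱼ 1/(aⱼ!)` over all compositions of `n`
with parts in `{1,…,k}`. Then `i_{n,k}` is the coefficient of `xⁿ` in
`1/(1 - ∑_{i=1}^k x^i/i!)`, and `i_{n,k} ∼ c_k (1/α_k)ⁿ` for some constant `c_k > 0`,
where `α_k` is the unique root of `∑_{i=1}^k x^i/i! - 1` in `(0,1]`. -/
theorem ink_coeff_and_asymptotics (k : ℕ) (hk : 1 ≤ k)
    (α : ℝ) (hα : α ∈ Set.Ioc (0 : ℝ) 1)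
    (hroot : ∑ i ∈ Finset.Icc 1 k, α ^ i / (Nat.factorial i : ℝ) - 1 = 0) :
    (∀ n : ℕ, ink n k =
      PowerSeries.coeff (R := ℝ) n
        (1 - ∑ i ∈ Finset.Icc 1 k,
          PowerSeries.C (R := ℝ) ((1 : ℝ) / (Nat.factorial i : ℝ)) * (PowerSeries.X : PowerSeries ℝ) ^ i)⁻¹) ∧
    ∃ c : ℝ, 0 < c ∧
      Tendsto (fun n : ℕ => ink n k / (1 / α) ^ n) atTop (nhds c) :=
  ink_coeff_and_asymptotics_general k α hα hroot
end

section
/- Let i_n = Σ ∏_{j=1}^{m} 1/(a_j!), the sum ranging over all compositions (a_1,…,a_m) of n. Then i_n equals the coefficient of x^n in the power series expansion of 1/(2 − e^x), and i_n ∼ (1/(2 log 2)) · (1/log 2)^n as n → ∞. -/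
open Filter PowerSeries


/-- `iN n` = `iₙ`: the sum, over all compositions `(a₁,…,a_m)` of `n`, of `∏ⱼ 1/(aⱼ!)`. -/
noncomputable def iN (n : ℕ) : ℝ :=
  ∑' l : {l : List ℕ // l.sum = n ∧ ∀ a ∈ l, 1 ≤ a},
    (l.1.map (fun a => (1 : ℝ) / a.factorial)).prod

/-!
Splitting off the first block of a composition shows that the generating function `I` of the
`iₙ` satisfies `I = 1 + (eˣ - 1) I`, so `I = 1 / (2 - eˣ) = ∑ⱼ e^{jx} / 2^{j+1}` and
`iₙ = ∑ⱼ jⁿ 2^{-(j+1)} / n!`. With `L = log 2`, the series `∑ⱼ jⁿ 2^{-j}` samples the unimodal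
function `tⁿ e^{-Lt}` at the integers; it differs from the integral `n! / L^{n+1}` by at most the
maximum `(n/L)ⁿ e^{-n}`, and after scaling by `Lⁿ / n!` this error is `nⁿ e^{-n} / n! = O(n^{-1/2})`
by Stirling's formula.
-/

open Real
open scoped Nat Topology

namespace Composition

lemma headI_pos {n : ℕ} (c : Composition (n + 1)) : 0 < c.blocks.headI := by
  obtain ⟨_ | ⟨a, l⟩, hpos, hsum⟩ := c
  · simp at hsum
  · exact hpos List.mem_cons_self

lemma headI_add_sum_tail {n : ℕ} (c : Composition (n + 1)) :
    c.blocks.headI + c.blocks.tail.sum = n + 1 := by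
  obtain ⟨_ | ⟨a, l⟩, hpos, hsum⟩ := c
  · simp at hsum
  · simpa using hsum

/-- The first block of the composition is `i + 1`. -/
def consEquiv (n : ℕ) : (Σ i : Fin (n + 1), Composition (n - i)) ≃ Composition (n + 1) where
  toFun p :=
    { blocks := (p.1 + 1) :: p.2.blocks
      blocks_pos := by
        simp only [List.mem_cons, forall_eq_or_imp]
        exact ⟨Nat.succ_pos _, fun _ => p.2.blocks_pos⟩
      blocks_sum := by
        rw [List.sum_cons, p.2.blocks_sum]
        omega }
  invFun c :=
    ⟨⟨c.blocks.headI - 1, by have := c.headI_add_sum_tail; omega⟩,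
      { blocks := c.blocks.tail
        blocks_pos := fun h => c.blocks_pos (List.mem_of_mem_tail h)
        blocks_sum := by
          have := c.headI_add_sum_tail
          have := c.headI_pos
          simp only
          omega }⟩
  left_inv _ := rfl
  right_inv c := by
    ext1
    obtain ⟨_ | ⟨a, l⟩, hpos, hsum⟩ := c
    · simp at hsum
    · have := hpos List.mem_cons_self
      simp only [List.headI_cons, List.tail_cons, List.cons.injEq, and_true]
      omega

@[simp]
lemma consEquiv_blocks (n : ℕ) (p : Σ i : Fin (n + 1), Composition (n - i)) :
    (consEquiv n p).blocks = ((p.1 : ℕ) + 1) :: p.2.blocks :=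
  rfl

end Composition

section CompositionSum

open Finset hiding mk

variable {R : Type*} [Semiring R]

def compositionSum (f : ℕ → R) (n : ℕ) : R :=
  ∑ c : Composition n, (c.blocks.map f).prod

lemma compositionSum_zero (f : ℕ → R) : compositionSum f 0 = 1 := by
  rw [compositionSum, Fintype.sum_eq_single (Composition.ones 0)]
  · simp
  · intro c hc
    exact absurd (Composition.ext (by simp [Composition.blocks_eq_nil])) hc

lemma compositionSum_succ (f : ℕ → R) (n : ℕ) :
    compositionSum f (n + 1) =
      ∑ p ∈ antidiagonal n, f (p.1 + 1) * compositionSum f p.2 := by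
  rw [compositionSum, ← (Composition.consEquiv n).sum_comp, Fintype.sum_sigma,
    Finset.Nat.sum_antidiagonal_eq_sum_range_succ_mk, ← Fin.sum_univ_eq_sum_range]
  simp [compositionSum, Finset.mul_sum]

lemma mk_compositionSum (f : ℕ → R) :
    PowerSeries.mk (compositionSum f) =
      1 + X * PowerSeries.mk (fun a => f (a + 1)) * PowerSeries.mk (compositionSum f) := by
  ext (_ | n)
  · simp [compositionSum_zero]
  · rw [map_add, coeff_mk, mul_assoc, coeff_succ_X_mul, coeff_mul, compositionSum_succ, coeff_one]
    simp

end CompositionSum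

lemma iN_eq_compositionSum (n : ℕ) : iN n = compositionSum (fun a => 1 / (a ! : ℝ)) n := by
  let e : Composition n ≃ {l : List ℕ // l.sum = n ∧ ∀ a ∈ l, 1 ≤ a} :=
    { toFun := fun c => ⟨c.blocks, c.blocks_sum, fun _ => c.one_le_blocks⟩
      invFun := fun l => ⟨l.1, fun h => l.2.2 _ h, l.2.1⟩
      left_inv := fun _ => rfl
      right_inv := fun _ => rfl }
  rw [iN, ← e.tsum_eq, tsum_fintype]
  rfl

lemma two_sub_exp_eq_one_sub_X_mul :
    2 - exp ℝ = 1 - X * PowerSeries.mk fun a => 1 / ((a + 1)! : ℝ) := by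
  rw [← map_ofNat C 2]
  ext (_ | n)
  · norm_num [coeff_zero_eq_constantCoeff]
  · simp [coeff_succ_X_mul]

lemma mk_iN : PowerSeries.mk iN = (2 - exp ℝ)⁻¹ := by
  rw [eq_inv_iff_mul_eq_one (by rw [map_sub, constantCoeff_exp, map_ofNat]; norm_num), mul_comm,
    two_sub_exp_eq_one_sub_X_mul, sub_mul, one_mul, sub_eq_iff_eq_add, funext iN_eq_compositionSum]
  exact mk_compositionSum fun a => 1 / (a ! : ℝ)

section ExpGeometric

open Finset hiding mk

variable {𝕜 : Type*} [NormedField 𝕜] [CharZero 𝕜]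

lemma sum_antidiagonal_pow_div_factorial_mul (a b : 𝕜) (n : ℕ) :
    ∑ p ∈ antidiagonal n, a ^ p.1 / p.1 ! * (b ^ p.2 / p.2 !) = (a + b) ^ n / n ! := by
  simpa [coeff_mul, coeff_rescale, coeff_exp, div_eq_mul_inv, mul_comm, mul_left_comm, mul_assoc]
    using congrArg (coeff n) (exp_mul_exp_eq_exp_add a b)

lemma coeff_mk_tsum_pow_mul_exp {r : 𝕜} (hr : ‖r‖ < 1) (n : ℕ) :
    coeff n (PowerSeries.mk (fun m => (∑' j : ℕ, (j : 𝕜) ^ m * r ^ (j + 1)) / m !) * exp 𝕜) =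
      (∑' j : ℕ, ((j + 1 : ℕ) : 𝕜) ^ n * r ^ (j + 1)) / n ! := by
  have hsum (m : ℕ) : Summable fun j : ℕ => (j : 𝕜) ^ m * r ^ (j + 1) := by
    simpa only [pow_succ, mul_assoc] using
      (summable_pow_mul_geometric_of_norm_lt_one m hr).mul_right r
  rw [coeff_mul]
  simp only [coeff_mk, coeff_exp, eq_ratCast, Rat.cast_div, Rat.cast_one, Rat.cast_natCast]
  calc _ = ∑ p ∈ antidiagonal n,
        ∑' j : ℕ, (j : 𝕜) ^ p.1 * r ^ (j + 1) / p.1 ! * ((1 : 𝕜) ^ p.2 / p.2 !) := by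
          simp only [one_pow, tsum_div_const, tsum_mul_right]
    _ = ∑' j : ℕ,
        (∑ p ∈ antidiagonal n, (j : 𝕜) ^ p.1 / p.1 ! * ((1 : 𝕜) ^ p.2 / p.2 !)) * r ^ (j + 1) := by
          rw [← Summable.tsum_finsetSum fun p _ => ?_]
          · simp only [Finset.sum_mul]
            exact tsum_congr fun j => Finset.sum_congr rfl fun p _ => by ring
          · exact ((hsum p.1).div_const (p.1 ! : 𝕜)).mul_right ((1 : 𝕜) ^ p.2 / p.2 !)
    _ = _ := by
          simp only [sum_antidiagonal_pow_div_factorial_mul, ← tsum_div_const]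
          push_cast
          exact tsum_congr fun j => by ring

lemma coeff_inv_C_sub_exp {c : 𝕜} (hc : 1 < ‖c‖) (n : ℕ) :
    coeff n (C c - exp 𝕜)⁻¹ = (∑' j : ℕ, (j : 𝕜) ^ n * c⁻¹ ^ (j + 1)) / n ! := by
  have hc0 : c ≠ 0 := norm_pos_iff.mp (one_pos.trans hc)
  have hr : ‖c⁻¹‖ < 1 := by rw [norm_inv]; exact inv_lt_one_of_one_lt₀ hc
  have hsum (m : ℕ) := summable_pow_mul_geometric_of_norm_lt_one m hr
  have hmul (m : ℕ) :
      (∑' j : ℕ, (j : 𝕜) ^ m * c⁻¹ ^ (j + 1)) * c = ∑' j : ℕ, (j : 𝕜) ^ m * c⁻¹ ^ j := by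
    rw [← tsum_mul_right]
    exact tsum_congr fun j => by rw [pow_succ, mul_assoc, mul_assoc, inv_mul_cancel₀ hc0, mul_one]
  have hshift (m : ℕ) : ∑' j : ℕ, ((j + 1 : ℕ) : 𝕜) ^ m * c⁻¹ ^ (j + 1) =
      ∑' j : ℕ, (j : 𝕜) ^ m * c⁻¹ ^ j - 0 ^ m := by
    rw [(hsum m).tsum_eq_zero_add]
    simp
  suffices
      PowerSeries.mk (fun m => (∑' j : ℕ, (j : 𝕜) ^ m * c⁻¹ ^ (j + 1)) / m !) * (C c - exp 𝕜) = 1 by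
    rw [← (eq_inv_iff_mul_eq_one _).mpr this, coeff_mk]
    simpa using sub_ne_zero.mpr (fun h : c = 1 => by simp [h] at hc)
  ext m
  rw [mul_sub, map_sub, coeff_mk_tsum_pow_mul_exp hr, coeff_mul_C, coeff_mk, coeff_one,
    div_mul_eq_mul_div, hmul, hshift, ← sub_div, sub_sub_cancel]
  rcases m with _ | m <;> simp

end ExpGeometric

section Unimodal

open Finset MeasureTheory Set

variable {g : ℝ → ℝ} {a : ℝ}

/-- `g = g ∘ min · a + g ∘ max · a - g a`: the sum-integral errors of the increasing and of the
decreasing part have opposite signs, and each telescopes to at most `g a`. -/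
lemma abs_sum_range_sub_intervalIntegral_le_of_unimodal (ha : 0 ≤ a)
    (hmono : MonotoneOn g (Icc 0 a)) (hanti : AntitoneOn g (Ici a)) (hg : ∀ t, 0 ≤ t → 0 ≤ g t)
    (N : ℕ) : |∑ j ∈ range N, g j - ∫ t in (0 : ℝ)..N, g t| ≤ g a := by
  set g₁ : ℝ → ℝ := fun t => g (min t a)
  set g₂ : ℝ → ℝ := fun t => g (max t a)
  have h₁ : MonotoneOn g₁ (Ici 0) := fun s hs t ht hst =>
    hmono ⟨le_min hs ha, min_le_right _ _⟩ ⟨le_min ht ha, min_le_right _ _⟩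
      (min_le_min_right a hst)
  have h₂ : Antitone g₂ := fun s t hst =>
    hanti (le_max_right s a) (le_max_right t a) (max_le_max_right a hst)
  have hN : Icc (0 : ℝ) (0 + N) ⊆ Ici 0 := Icc_subset_Ici_self
  have hsplit : ∑ j ∈ range N, g j - ∫ t in (0 : ℝ)..N, g t =
      (∑ j ∈ range N, g₁ j - ∫ t in (0 : ℝ)..N, g₁ t) +
        (∑ j ∈ range N, g₂ j - ∫ t in (0 : ℝ)..N, g₂ t) := by
    have hg₁₂ : g = fun t => g₁ t + g₂ t - g a := funext fun t => by
      rcases le_total t a with h | h <;> simp [g₁, g₂, h]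
    have hi₁ : IntervalIntegrable g₁ volume 0 N :=
      (h₁.mono (uIcc_of_le (N.cast_nonneg : (0 : ℝ) ≤ N) ▸ Icc_subset_Ici_self)).intervalIntegrable
    have hi₂ : IntervalIntegrable g₂ volume 0 N := (h₂.antitoneOn _).intervalIntegrable
    rw [hg₁₂, intervalIntegral.integral_sub (hi₁.add hi₂) intervalIntegrable_const,
      intervalIntegral.integral_add hi₁ hi₂]
    simp only [sum_sub_distrib, sum_add_distrib, sum_const, card_range, nsmul_eq_mul,
      intervalIntegral.integral_const, sub_zero, smul_eq_mul]
    ring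
  have lo₁ : ∑ j ∈ range N, g₁ j ≤ ∫ t in (0 : ℝ)..N, g₁ t := by
    simpa using (h₁.mono hN).sum_le_integral
  have up₁ : ∫ t in (0 : ℝ)..N, g₁ t ≤ ∑ j ∈ range N, g₁ (j + 1 : ℕ) := by
    simpa using (h₁.mono hN).integral_le_sum
  have lo₂ : ∑ j ∈ range N, g₂ (j + 1 : ℕ) ≤ ∫ t in (0 : ℝ)..N, g₂ t := by
    simpa using ((h₂.antitoneOn _).mono hN).sum_le_integral
  have up₂ : ∫ t in (0 : ℝ)..N, g₂ t ≤ ∑ j ∈ range N, g₂ j := by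
    simpa using ((h₂.antitoneOn _).mono hN).integral_le_sum
  have tel₁ := sum_range_sub (fun j : ℕ => g₁ j) N
  have tel₂ := sum_range_sub (fun j : ℕ => g₂ j) N
  rw [sum_sub_distrib, Nat.cast_zero] at tel₁ tel₂
  have : g₁ N ≤ g a :=
    hmono ⟨le_min N.cast_nonneg ha, min_le_right _ _⟩ ⟨ha, le_rfl⟩ (min_le_right _ _)
  have : 0 ≤ g₁ 0 := hg _ (le_min le_rfl ha)
  have : g₂ 0 = g a := by simp [g₂, ha]
  have : 0 ≤ g₂ N := hg _ (ha.trans (le_max_right _ _))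
  rw [hsplit, abs_le]
  constructor <;> linarith

lemma abs_tsum_sub_integral_le_of_unimodal (ha : 0 ≤ a)
    (hmono : MonotoneOn g (Icc 0 a)) (hanti : AntitoneOn g (Ici a)) (hg : ∀ t, 0 ≤ t → 0 ≤ g t)
    (hsum : Summable fun j : ℕ => g j) (hint : IntegrableOn g (Ioi 0)) :
    |∑' j : ℕ, g j - ∫ t in Ioi 0, g t| ≤ g a :=
  le_of_tendsto'
    ((hsum.hasSum.tendsto_sum_nat.sub
      (intervalIntegral_tendsto_integral_Ioi 0 hint tendsto_natCast_atTop_atTop)).abs)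
    (abs_sum_range_sub_intervalIntegral_le_of_unimodal ha hmono hanti hg)

end Unimodal

section PowMulExpNeg

open MeasureTheory Set

variable {b : ℝ} (n : ℕ)

lemma hasDerivAt_pow_mul_exp_neg_mul (t : ℝ) :
    HasDerivAt (fun t => t ^ n * exp (-(b * t)))
      ((n * t ^ (n - 1) - b * t ^ n) * exp (-(b * t))) t := by
  have hlin : HasDerivAt (fun t => -(b * t)) (-b) t := by
    simpa using ((hasDerivAt_id t).const_mul b).fun_neg
  exact ((hasDerivAt_pow n t).fun_mul hlin.exp).congr_deriv (by ring)

lemma natCast_mul_pow_sub_one_sub_mul_pow {t : ℝ} (ht : t ≠ 0) :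
    n * t ^ (n - 1) - b * t ^ n = t ^ n / t * (n - b * t) := by
  rcases n with _ | n
  · field_simp
    simp
  · rw [Nat.add_sub_cancel]
    field_simp
    ring

lemma monotoneOn_pow_mul_exp_neg_mul (hb : 0 < b) :
    MonotoneOn (fun t => t ^ n * exp (-(b * t))) (Icc 0 (n / b)) := by
  refine monotoneOn_of_deriv_nonneg (convex_Icc _ _)
    (fun t _ => (hasDerivAt_pow_mul_exp_neg_mul n t).continuousAt.continuousWithinAt)
    (fun t _ => (hasDerivAt_pow_mul_exp_neg_mul n t).differentiableAt.differentiableWithinAt)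
    fun t ht => ?_
  rw [interior_Icc] at ht
  rw [(hasDerivAt_pow_mul_exp_neg_mul n t).deriv, natCast_mul_pow_sub_one_sub_mul_pow n ht.1.ne']
  have : b * t ≤ n := by rw [← le_div_iff₀' hb]; exact ht.2.le
  have := ht.1
  positivity

lemma antitoneOn_pow_mul_exp_neg_mul (hb : 0 < b) :
    AntitoneOn (fun t => t ^ n * exp (-(b * t))) (Ici (n / b)) := by
  refine antitoneOn_of_deriv_nonpos (convex_Ici _)
    (fun t _ => (hasDerivAt_pow_mul_exp_neg_mul n t).continuousAt.continuousWithinAt)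
    (fun t _ => (hasDerivAt_pow_mul_exp_neg_mul n t).differentiableAt.differentiableWithinAt)
    fun t ht => ?_
  rw [interior_Ici] at ht
  have ht0 : 0 < t := (div_nonneg n.cast_nonneg hb.le).trans_lt ht
  rw [(hasDerivAt_pow_mul_exp_neg_mul n t).deriv, natCast_mul_pow_sub_one_sub_mul_pow n ht0.ne']
  have : n ≤ b * t := by rw [← div_le_iff₀' hb]; exact ht.le
  exact mul_nonpos_of_nonpos_of_nonneg
    (mul_nonpos_of_nonneg_of_nonpos (by positivity) (by linarith)) (exp_pos _).le

lemma integrableOn_pow_mul_exp_neg_mul_Ioi (hb : 0 < b) :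
    IntegrableOn (fun t => t ^ n * exp (-(b * t))) (Ioi 0) := by
  simpa [rpow_natCast] using
    integrableOn_rpow_mul_exp_neg_mul_rpow (neg_one_lt_zero.trans_le n.cast_nonneg) one_pos hb

lemma integral_pow_mul_exp_neg_mul_Ioi (hb : 0 < b) :
    ∫ t in Ioi 0, t ^ n * exp (-(b * t)) = n ! / b ^ (n + 1) := by
  have := integral_rpow_mul_exp_neg_mul_Ioi (a := n + 1) (by positivity) hb
  simp only [add_sub_cancel_right, rpow_natCast, Gamma_nat_eq_factorial] at this
  rw [this, ← Nat.cast_succ, rpow_natCast, one_div, inv_pow, inv_mul_eq_div]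

lemma abs_tsum_pow_mul_exp_neg_mul_sub_le (hb : 0 < b) :
    |∑' j : ℕ, (j : ℝ) ^ n * exp (-(b * j)) - n ! / b ^ (n + 1)| ≤ (n / b) ^ n * exp (-n) := by
  have hsum : Summable fun j : ℕ => (j : ℝ) ^ n * exp (-(b * j)) := by
    have hr : ‖exp (-b)‖ < 1 := by
      rw [norm_of_nonneg (exp_pos _).le, exp_lt_one_iff, neg_lt_zero]
      exact hb
    refine (summable_pow_mul_geometric_of_norm_lt_one n hr).congr fun j => ?_
    rw [← exp_nat_mul, mul_neg, mul_comm (j : ℝ) b]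
  have := abs_tsum_sub_integral_le_of_unimodal (div_nonneg n.cast_nonneg hb.le)
    (monotoneOn_pow_mul_exp_neg_mul n hb) (antitoneOn_pow_mul_exp_neg_mul n hb)
    (fun t ht => by positivity) hsum (integrableOn_pow_mul_exp_neg_mul_Ioi n hb)
  rwa [integral_pow_mul_exp_neg_mul_Ioi n hb, mul_div_cancel₀ _ hb.ne'] at this

end PowMulExpNeg

lemma tendsto_pow_mul_exp_neg_div_factorial :
    Tendsto (fun n : ℕ => (n : ℝ) ^ n * exp (-n) / n !) atTop (𝓝 0) := by
  have hlim : Tendsto (fun n : ℕ => (√(2 * π * n))⁻¹) atTop (𝓝 0) :=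
    tendsto_inv_atTop_zero.comp (tendsto_sqrt_atTop.comp
      (tendsto_natCast_atTop_atTop.const_mul_atTop (by positivity)))
  refine squeeze_zero' (Eventually.of_forall fun n => by positivity) ?_ hlim
  filter_upwards [eventually_ne_atTop 0] with n hn
  have hstirling := Stirling.le_factorial_stirling n
  rw [div_pow, exp_one_pow, div_eq_mul_inv, ← exp_neg] at hstirling
  rw [div_le_iff₀ (by positivity), ← div_eq_inv_mul, le_div_iff₀' (by positivity)]
  linarith

lemma abs_coeff_inv_C_sub_exp_mul_log_pow_sub_le {c : ℝ} (hc : 1 < c) (n : ℕ) :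
    |coeff n (C c - exp ℝ)⁻¹ * log c ^ n - 1 / (c * log c)| ≤
      c⁻¹ * ((n : ℝ) ^ n * exp (-n) / n !) := by
  set b := log c
  have hb : 0 < b := log_pos hc
  have hc0 : 0 < c := one_pos.trans hc
  have hcoeff : coeff n (C c - exp ℝ)⁻¹ = c⁻¹ * (∑' j : ℕ, (j : ℝ) ^ n * exp (-(b * j))) / n ! := by
    rw [coeff_inv_C_sub_exp (by rwa [norm_of_nonneg hc0.le]) n, ← tsum_mul_left]
    congr 1
    refine tsum_congr fun j => ?_
    rw [show -(b * j) = j * -b by ring, exp_nat_mul, exp_neg, exp_log hc0, pow_succ]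
    ring
  have hsplit : coeff n (C c - exp ℝ)⁻¹ * b ^ n - 1 / (c * b) =
      c⁻¹ * b ^ n / n ! * (∑' j : ℕ, (j : ℝ) ^ n * exp (-(b * j)) - n ! / b ^ (n + 1)) := by
    rw [hcoeff]
    field_simp
    ring
  have hpow : b ^ n * (n / b) ^ n = (n : ℝ) ^ n := by rw [← mul_pow, mul_div_cancel₀ _ hb.ne']
  rw [hsplit, abs_mul, abs_of_nonneg (by positivity)]
  calc _ ≤ c⁻¹ * b ^ n / n ! * ((n / b) ^ n * exp (-n)) := by
        gcongr
        exact abs_tsum_pow_mul_exp_neg_mul_sub_le n hb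
    _ = _ := by
        rw [← hpow]
        ring

lemma tendsto_coeff_inv_C_sub_exp_mul_log_pow {c : ℝ} (hc : 1 < c) :
    Tendsto (fun n => coeff n (C c - exp ℝ)⁻¹ * log c ^ n) atTop (𝓝 (1 / (c * log c))) := by
  rw [tendsto_iff_norm_sub_tendsto_zero]
  refine squeeze_zero (fun n => norm_nonneg _)
    (abs_coeff_inv_C_sub_exp_mul_log_pow_sub_le hc) ?_
  simpa using tendsto_pow_mul_exp_neg_div_factorial.const_mul c⁻¹

/-- `iₙ` equals the coefficient of `xⁿ` in `1/(2 - eˣ)`, and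
`iₙ ∼ (1/(2 log 2)) · (1/log 2)ⁿ` as `n → ∞`. -/
theorem iN_coeff_and_asymptotics :
    (∀ n : ℕ, iN n = PowerSeries.coeff n (2 - PowerSeries.exp ℝ)⁻¹) ∧
    Tendsto (fun n : ℕ => iN n / (1 / Real.log 2) ^ n) atTop
      (nhds (1 / (2 * Real.log 2))) := by
  have hcoeff (n : ℕ) : iN n = coeff n (2 - exp ℝ)⁻¹ := by rw [← mk_iN, coeff_mk]
  refine ⟨hcoeff, ?_⟩
  have h := tendsto_coeff_inv_C_sub_exp_mul_log_pow one_lt_two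
  rw [map_ofNat] at h
  refine h.congr fun n => ?_
  rw [hcoeff, one_div, inv_pow, div_inv_eq_mul]
end

section
/- Let s_n be the total number of surjections from {1,…,n} onto {1,…,m}, summed over all m ≥ 1 (the n-th ordered Bell / Fubini number). Then s_n ∼ (1/(2 log 2)) · (1/log 2)^n · n! as n → ∞. -/
/-!
Sorting the maps `Fin n → Fin k` by their image gives `k ^ n = ∑ⱼ C(k, j) · surjCard n j`;
since `∑ₖ C(k, j) / 2 ^ (k + 1) = 1`, this yields `sₙ = ∑ₖ kⁿ / 2 ^ (k + 1)`. Up to the factor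
`1 / (2 log 2)`, the normalised sum `sₙ (log 2)ⁿ / n!` is the sum over the integers of the density
of the Gamma law with shape `n + 1` and rate `log 2`. That density is unimodal, so its integer sum
differs from its integral `1` by at most twice its peak value, which is `O(1 / √n)` by Stirling's
formula.
-/

open Filter


/-- `surj n` = `sₙ`: the number of pairs `(m, f)` with `m ≥ 1` and `f` a surjection
from `{1,…,n}` onto `{1,…,m}` (the `n`-th ordered Bell / Fubini number). -/
noncomputable def surj (n : ℕ) : ℕ :=
  Nat.card (Σ m : {m : ℕ // 1 ≤ m}, {f : Fin n → Fin (m : ℕ) // Function.Surjective f})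

open Finset Function MeasureTheory Real
open scoped Nat Topology

def surjCard (n j : ℕ) : ℕ := Fintype.card {f : Fin n → Fin j // Surjective f}

theorem surjCard_eq_zero_of_lt {n j : ℕ} (h : n < j) : surjCard n j = 0 :=
  Fintype.card_eq_zero_iff.2
    ⟨fun f => (Fintype.card_le_of_surjective f.1 f.2).not_gt (by simpa)⟩

theorem card_image_univ_eq_surjCard (n : ℕ) {k : ℕ} (s : Finset (Fin k)) :
    Fintype.card {f : Fin n → Fin k // univ.image f = s} = surjCard n #s := by
  let e : {f : Fin n → Fin k // univ.image f = s} ≃ {g : Fin n → s // Surjective g} :=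
    { toFun f :=
        ⟨fun i => ⟨f.1 i, (Finset.ext_iff.1 f.2 _).1 (mem_image_of_mem _ (mem_univ i))⟩,
        fun y => by
          obtain ⟨i, -, hi⟩ := mem_image.1 ((Finset.ext_iff.1 f.2 y).2 y.2)
          exact ⟨i, Subtype.ext hi⟩⟩
      invFun g := ⟨fun i => g.1 i, by
        ext y
        simp only [mem_image, mem_univ, true_and]
        exact ⟨by rintro ⟨i, rfl⟩; exact (g.1 i).2,
          fun hy => (g.2 ⟨y, hy⟩).imp fun i hi => by rw [hi]⟩⟩
      left_inv _ := rfl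
      right_inv _ := rfl }
  rw [Fintype.card_congr e, surjCard, ← Fintype.card_coe s]
  exact Fintype.card_congr (Equiv.subtypeEquiv (Equiv.arrowCongr (.refl _) (Fintype.equivFin s))
    fun g => by simp [Equiv.arrowCongr])

theorem pow_eq_sum_choose_mul_surjCard (n k : ℕ) :
    k ^ n = ∑ j ∈ range (n + 1), k.choose j * surjCard n j := by
  have by_image : k ^ n = ∑ j ∈ range (k + 1), k.choose j * surjCard n j := by
    have := Fintype.card_congr (Equiv.sigmaFiberEquiv fun f : Fin n → Fin k => univ.image f).symm
    rw [Fintype.card_sigma, Fintype.card_fun, Fintype.card_fin, Fintype.card_fin] at this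
    simp_rw [this, card_image_univ_eq_surjCard, ← powerset_univ, sum_powerset_apply_card,
      card_univ, Fintype.card_fin, smul_eq_mul]
  rw [by_image]
  rcases le_total k n with hkn | hnk
  · refine sum_subset (range_subset_range.2 (by omega)) fun j _ hj => ?_
    rw [Nat.choose_eq_zero_of_lt (by simp only [mem_range, not_lt] at hj; omega), zero_mul]
  · refine (sum_subset (range_subset_range.2 (by omega)) fun j _ hj => ?_).symm
    rw [surjCard_eq_zero_of_lt (by simp only [mem_range, not_lt] at hj; omega), mul_zero]

theorem surj_eq_sum_surjCard {n : ℕ} (hn : n ≠ 0) :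
    surj n = ∑ j ∈ range (n + 1), surjCard n j := by
  let e : (Σ m : {m : ℕ // 1 ≤ m}, {f : Fin n → Fin m // Surjective f}) ≃
      Σ j : Fin (n + 1), {f : Fin n → Fin j // Surjective f} :=
    { toFun x :=
        ⟨⟨x.1, Nat.lt_succ_of_le (by simpa using Fintype.card_le_of_surjective _ x.2.2)⟩,
          x.2⟩
      invFun y :=
        ⟨⟨y.1, Nat.pos_of_ne_zero fun h => (h ▸ y.2.1 ⟨0, Nat.pos_of_ne_zero hn⟩).elim0⟩,
          y.2⟩
      left_inv _ := rfl
      right_inv _ := rfl }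
  rw [surj, Nat.card_congr e, Nat.card_eq_fintype_card, Fintype.card_sigma]
  exact Fin.sum_univ_eq_sum_range (surjCard n) (n + 1)

theorem hasSum_choose_div_two_pow (j : ℕ) :
    HasSum (fun k : ℕ => (k.choose j : ℝ) / 2 ^ (k + 1)) 1 := by
  rw [← hasSum_nat_add_iff' j, sum_eq_zero fun i hi => by
    rw [Nat.choose_eq_zero_of_lt (mem_range.1 hi), Nat.cast_zero, zero_div], sub_zero]
  have := (hasSum_choose_mul_geometric_of_norm_lt_one (𝕜 := ℝ) j (r := 2⁻¹)
    (by norm_num)).mul_left (2⁻¹ ^ (j + 1))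
  rw [show (2⁻¹ : ℝ) ^ (j + 1) * (1 / (1 - 2⁻¹) ^ (j + 1)) = 1 by norm_num] at this
  refine this.congr_fun fun k => ?_
  rw [div_eq_mul_inv, ← inv_pow]
  ring

theorem hasSum_pow_div_two_pow_surj {n : ℕ} (hn : n ≠ 0) :
    HasSum (fun k : ℕ => (k : ℝ) ^ n / 2 ^ (k + 1)) (surj n) := by
  have h := hasSum_sum fun j (_ : j ∈ range (n + 1)) =>
    (hasSum_choose_div_two_pow j).mul_left (surjCard n j : ℝ)
  rw [surj_eq_sum_surjCard hn]
  push_cast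
  simp only [mul_one] at h
  refine h.congr_fun fun k => ?_
  have h_pow := congrArg (Nat.cast : ℕ → ℝ) (pow_eq_sum_choose_mul_surjCard n k)
  push_cast at h_pow
  rw [h_pow, sum_div]
  exact sum_congr rfl fun j _ => by ring

section Unimodal

open Set

variable {f : ℝ → ℝ}

theorem abs_tsum_sub_integral_le_of_monotoneOn_of_antitoneOn (N : ℕ) {B : ℝ}
    (mono : MonotoneOn f (Icc 0 N)) (anti : AntitoneOn f (Ici (N + 1 : ℕ)))
    (nonneg : ∀ x, 0 ≤ x → 0 ≤ f x) (le_bound : ∀ x, 0 ≤ x → f x ≤ B)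
    (integrable : IntegrableOn f (Ioi 0)) :
    |∑' k : ℕ, f k - ∫ x in Ioi 0, f x| ≤ 2 * B := by
  have hN : (N : ℝ) ≤ (N + 1 : ℕ) := by push_cast; linarith
  have integrable' : IntegrableOn f (Ioi (N + 1 : ℕ)) :=
    integrable.mono_set (Ioi_subset_Ioi (by positivity))
  have nonneg' : ∀ x ∈ Ioi ((N + 1 : ℕ) : ℝ), 0 ≤ f x :=
    fun x hx => nonneg x ((Nat.cast_nonneg _).trans hx.out.le)
  have summable : Summable fun k : ℕ => f k :=
    anti.summable_of_integrableOn_Ioi integrable' nonneg'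
  have interval_integrable {a b : ℝ} (ha : 0 ≤ a) (hab : a ≤ b) :
      IntervalIntegrable f volume a b :=
    (intervalIntegrable_iff_integrableOn_Ioc_of_le hab).2
      (integrable.mono_set fun x hx => ha.trans_lt hx.1)
  have split_integral : ∫ x in Ioi 0, f x = (∫ x in (0 : ℝ)..N, f x)
      + (∫ x in (N : ℝ)..(N + 1 : ℕ), f x) + ∫ x in Ioi ((N + 1 : ℕ) : ℝ), f x := by
    rw [intervalIntegral.integral_add_adjacent_intervals
      (interval_integrable le_rfl (Nat.cast_nonneg _)) (interval_integrable (Nat.cast_nonneg _) hN),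
      intervalIntegral.integral_interval_add_Ioi integrable integrable']
  have middle_le : (∫ x in (N : ℝ)..(N + 1 : ℕ), f x) ≤ B := by
    simpa using intervalIntegral.integral_mono_on hN (interval_integrable (Nat.cast_nonneg _) hN)
      intervalIntegrable_const
      fun x hx => le_bound x ((Nat.cast_nonneg _).trans hx.1)
  have middle_nonneg : 0 ≤ ∫ x in (N : ℝ)..(N + 1 : ℕ), f x :=
    intervalIntegral.integral_nonneg hN fun x hx => nonneg x ((Nat.cast_nonneg _).trans hx.1)
  have head_le := (zero_add (N : ℝ)).symm ▸ mono |>.sum_le_integral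
  have le_head := (zero_add (N : ℝ)).symm ▸ mono |>.integral_le_sum
  have tail_le := anti.tsum_comp_add_le_integral _ integrable' nonneg'
  have le_tail := anti.integral_le_tsum_comp_add _ summable nonneg'
  simp only [zero_add] at head_le le_head
  have split_sum := summable.sum_add_tsum_nat_add (N + 1)
  rw [abs_le]
  constructor
  · rw [sum_range_succ'] at split_sum
    linarith [nonneg (0 : ℕ) (Nat.cast_nonneg _), le_bound (0 : ℕ) (Nat.cast_nonneg _)]
  · have tail_eq := ((summable_nat_add_iff (N + 1)).2 summable).tsum_eq_zero_add
    simp only [zero_add, add_right_comm _ 1 (N + 1)] at tail_eq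
    rw [sum_range_succ] at split_sum
    linarith [le_bound N (Nat.cast_nonneg _), le_bound (N + 1 : ℕ) (Nat.cast_nonneg _)]

theorem abs_tsum_sub_integral_le_of_unimodal_s16 {p : ℝ} (hp : 0 ≤ p)
    (mono : MonotoneOn f (Icc 0 p)) (anti : AntitoneOn f (Ici p))
    (nonneg : ∀ x, 0 ≤ x → 0 ≤ f x)
    (integrable : IntegrableOn f (Ioi 0)) :
    |∑' k : ℕ, f k - ∫ x in Ioi 0, f x| ≤ 2 * f p := by
  have le_peak (x : ℝ) (hx : 0 ≤ x) : f x ≤ f p := by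
    rcases le_total x p with h | h
    · exact mono ⟨hx, h⟩ ⟨hx.trans h, le_rfl⟩ h
    · exact anti self_mem_Ici h h
  refine abs_tsum_sub_integral_le_of_monotoneOn_of_antitoneOn ⌊p⌋₊
    (mono.mono (Icc_subset_Icc_right (Nat.floor_le hp))) (anti.mono (Ici_subset_Ici.2 ?_))
    nonneg le_peak integrable
  push_cast
  exact (Nat.lt_floor_add_one p).le

end Unimodal

noncomputable def gammaDensity (n : ℕ) (r x : ℝ) : ℝ :=
  r ^ (n + 1) / n ! * x ^ n * exp (-(r * x))

section GammaDensity

open Set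

variable {n : ℕ} {r : ℝ}

theorem gammaDensity_nonneg (hr : 0 ≤ r) {x : ℝ} (hx : 0 ≤ x) : 0 ≤ gammaDensity n r x := by
  unfold gammaDensity; positivity

theorem integral_gammaDensity (hr : 0 < r) : ∫ x in Ioi 0, gammaDensity n r x = 1 := by
  have h := integral_rpow_mul_exp_neg_mul_Ioi (a := n + 1) (by positivity) hr
  rw [add_sub_cancel_right, Gamma_nat_eq_factorial, ← Nat.cast_succ, rpow_natCast] at h
  simp_rw [rpow_natCast] at h
  simp_rw [gammaDensity, mul_assoc, integral_const_mul, h, Nat.succ_eq_add_one, one_div, inv_pow]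
  field_simp

theorem integrableOn_gammaDensity (hr : 0 < r) : IntegrableOn (gammaDensity n r) (Ioi 0) :=
  .of_integral_ne_zero (by rw [integral_gammaDensity hr]; exact one_ne_zero)

theorem hasDerivAt_gammaDensity (x : ℝ) :
    HasDerivAt (gammaDensity n r)
      (r ^ (n + 1) / n ! * ((n * x ^ (n - 1) - r * x ^ n) * exp (-(r * x)))) x := by
  have hexp : HasDerivAt (fun y => exp (-(r * y))) (exp (-(r * x)) * -r) x := by
    simpa using ((hasDerivAt_id x).const_mul r).neg.exp
  exact (((hasDerivAt_pow n x).const_mul (r ^ (n + 1) / n !)).mul hexp).congr_deriv (by ring)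

theorem mul_deriv_gammaDensity (x : ℝ) :
    x * deriv (gammaDensity n r) x = gammaDensity n r x * (n - r * x) := by
  rw [(hasDerivAt_gammaDensity x).deriv, gammaDensity]
  rcases n with _ | n
  · simp only [pow_zero, Nat.cast_zero, zero_mul, mul_one]; ring
  · simp only [Nat.add_sub_cancel, pow_succ]; ring

theorem differentiable_gammaDensity : Differentiable ℝ (gammaDensity n r) :=
  fun x => (hasDerivAt_gammaDensity x).differentiableAt

theorem monotoneOn_gammaDensity (hr : 0 < r) : MonotoneOn (gammaDensity n r) (Icc 0 (n / r)) := by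
  refine monotoneOn_of_deriv_nonneg (convex_Icc _ _)
    differentiable_gammaDensity.continuous.continuousOn
    differentiable_gammaDensity.differentiableOn fun x hx => ?_
  rw [interior_Icc] at hx
  have hrx : r * x ≤ n := by rw [← le_div_iff₀' hr]; exact hx.2.le
  refine nonneg_of_mul_nonneg_right ?_ hx.1
  rw [mul_deriv_gammaDensity]
  exact mul_nonneg (gammaDensity_nonneg hr.le hx.1.le) (by linarith)

theorem antitoneOn_gammaDensity (hr : 0 < r) : AntitoneOn (gammaDensity n r) (Ici (n / r)) := by
  refine antitoneOn_of_deriv_nonpos (convex_Ici _)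
    differentiable_gammaDensity.continuous.continuousOn
    differentiable_gammaDensity.differentiableOn fun x hx => ?_
  rw [interior_Ici, Set.mem_Ioi, div_lt_iff₀' hr] at hx
  have hx0 : 0 < x := pos_of_mul_pos_right ((Nat.cast_nonneg n).trans_lt hx) hr.le
  refine nonpos_of_mul_nonpos_right ?_ hx0
  rw [mul_deriv_gammaDensity]
  exact mul_nonpos_of_nonneg_of_nonpos (gammaDensity_nonneg hr.le hx0.le) (by linarith)

theorem gammaDensity_peak_le (hn : n ≠ 0) (hr : 0 < r) :
    gammaDensity n r (n / r) ≤ r / √(2 * π * n) := by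
  have peak_eq : gammaDensity n r (n / r) = r * ((n / exp 1) ^ n / n !) := by
    rw [gammaDensity, mul_div_cancel₀ _ hr.ne', exp_neg, ← exp_one_pow, div_pow, div_pow]
    field_simp
    ring
  have stirling : √(2 * π * n) * (n / exp 1) ^ n ≤ n ! := Stirling.le_factorial_stirling n
  rw [peak_eq, div_eq_mul_one_div r]
  gcongr r * ?_
  rw [div_le_div_iff₀ (by positivity) (by positivity)]
  linarith

end GammaDensity

theorem tendsto_tsum_gammaDensity {r : ℝ} (hr : 0 < r) :
    Tendsto (fun n => ∑' k : ℕ, gammaDensity n r k) atTop (𝓝 1) := by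
  have error_le :
      ∀ n ≠ 0, ‖∑' k : ℕ, gammaDensity n r k - 1‖ ≤ 2 * (r / √(2 * π * n)) := by
    intro n hn
    rw [Real.norm_eq_abs, ← integral_gammaDensity hr]
    refine (abs_tsum_sub_integral_le_of_unimodal_s16 (by positivity) (monotoneOn_gammaDensity hr)
      (antitoneOn_gammaDensity hr) (fun x => gammaDensity_nonneg hr.le)
      (integrableOn_gammaDensity hr)).trans ?_
    gcongr
    exact gammaDensity_peak_le hn hr
  have error_lim : Tendsto (fun n : ℕ => 2 * (r / √(2 * π * n))) atTop (𝓝 0) := by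
    have sqrt_lim : Tendsto (fun n : ℕ => √(2 * π * n)) atTop atTop :=
      tendsto_sqrt_atTop.comp (tendsto_natCast_atTop_atTop.const_mul_atTop (by positivity))
    simpa only [mul_zero] using (tendsto_const_nhds.div_atTop sqrt_lim).const_mul 2
  exact tendsto_iff_norm_sub_tendsto_zero.2 (squeeze_zero' (.of_forall fun _ => norm_nonneg _)
    ((eventually_ne_atTop 0).mono error_le) error_lim)

theorem surj_div_eq_tsum_gammaDensity {n : ℕ} (hn : n ≠ 0) :
    (surj n : ℝ) / ((1 / log 2) ^ n * n !)
      = 1 / (2 * log 2) * ∑' k : ℕ, gammaDensity n (log 2) k := by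
  rw [← (hasSum_pow_div_two_pow_surj hn).tsum_eq, ← tsum_mul_left, ← tsum_div_const]
  refine tsum_congr fun k => ?_
  have two_pow : exp (-(log 2 * k)) = (2 ^ k)⁻¹ := by
    rw [exp_neg, mul_comm, exp_nat_mul, exp_log two_pos]
  have hlog : log 2 ≠ 0 := (log_pos one_lt_two).ne'
  rw [gammaDensity, two_pow, one_div_pow]
  field_simp
  ring

/-- `sₙ ∼ (1/(2 log 2)) · (1/log 2)ⁿ · n!` as `n → ∞`. -/
theorem surj_asymptotics :
    Tendsto (fun n : ℕ =>
        (surj n : ℝ) / ((1 / Real.log 2) ^ n * (Nat.factorial n : ℝ)))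
      atTop (nhds (1 / (2 * Real.log 2))) := by
  have h := (tendsto_tsum_gammaDensity (log_pos one_lt_two)).const_mul (1 / (2 * log 2))
  rw [mul_one] at h
  refine h.congr' ?_
  filter_upwards [eventually_ne_atTop 0] with n hn
  exact (surj_div_eq_tsum_gammaDensity hn).symm
end
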